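/- arXiv:2207.09253 — 12 statements merged into one kernel-verified Lean document; each statement's English description precedes it below -/
import Mathlib

section
/- For every voting rule q with interim allocation probabilities (Qa, Qb) there exist nonnegative reals α⁺₀,...,α⁺ₙ and α⁻₀,...,α⁻ₙ with ∑_{j=0}^n (α⁺ⱼ + α⁻ⱼ) = 1 such that Qa = ∑_{j=0}^n α⁺ⱼ·Q⁺ⱼ(a) + ∑_{j=0}^n α⁻ⱼ·Q⁻ⱼ(a) and Qb = ∑_{j=0}^n α⁺ⱼ·Q⁺ⱼ(b) + ∑_{j=0}^n α⁻ⱼ·Q⁻ⱼ(b); that is, every voting rule is reduced-form equivalent to a convex combination of qualified majority and qualified anti-majority rules. -/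
open Finset

noncomputable def sLo (B : ℕ → ℝ) (j : ℕ) : ℝ := ∑ k ∈ Finset.range j, B k
noncomputable def sHi (B : ℕ → ℝ) (n j : ℕ) : ℝ := ∑ k ∈ Finset.Icc j n, B k

lemma sLo_zero (B : ℕ → ℝ) : sLo B 0 = 0 := by simp [sLo]

lemma sLo_succ (B : ℕ → ℝ) (j : ℕ) : sLo B (j+1) = sLo B j + B j := by
  simp [sLo, Finset.sum_range_succ]

lemma sHi_top (B : ℕ → ℝ) (n : ℕ) : sHi B n (n+1) = 0 := by
  show ∑ k ∈ Finset.Icc (n+1) n, B k = 0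
  rw [Finset.Icc_eq_empty (by omega)]
  simp

lemma sHi_step (B : ℕ → ℝ) {n j : ℕ} (hj : j ≤ n) : sHi B n j = B j + sHi B n (j+1) := by
  show ∑ k ∈ Finset.Icc j n, B k = B j + ∑ k ∈ Finset.Icc (j+1) n, B k
  rw [Finset.Icc_add_one_left_eq_Ioc, ← Finset.Ioc_insert_left hj,
    Finset.sum_insert Finset.left_notMem_Ioc]

lemma sHi_zero (B : ℕ → ℝ) (n : ℕ) : sHi B n 0 = ∑ k ∈ Finset.range (n+1), B k := by
  show ∑ k ∈ Finset.Icc 0 n, B k = _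
  rw [← Finset.Ico_add_one_right_eq_Icc, Nat.Ico_zero_eq_range]

lemma sLo_masked (B : ℕ → ℝ) {j N : ℕ} (hj : j ≤ N) :
    sLo B j = ∑ k ∈ Finset.range N, if k < j then B k else 0 := by
  show ∑ k ∈ Finset.range j, B k = _
  rw [← Finset.sum_filter]
  congr 1
  ext k
  simp only [Finset.mem_filter, Finset.mem_range]
  omega

lemma sHi_masked (B : ℕ → ℝ) (n j : ℕ) :
    sHi B n j = ∑ k ∈ Finset.range (n+1), if j ≤ k then B k else 0 := by
  show ∑ k ∈ Finset.Icc j n, B k = _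
  rw [← Finset.sum_filter]
  congr 1
  ext k
  simp only [Finset.mem_filter, Finset.mem_range, Finset.mem_Icc]
  omega

lemma qv_lower (n j : ℕ) (hj : j ≤ n) (B q : ℕ → ℝ)
    (hB : ∀ k ≤ n, 0 ≤ B k) (hq : ∀ k ≤ n, 0 ≤ q k ∧ q k ≤ 1) :
    sLo (fun k => (k:ℝ) * B k) j
      + (j:ℝ) * ((∑ k ∈ range (n+1), q k * B k) - sLo B j)
      ≤ ∑ k ∈ range (n+1), (k:ℝ) * q k * B k := by
  have e1 : ∑ k ∈ range (n+1),
      ((if k < j then (k:ℝ) * B k else 0)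
        + (j:ℝ) * (q k * B k - (if k < j then B k else 0)))
      = sLo (fun k => (k:ℝ) * B k) j
        + (j:ℝ) * ((∑ k ∈ range (n+1), q k * B k) - sLo B j) := by
    rw [Finset.sum_add_distrib, ← Finset.mul_sum, Finset.sum_sub_distrib,
      ← sLo_masked (fun k => (k:ℝ) * B k) (show j ≤ n+1 by omega),
      ← sLo_masked B (show j ≤ n+1 by omega)]
  rw [← e1]
  apply Finset.sum_le_sum
  intro k hk
  have hkn : k ≤ n := by have := Finset.mem_range.mp hk; omega
  have h1 := hB k hkn
  have h2 := (hq k hkn).1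
  have h3 := (hq k hkn).2
  split_ifs with h
  · have hjk : (k:ℝ) ≤ (j:ℝ) := by exact_mod_cast h.le
    nlinarith [mul_nonneg (mul_nonneg (sub_nonneg.mpr hjk) (sub_nonneg.mpr h3)) h1]
  · have hjk : (j:ℝ) ≤ (k:ℝ) := by exact_mod_cast Nat.not_lt.mp h
    nlinarith [mul_nonneg (mul_nonneg (sub_nonneg.mpr hjk) h2) h1]

lemma qv_upper (n j : ℕ) (B q : ℕ → ℝ)
    (hB : ∀ k ≤ n, 0 ≤ B k) (hq : ∀ k ≤ n, 0 ≤ q k ∧ q k ≤ 1) :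
    (∑ k ∈ range (n+1), (k:ℝ) * q k * B k)
      ≤ sHi (fun k => (k:ℝ) * B k) n (j+1)
        + (j:ℝ) * ((∑ k ∈ range (n+1), q k * B k) - sHi B n (j+1)) := by
  have e1 : ∑ k ∈ range (n+1),
      ((if j+1 ≤ k then (k:ℝ) * B k else 0)
        + (j:ℝ) * (q k * B k - (if j+1 ≤ k then B k else 0)))
      = sHi (fun k => (k:ℝ) * B k) n (j+1)
        + (j:ℝ) * ((∑ k ∈ range (n+1), q k * B k) - sHi B n (j+1)) := by
    rw [Finset.sum_add_distrib, ← Finset.mul_sum, Finset.sum_sub_distrib,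
      ← sHi_masked (fun k => (k:ℝ) * B k) n (j+1), ← sHi_masked B n (j+1)]
  rw [← e1]
  apply Finset.sum_le_sum
  intro k hk
  have hkn : k ≤ n := by have := Finset.mem_range.mp hk; omega
  have h1 := hB k hkn
  have h2 := (hq k hkn).1
  have h3 := (hq k hkn).2
  split_ifs with h
  · have hjk : (j:ℝ) ≤ (k:ℝ) := by exact_mod_cast (by omega : j ≤ k)
    nlinarith [mul_nonneg (mul_nonneg (sub_nonneg.mpr hjk) (sub_nonneg.mpr h3)) h1]
  · have hjk : (k:ℝ) ≤ (j:ℝ) := by exact_mod_cast (by omega : k ≤ j)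
    nlinarith [mul_nonneg (mul_nonneg (sub_nonneg.mpr hjk) h2) h1]

lemma qv_lam {a b m : ℝ} (h1 : a ≤ m) (h2 : m ≤ b) :
    ∃ lam : ℝ, 0 ≤ lam ∧ lam ≤ 1 ∧ lam * (b - a) = m - a := by
  rcases lt_or_ge a b with h | h
  · refine ⟨(m - a) / (b - a), div_nonneg (by linarith) (by linarith), ?_, ?_⟩
    · rw [div_le_one (by linarith)]; linarith
    · exact div_mul_cancel₀ _ (sub_ne_zero.mpr h.ne')
  · have hma : m = a := le_antisymm (h2.trans h) h1
    exact ⟨0, le_rfl, zero_le_one, by rw [hma]; ring⟩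

lemma qv_core (n : ℕ) (B q : ℕ → ℝ) (hB : ∀ k ≤ n, 0 ≤ B k)
    (hBsum : ∑ k ∈ range (n+1), B k = 1)
    (hq : ∀ k ≤ n, 0 ≤ q k ∧ q k ≤ 1) :
    ∃ αp αm : ℕ → ℝ,
      (∀ j ≤ n, 0 ≤ αp j ∧ 0 ≤ αm j) ∧
      (∑ j ∈ range (n+1), (αp j + αm j)) = 1 ∧
      (∑ j ∈ range (n+1), (αp j * sHi B n j + αm j * sLo B j))
        = ∑ k ∈ range (n+1), q k * B k ∧
      (∑ j ∈ range (n+1), (αp j * sHi (fun k => (k:ℝ) * B k) n j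
          + αm j * sLo (fun k => (k:ℝ) * B k) j))
        = ∑ k ∈ range (n+1), (k:ℝ) * q k * B k := by
  classical
  set μ := ∑ k ∈ range (n+1), q k * B k with hμdef
  set X := ∑ k ∈ range (n+1), (k:ℝ) * q k * B k with hXdef
  have hμ0 : 0 ≤ μ := by
    rw [hμdef]
    apply Finset.sum_nonneg
    intro k hk
    have hkn : k ≤ n := by have := Finset.mem_range.mp hk; omega
    exact mul_nonneg (hq k hkn).1 (hB k hkn)
  have hμ1 : μ ≤ 1 := by
    rw [hμdef, ← hBsum]
    apply Finset.sum_le_sum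
    intro k hk
    have hkn : k ≤ n := by have := Finset.mem_range.mp hk; omega
    exact mul_le_of_le_one_left (hB k hkn) (hq k hkn).2
  have hFtop : sLo B (n+1) = 1 := hBsum
  have hGtop : sHi B n (n+1) = 0 := sHi_top B n
  have hP0 : sLo B 0 ≤ μ := by rw [sLo_zero]; exact hμ0
  set jl := Nat.findGreatest (fun j => sLo B j ≤ μ) n with hjldef
  have hjln : jl ≤ n := Nat.findGreatest_le n
  have hjl1 : sLo B jl ≤ μ := by
    rw [hjldef]
    exact Nat.findGreatest_spec (P := fun j => sLo B j ≤ μ) (Nat.zero_le n) hP0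
  have hjl2 : μ ≤ sLo B (jl+1) := by
    rcases eq_or_lt_of_le hjln with hc | hc
    · rw [hc, hFtop]; exact hμ1
    · have hng : ¬ (sLo B (jl+1) ≤ μ) :=
        Nat.findGreatest_is_greatest (P := fun j => sLo B j ≤ μ) (n := n) (k := jl+1)
          (by omega) (by omega)
      exact (not_le.mp hng).le
  have hQ0 : μ ≤ sHi B n 0 := by rw [sHi_zero, hBsum]; exact hμ1
  set ju := Nat.findGreatest (fun j => μ ≤ sHi B n j) n with hjudef
  have hjun : ju ≤ n := Nat.findGreatest_le n
  have hju1 : μ ≤ sHi B n ju := by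
    rw [hjudef]
    exact Nat.findGreatest_spec (P := fun j => μ ≤ sHi B n j) (Nat.zero_le n) hQ0
  have hju2 : sHi B n (ju+1) ≤ μ := by
    rcases eq_or_lt_of_le hjun with hc | hc
    · rw [hc, hGtop]; exact hμ0
    · have hng : ¬ (μ ≤ sHi B n (ju+1)) :=
        Nat.findGreatest_is_greatest (P := fun j => μ ≤ sHi B n j) (n := n) (k := ju+1)
          (by omega) (by omega)
      exact (not_le.mp hng).le
  obtain ⟨lamL, hL0, hL1, hLkey⟩ := qv_lam hjl1 hjl2
  obtain ⟨lamU, hU0, hU1, hUkey⟩ := qv_lam hju2 hju1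
  have hFs : sLo B (jl+1) = sLo B jl + B jl := sLo_succ B jl
  have hGs : sHi B n ju = B ju + sHi B n (ju+1) := sHi_step B hjun
  have hFms : sLo (fun k => (k:ℝ) * B k) (jl+1)
      = sLo (fun k => (k:ℝ) * B k) jl + (jl:ℝ) * B jl := by
    simpa using sLo_succ (fun k => (k:ℝ) * B k) jl
  have hGms : sHi (fun k => (k:ℝ) * B k) n ju
      = (ju:ℝ) * B ju + sHi (fun k => (k:ℝ) * B k) n (ju+1) := by
    simpa using sHi_step (fun k => (k:ℝ) * B k) hjun
  have hlamBL : lamL * B jl = μ - sLo B jl := by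
    linear_combination hLkey - lamL * hFs
  have hlamBU : lamU * B ju = μ - sHi B n (ju+1) := by
    linear_combination hUkey - lamU * hGs
  have hlow : sLo (fun k => (k:ℝ) * B k) jl + (jl:ℝ) * (μ - sLo B jl) ≤ X :=
    qv_lower n jl hjln B q hB hq
  have hup : X ≤ sHi (fun k => (k:ℝ) * B k) n (ju+1)
      + (ju:ℝ) * (μ - sHi B n (ju+1)) := qv_upper n ju B q hB hq
  have heqL : sLo (fun k => (k:ℝ) * B k) jl
      + lamL * (sLo (fun k => (k:ℝ) * B k) (jl+1) - sLo (fun k => (k:ℝ) * B k) jl)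
      = sLo (fun k => (k:ℝ) * B k) jl + (jl:ℝ) * (μ - sLo B jl) := by
    linear_combination lamL * hFms + (jl:ℝ) * hlamBL
  have heqU : sHi (fun k => (k:ℝ) * B k) n (ju+1)
      + lamU * (sHi (fun k => (k:ℝ) * B k) n ju - sHi (fun k => (k:ℝ) * B k) n (ju+1))
      = sHi (fun k => (k:ℝ) * B k) n (ju+1) + (ju:ℝ) * (μ - sHi B n (ju+1)) := by
    linear_combination lamU * hGms + (ju:ℝ) * hlamBU
  have hLX : sLo (fun k => (k:ℝ) * B k) jl
      + lamL * (sLo (fun k => (k:ℝ) * B k) (jl+1) - sLo (fun k => (k:ℝ) * B k) jl) ≤ X :=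
    le_trans heqL.le hlow
  have hXU : X ≤ sHi (fun k => (k:ℝ) * B k) n (ju+1)
      + lamU * (sHi (fun k => (k:ℝ) * B k) n ju - sHi (fun k => (k:ℝ) * B k) n (ju+1)) :=
    hup.trans heqU.ge
  obtain ⟨θ, hθ0, hθ1, hθkey⟩ := qv_lam hLX hXU
  have key_ite : ∀ (c : ℕ), c ≤ n → ∀ (w : ℝ) (g : ℕ → ℝ),
      ∑ j ∈ range (n+1), (if j = c then w else 0) * g j = w * g c := by
    intro c hc w g
    rw [Finset.sum_eq_single c]
    · simp
    · intro b _ hb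
      simp [hb]
    · intro hcm
      exact absurd (Finset.mem_range.mpr (by omega)) hcm
  have key_ite2 : ∀ (P : Prop) [Decidable P] (c : ℕ), (P → c ≤ n) → ∀ (w : ℝ) (g : ℕ → ℝ),
      ∑ j ∈ range (n+1), (if P ∧ j = c then w else 0) * g j
        = if P then w * g c else 0 := by
    intro P inst c hc w g
    by_cases hP : P
    · rw [if_pos hP]
      have : ∀ j, (if P ∧ j = c then w else 0) = (if j = c then w else 0) := by
        intro j
        by_cases hj : j = c
        · simp [hj, hP]
        · simp [hj]
      simp only [this]
      exact key_ite c (hc hP) w g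
    · simp [hP]
  have hAp : ∀ g : ℕ → ℝ, ∑ j ∈ range (n+1),
      ((if jl = n ∧ j = 0 then (1-θ)*lamL else 0)
        + (if ju < n ∧ j = ju+1 then θ*(1-lamU) else 0)
        + (if j = ju then θ*lamU else 0)) * g j
      = (if jl = n then (1-θ)*lamL * g 0 else 0)
        + (if ju < n then θ*(1-lamU) * g (ju+1) else 0) + θ*lamU * g ju := by
    intro g
    simp only [add_mul, Finset.sum_add_distrib]
    rw [key_ite2 (jl = n) 0 (fun _ => Nat.zero_le n) ((1-θ)*lamL) g,
      key_ite2 (ju < n) (ju+1) (fun h => h) (θ*(1-lamU)) g,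
      key_ite ju hjun (θ*lamU) g]
  have hAm : ∀ g : ℕ → ℝ, ∑ j ∈ range (n+1),
      ((if j = jl then (1-θ)*(1-lamL) else 0)
        + (if jl < n ∧ j = jl+1 then (1-θ)*lamL else 0)
        + (if ju = n ∧ j = 0 then θ*(1-lamU) else 0)) * g j
      = (1-θ)*(1-lamL) * g jl + (if jl < n then (1-θ)*lamL * g (jl+1) else 0)
        + (if ju = n then θ*(1-lamU) * g 0 else 0) := by
    intro g
    simp only [add_mul, Finset.sum_add_distrib]
    rw [key_ite jl hjln ((1-θ)*(1-lamL)) g,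
      key_ite2 (jl < n) (jl+1) (fun h => h) ((1-θ)*lamL) g,
      key_ite2 (ju = n) 0 (fun _ => Nat.zero_le n) (θ*(1-lamU)) g]
  have hcombine : ∀ gp gm : ℕ → ℝ, gp 0 = gm (n+1) → gm 0 = gp (n+1) →
      (∑ j ∈ range (n+1),
        (((if jl = n ∧ j = 0 then (1-θ)*lamL else 0)
          + (if ju < n ∧ j = ju+1 then θ*(1-lamU) else 0)
          + (if j = ju then θ*lamU else 0)) * gp j
        + ((if j = jl then (1-θ)*(1-lamL) else 0)
          + (if jl < n ∧ j = jl+1 then (1-θ)*lamL else 0)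
          + (if ju = n ∧ j = 0 then θ*(1-lamU) else 0)) * gm j))
        = (1-θ)*(1-lamL) * gm jl + (1-θ)*lamL * gm (jl+1)
          + θ*(1-lamU) * gp (ju+1) + θ*lamU * gp ju := by
    intro gp gm h01 h02
    rw [Finset.sum_add_distrib, hAp gp, hAm gm]
    rcases eq_or_lt_of_le hjln with hc1 | hc1 <;> rcases eq_or_lt_of_le hjun with hc2 | hc2
    · rw [if_pos hc1, if_neg (show ¬ ju < n by omega), if_neg (show ¬ jl < n by omega),
        if_pos hc2, hc1, hc2, h01, h02]
      ring
    · rw [if_pos hc1, if_pos hc2, if_neg (show ¬ jl < n by omega),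
        if_neg (show ¬ ju = n by omega), hc1, h01]
      ring
    · rw [if_neg (show ¬ jl = n by omega), if_pos hc1, if_neg (show ¬ ju < n by omega),
        if_pos hc2, hc2, h02]
      ring
    · rw [if_neg (show ¬ jl = n by omega), if_pos hc2, if_pos hc1,
        if_neg (show ¬ ju = n by omega)]
      ring
  refine ⟨(fun j => (if jl = n ∧ j = 0 then (1-θ)*lamL else 0)
      + (if ju < n ∧ j = ju+1 then θ*(1-lamU) else 0)
      + (if j = ju then θ*lamU else 0)),
    (fun j => (if j = jl then (1-θ)*(1-lamL) else 0)
      + (if jl < n ∧ j = jl+1 then (1-θ)*lamL else 0)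
      + (if ju = n ∧ j = 0 then θ*(1-lamU) else 0)), ?_, ?_, ?_, ?_⟩
  · intro j hj
    dsimp only
    constructor <;>
      refine add_nonneg (add_nonneg ?_ ?_) ?_ <;> split_ifs <;>
        first
          | exact le_rfl
          | exact mul_nonneg (by linarith) (by linarith)
  · have h1 := hcombine (fun _ => (1:ℝ)) (fun _ => (1:ℝ)) rfl rfl
    dsimp only at h1 ⊢
    simp only [mul_one] at h1
    rw [h1]
    ring
  · have h01 : sHi B n 0 = sLo B (n+1) := by rw [sHi_zero]; rfl
    have h02 : sLo B 0 = sHi B n (n+1) := by rw [sLo_zero, sHi_top]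
    have h1 := hcombine (sHi B n) (sLo B) h01 h02
    dsimp only
    rw [h1]
    linear_combination (1-θ) * hLkey + θ * hUkey
  · have h01 : sHi (fun k => (k:ℝ) * B k) n 0 = sLo (fun k => (k:ℝ) * B k) (n+1) := by
      rw [sHi_zero]; rfl
    have h02 : sLo (fun k => (k:ℝ) * B k) 0 = sHi (fun k => (k:ℝ) * B k) n (n+1) := by
      rw [sLo_zero, sHi_top]
    have h1 := hcombine (sHi (fun k => (k:ℝ) * B k) n) (sLo (fun k => (k:ℝ) * B k)) h01 h02
    dsimp only
    rw [h1]
    linear_combination hθkey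

/-- Theorem 2: every symmetric voting rule is reduced-form equivalent to a convex
combination of qualified majority and qualified anti-majority voting rules. -/
theorem reduced_form_equivalent_convex_combination
    (n : ℕ) (hn : 2 ≤ n) (π : ℝ) (hπ0 : 0 < π) (hπ1 : π < 1)
    (B : ℕ → ℝ) (hBnonneg : ∀ k ≤ n, 0 ≤ B k)
    (hBsum : ∑ k ∈ range (n + 1), B k = 1)
    (hBmean : ∑ k ∈ range (n + 1), (k : ℝ) * B k = n * π)
    (q : ℕ → ℝ) (hq : ∀ k ≤ n, 0 ≤ q k ∧ q k ≤ 1)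
    (Qa Qb : ℝ)
    (hQa : Qa = (1 / (n * π)) * ∑ k ∈ range (n + 1), (k : ℝ) * q k * B k)
    (hQb : Qb = (1 / (n * (1 - π))) * ∑ k ∈ range (n + 1), ((n : ℝ) - k) * q k * B k) :
    ∃ αp αm : ℕ → ℝ,
      (∀ j ≤ n, 0 ≤ αp j ∧ 0 ≤ αm j) ∧
      (∑ j ∈ range (n + 1), (αp j + αm j)) = 1 ∧
      Qa = (∑ j ∈ range (n + 1),
              αp j * ((1 / (n * π)) * ∑ k ∈ Icc j n, (k : ℝ) * B k))
           + (∑ j ∈ range (n + 1),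
              αm j * ((1 / (n * π)) * ∑ k ∈ range j, (k : ℝ) * B k)) ∧
      Qb = (∑ j ∈ range (n + 1),
              αp j * ((1 / (n * (1 - π))) * ∑ k ∈ Icc j n, ((n : ℝ) - k) * B k))
           + (∑ j ∈ range (n + 1),
              αm j * ((1 / (n * (1 - π))) * ∑ k ∈ range j, ((n : ℝ) - k) * B k)) := by
  obtain ⟨αp, αm, hnn, h1, h2, h3⟩ := qv_core n B q hBnonneg hBsum hq
  simp only [sLo, sHi] at h2 h3
  refine ⟨αp, αm, hnn, h1, ?_, ?_⟩
  · rw [hQa, ← h3, Finset.mul_sum, ← Finset.sum_add_distrib]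
    exact Finset.sum_congr rfl fun j _ => by ring
  · have eB1 : ∀ j, ∑ k ∈ Icc j n, ((n:ℝ) - (k:ℝ)) * B k
        = (n:ℝ) * (∑ k ∈ Icc j n, B k) - ∑ k ∈ Icc j n, (k:ℝ) * B k := by
      intro j
      rw [Finset.mul_sum, ← Finset.sum_sub_distrib]
      exact Finset.sum_congr rfl fun k _ => by ring
    have eB2 : ∀ j, ∑ k ∈ range j, ((n:ℝ) - (k:ℝ)) * B k
        = (n:ℝ) * (∑ k ∈ range j, B k) - ∑ k ∈ range j, (k:ℝ) * B k := by
      intro j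
      rw [Finset.mul_sum, ← Finset.sum_sub_distrib]
      exact Finset.sum_congr rfl fun k _ => by ring
    have eY : ∑ k ∈ range (n+1), ((n:ℝ) - (k:ℝ)) * q k * B k
        = (n:ℝ) * (∑ k ∈ range (n+1), q k * B k)
          - ∑ k ∈ range (n+1), (k:ℝ) * q k * B k := by
      rw [Finset.mul_sum, ← Finset.sum_sub_distrib]
      exact Finset.sum_congr rfl fun k _ => by ring
    have h4 : ∑ j ∈ range (n+1),
        (αp j * (∑ k ∈ Icc j n, ((n:ℝ) - (k:ℝ)) * B k)
          + αm j * (∑ k ∈ range j, ((n:ℝ) - (k:ℝ)) * B k))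
        = ∑ k ∈ range (n+1), ((n:ℝ) - (k:ℝ)) * q k * B k := by
      simp only [eB1, eB2, eY]
      have hstep : ∀ j ∈ range (n+1),
          αp j * ((n:ℝ) * (∑ k ∈ Icc j n, B k) - ∑ k ∈ Icc j n, (k:ℝ) * B k)
            + αm j * ((n:ℝ) * (∑ k ∈ range j, B k) - ∑ k ∈ range j, (k:ℝ) * B k)
          = (n:ℝ) * (αp j * (∑ k ∈ Icc j n, B k) + αm j * (∑ k ∈ range j, B k))
            - (αp j * (∑ k ∈ Icc j n, (k:ℝ) * B k)
              + αm j * (∑ k ∈ range j, (k:ℝ) * B k)) :=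
        fun j _ => by ring
      rw [Finset.sum_congr rfl hstep, Finset.sum_sub_distrib, ← Finset.mul_sum, h2, h3]
    rw [hQb, ← h4, Finset.mul_sum, ← Finset.sum_add_distrib]
    exact Finset.sum_congr rfl fun j _ => by ring
end

section
/- A pair (Qa, Qb) ∈ [0,1]² is reduced form implementable by a monotone voting rule if and only if (Qa, Qb) is reduced form implementable (by some voting rule) and Qa ≥ Qb. -/
open Finset

/-- Step monotonicity implies full monotonicity up to `n`. -/
lemma steps_mono {n : ℕ} {q : ℕ → ℝ} (h : ∀ k, 1 ≤ k → k ≤ n → q (k - 1) ≤ q k) :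
    ∀ j k, j ≤ k → k ≤ n → q j ≤ q k := by
  intro j k hjk hk
  induction k with
  | zero => simp [Nat.le_zero.mp hjk]
  | succ k ih =>
    rcases Nat.lt_or_ge j (k + 1) with h' | h'
    · have h1 : q j ≤ q k := ih (Nat.lt_succ_iff.mp h') (le_trans (Nat.le_succ k) hk)
      have h2 := h (k + 1) (Nat.succ_le_succ (Nat.zero_le k)) hk
      simpa using le_trans h1 h2
    · have : j = k + 1 := le_antisymm hjk h'
      subst this; exact le_refl _

/-- Weighted Chebyshev inequality specialized to our setting. -/
lemma cheb (n : ℕ) (B q : ℕ → ℝ) (hB : ∀ k ≤ n, 0 ≤ B k)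
    (hmono : ∀ j k, j ≤ k → k ≤ n → q j ≤ q k) :
    (∑ k ∈ range (n + 1), (k : ℝ) * B k) * (∑ k ∈ range (n + 1), q k * B k)
      ≤ (∑ k ∈ range (n + 1), B k) * (∑ k ∈ range (n + 1), (k : ℝ) * q k * B k) := by
  have key : 0 ≤ ∑ j ∈ range (n + 1), ∑ k ∈ range (n + 1),
      B j * B k * (((k : ℝ) - j) * (q k - q j)) := by
    apply Finset.sum_nonneg; intro j hj
    apply Finset.sum_nonneg; intro k hk
    have hj' := Nat.lt_succ_iff.mp (mem_range.mp hj)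
    have hk' := Nat.lt_succ_iff.mp (mem_range.mp hk)
    apply mul_nonneg (mul_nonneg (hB j hj') (hB k hk'))
    rcases le_total j k with h | h
    · have h1 : (0:ℝ) ≤ (k : ℝ) - j := by
        have : (j:ℝ) ≤ k := by exact_mod_cast h
        linarith
      exact mul_nonneg h1 (sub_nonneg.mpr (hmono j k h hk'))
    · have h1 : ((k : ℝ) - j) ≤ 0 := by
        have : (k:ℝ) ≤ j := by exact_mod_cast h
        linarith
      have h2 := sub_nonpos.mpr (hmono k j h hj')
      nlinarith [mul_nonneg (neg_nonneg.mpr h1) (neg_nonneg.mpr h2)]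
  have expand : ∑ j ∈ range (n + 1), ∑ k ∈ range (n + 1),
      B j * B k * (((k : ℝ) - j) * (q k - q j))
      = 2 * ((∑ k ∈ range (n + 1), B k) * (∑ k ∈ range (n + 1), (k : ℝ) * q k * B k)
        - (∑ k ∈ range (n + 1), (k : ℝ) * B k) * (∑ k ∈ range (n + 1), q k * B k)) := by
    have hsplit : ∀ j k : ℕ, B j * B k * (((k : ℝ) - j) * (q k - q j))
        = (B j * ((k : ℝ) * q k * B k)) - (((j : ℝ) * B j) * (q k * B k))
          - ((q j * B j) * ((k : ℝ) * B k)) + (((j : ℝ) * q j * B j) * (B k)) := by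
      intro j k; ring
    simp_rw [hsplit, Finset.sum_add_distrib, Finset.sum_sub_distrib,
      ← Finset.mul_sum, ← Finset.sum_mul]
    ring
  linarith [key, expand ▸ key]

/-- Exchange lemma: a top-fill rule with the same mass has a larger first moment. -/
lemma exchange (n t : ℕ) (B q r : ℕ → ℝ) (hB : ∀ k ≤ n, 0 ≤ B k)
    (hq : ∀ k ≤ n, 0 ≤ q k ∧ q k ≤ 1)
    (hr0 : ∀ k, k < t → r k = 0) (hr1 : ∀ k, t < k → r k = 1)
    (hmass : ∑ k ∈ range (n + 1), r k * B k = ∑ k ∈ range (n + 1), q k * B k) :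
    ∑ k ∈ range (n + 1), (k : ℝ) * q k * B k ≤ ∑ k ∈ range (n + 1), (k : ℝ) * r k * B k := by
  have key : 0 ≤ ∑ k ∈ range (n + 1), ((k : ℝ) - t) * (r k - q k) * B k := by
    apply Finset.sum_nonneg; intro k hk
    have hk' := Nat.lt_succ_iff.mp (mem_range.mp hk)
    apply mul_nonneg _ (hB k hk')
    rcases lt_trichotomy k t with h | h | h
    · have h1 : ((k : ℝ) - t) ≤ 0 := by
        have : (k:ℝ) ≤ t := by exact_mod_cast h.le
        linarith
      have h2 : r k - q k ≤ 0 := by rw [hr0 k h]; linarith [(hq k hk').1]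
      nlinarith [mul_nonneg (neg_nonneg.mpr h1) (neg_nonneg.mpr h2)]
    · subst h; simp
    · rw [hr1 k h]
      have h1 : (0:ℝ) ≤ (k : ℝ) - t := by
        have : (t:ℝ) ≤ k := by exact_mod_cast h.le
        linarith
      exact mul_nonneg h1 (by linarith [(hq k hk').2])
  have expand : ∑ k ∈ range (n + 1), ((k : ℝ) - t) * (r k - q k) * B k
      = (∑ k ∈ range (n + 1), (k : ℝ) * r k * B k)
        - (∑ k ∈ range (n + 1), (k : ℝ) * q k * B k)
        - ((t : ℝ) * (∑ k ∈ range (n + 1), r k * B k)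
            - (t : ℝ) * (∑ k ∈ range (n + 1), q k * B k)) := by
    simp_rw [show ∀ k : ℕ, ((k : ℝ) - t) * (r k - q k) * B k
        = (k : ℝ) * r k * B k - (k : ℝ) * q k * B k
          - ((t : ℝ) * (r k * B k) - (t : ℝ) * (q k * B k)) from fun k => by ring,
      Finset.sum_sub_distrib, ← Finset.mul_sum]
  rw [expand, hmass] at key
  linarith

/-- Existence of a top-fill rule with prescribed mass. -/
lemma topfill (n : ℕ) (B : ℕ → ℝ) (hB : ∀ k ≤ n, 0 ≤ B k)
    (hBsum : ∑ k ∈ range (n + 1), B k = 1) (m : ℝ) (hm0 : 0 ≤ m) (hm1 : m ≤ 1) :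
    ∃ t, t ≤ n ∧ ∃ d, 0 ≤ d ∧ d ≤ 1 ∧
      ∑ k ∈ range (n + 1), (if k < t then (0:ℝ) else if k = t then d else 1) * B k = m := by
  have hPn : ∑ k ∈ Ioc n n, B k ≤ m := by simp [hm0]
  classical
  have hex : ∃ j, ∑ k ∈ Ioc j n, B k ≤ m := ⟨n, hPn⟩
  set t := Nat.find hex with ht
  have htn : t ≤ n := Nat.find_le hPn
  have hCt : ∑ k ∈ Ioc t n, B k ≤ m := Nat.find_spec hex
  have hup : m ≤ ∑ k ∈ Ioc t n, B k + B t := by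
    rcases Nat.eq_zero_or_pos t with h0 | hpos
    · have : range (n + 1) = insert 0 (Ioc 0 n) := by
        ext x; simp only [mem_range, mem_insert, mem_Ioc]; omega
      rw [this, Finset.sum_insert (by simp)] at hBsum
      rw [h0]; linarith
    · have hlt : m < ∑ k ∈ Ioc (t - 1) n, B k :=
        lt_of_not_ge (Nat.find_min hex (Nat.sub_lt hpos Nat.one_pos))
      have : Ioc (t - 1) n = insert t (Ioc t n) := by
        ext x; simp only [mem_Ioc, mem_insert]; omega
      rw [this, Finset.sum_insert (by simp)] at hlt
      linarith
  set d : ℝ := if B t = 0 then 0 else (m - ∑ k ∈ Ioc t n, B k) / B t with hd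
  have hBt : 0 ≤ B t := hB t htn
  have hdmul : d * B t = m - ∑ k ∈ Ioc t n, B k := by
    rcases eq_or_ne (B t) 0 with h | h
    · rw [h, mul_zero]
      rw [h, add_zero] at hup
      linarith
    · rw [hd, if_neg h, div_mul_cancel₀ _ h]
  have hBtpos : B t ≠ 0 → 0 < B t := fun h => lt_of_le_of_ne hBt (Ne.symm h)
  refine ⟨t, htn, d, ?_, ?_, ?_⟩
  · rcases eq_or_ne (B t) 0 with h | h
    · simp [hd, h]
    · rw [hd, if_neg h]; exact div_nonneg (by linarith) hBt
  · rcases eq_or_ne (B t) 0 with h | h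
    · simp [hd, h]
    · rw [hd, if_neg h]
      rw [div_le_one (hBtpos h)]; linarith
  · have hpoint : ∀ k, (if k < t then (0:ℝ) else if k = t then d else 1) * B k
        = (if k = t then d * B k else 0) + (if t < k then B k else 0) := by
      intro k
      split_ifs <;> first | (exfalso; omega) | ring
    simp_rw [hpoint, Finset.sum_add_distrib]
    rw [Finset.sum_ite_eq' (range (n + 1)) t (fun k => d * B k),
      if_pos (mem_range.mpr (Nat.lt_succ_of_le htn))]
    have hset : (range (n + 1)).filter (fun k => t < k) = Ioc t n := by
      ext x; simp only [mem_filter, mem_range, mem_Ioc]; omega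
    have : ∑ k ∈ range (n + 1), (if t < k then B k else 0)
        = ∑ k ∈ Ioc t n, B k := by
      rw [← Finset.sum_filter, hset]
    rw [this]
    linarith [hdmul]

lemma sumnk (n : ℕ) (B q : ℕ → ℝ) :
    ∑ k ∈ range (n + 1), ((n : ℝ) - k) * q k * B k
      = (n : ℝ) * (∑ k ∈ range (n + 1), q k * B k)
        - ∑ k ∈ range (n + 1), (k : ℝ) * q k * B k := by
  simp_rw [show ∀ k : ℕ, ((n : ℝ) - k) * q k * B k
      = (n : ℝ) * (q k * B k) - (k : ℝ) * q k * B k from fun k => by ring,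
    Finset.sum_sub_distrib, ← Finset.mul_sum]

/-- Equivalence of (1) and (2) in Theorem 3: `(Qa, Qb) ∈ [0,1]²` is reduced form
implementable by a monotone voting rule iff it is reduced form implementable and
`Qa ≥ Qb`. -/
theorem monotone_reduced_form_iff_implementable_and_mono
    (n : ℕ) (hn : 2 ≤ n) (π : ℝ) (hπ0 : 0 < π) (hπ1 : π < 1)
    (B : ℕ → ℝ) (hBnonneg : ∀ k ≤ n, 0 ≤ B k)
    (hBsum : ∑ k ∈ range (n + 1), B k = 1)
    (hBmean : ∑ k ∈ range (n + 1), (k : ℝ) * B k = n * π)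
    (Qa Qb : ℝ) (hQa : Qa ∈ Set.Icc (0 : ℝ) 1) (hQb : Qb ∈ Set.Icc (0 : ℝ) 1) :
    (∃ q : ℕ → ℝ, (∀ k ≤ n, 0 ≤ q k ∧ q k ≤ 1) ∧
      (∀ k, 1 ≤ k → k ≤ n → q (k - 1) ≤ q k) ∧
      (1 / (n * π)) * ∑ k ∈ range (n + 1), (k : ℝ) * q k * B k = Qa ∧
      (1 / (n * (1 - π))) * ∑ k ∈ range (n + 1), ((n : ℝ) - k) * q k * B k = Qb)
    ↔
    ((∃ q : ℕ → ℝ, (∀ k ≤ n, 0 ≤ q k ∧ q k ≤ 1) ∧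
      (1 / (n * π)) * ∑ k ∈ range (n + 1), (k : ℝ) * q k * B k = Qa ∧
      (1 / (n * (1 - π))) * ∑ k ∈ range (n + 1), ((n : ℝ) - k) * q k * B k = Qb)
     ∧ Qa ≥ Qb) := by
  have hnR : (0:ℝ) < n := by positivity
  have hnπ : (0:ℝ) < n * π := by positivity
  have hn1π : (0:ℝ) < n * (1 - π) := by
    apply mul_pos hnR; linarith
  constructor
  · rintro ⟨q, hq01, hqmono, hqa, hqb⟩
    refine ⟨⟨q, hq01, hqa, hqb⟩, ?_⟩
    have hcheb := cheb n B q hBnonneg (steps_mono hqmono)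
    rw [hBsum, hBmean, one_mul] at hcheb
    set m := ∑ k ∈ range (n + 1), q k * B k with hm
    set s := ∑ k ∈ range (n + 1), (k : ℝ) * q k * B k with hs
    rw [sumnk n B q, ← hm, ← hs] at hqb
    rw [ge_iff_le, ← hqa, ← hqb]
    rw [one_div, one_div, inv_mul_eq_div, inv_mul_eq_div, div_le_div_iff₀ hn1π hnπ]
    nlinarith [mul_le_mul_of_nonneg_left hcheb (le_of_lt hnR)]
  · rintro ⟨⟨q, hq01, hqa, hqb⟩, hge⟩
    set m := ∑ k ∈ range (n + 1), q k * B k with hm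
    set s := ∑ k ∈ range (n + 1), (k : ℝ) * q k * B k with hs
    have hm0 : 0 ≤ m := by
      rw [hm]
      apply Finset.sum_nonneg; intro k hk
      exact mul_nonneg (hq01 k (Nat.lt_succ_iff.mp (mem_range.mp hk))).1
        (hBnonneg k (Nat.lt_succ_iff.mp (mem_range.mp hk)))
    have hm1 : m ≤ 1 := by
      rw [hm, ← hBsum]
      apply Finset.sum_le_sum; intro k hk
      have hk' := Nat.lt_succ_iff.mp (mem_range.mp hk)
      calc q k * B k ≤ 1 * B k :=
            mul_le_mul_of_nonneg_right (hq01 k hk').2 (hBnonneg k hk')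
        _ = B k := one_mul _
    rw [sumnk n B q, ← hm, ← hs] at hqb
    have hkey : n * π * m ≤ s := by
      rw [ge_iff_le, ← hqa, ← hqb] at hge
      rw [one_div, one_div, inv_mul_eq_div, inv_mul_eq_div,
        div_le_div_iff₀ hn1π hnπ] at hge
      nlinarith [hge, hnR, mul_pos hnR hnR]
    obtain ⟨t, htn, d, hd0, hd1, hrmass⟩ := topfill n B hBnonneg hBsum m hm0 hm1
    set r : ℕ → ℝ := fun k => if k < t then (0:ℝ) else if k = t then d else 1 with hr
    have hrmass' : ∑ k ∈ range (n + 1), r k * B k = m := by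
      simp only [hr]; exact hrmass
    set sstar := ∑ k ∈ range (n + 1), (k : ℝ) * r k * B k with hsstar
    have hr01 : ∀ k, 0 ≤ r k ∧ r k ≤ 1 := by
      intro k; simp only [hr]
      constructor <;> (split_ifs <;> linarith)
    have hrmono : ∀ j k : ℕ, j ≤ k → r j ≤ r k := by
      intro j k hjk; simp only [hr]
      split_ifs <;> first | (exfalso; omega) | linarith
    have hex : s ≤ sstar := by
      rw [hs, hsstar]
      exact exchange n t B q r hBnonneg hq01
        (fun k hk => by simp only [hr]; simp [hk])
        (fun k hk => by
          simp only [hr]; rw [if_neg (by omega), if_neg (by omega)])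
        (by rw [hrmass'])
    by_cases hcase : n * π * m < sstar
    · set μ := (s - n * π * m) / (sstar - n * π * m) with hμ
      have hden : (0:ℝ) < sstar - n * π * m := by linarith
      have hμ0 : 0 ≤ μ := div_nonneg (by linarith) (le_of_lt hden)
      have hμ1 : μ ≤ 1 := by rw [hμ, div_le_one hden]; linarith
      set q' : ℕ → ℝ := fun k => (1 - μ) * m + μ * r k with hq'
      have hq'mass : ∑ k ∈ range (n + 1), q' k * B k = m := by
        simp only [hq']
        simp_rw [show ∀ k : ℕ, ((1 - μ) * m + μ * r k) * B k
            = (1 - μ) * m * B k + μ * (r k * B k) from fun k => by ring,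
          Finset.sum_add_distrib, ← Finset.mul_sum]
        rw [hrmass', hBsum]
        ring
      have hq's : ∑ k ∈ range (n + 1), (k : ℝ) * q' k * B k = s := by
        simp only [hq']
        simp_rw [show ∀ k : ℕ, (k : ℝ) * ((1 - μ) * m + μ * r k) * B k
            = (1 - μ) * m * ((k : ℝ) * B k) + μ * ((k : ℝ) * r k * B k) from fun k => by ring,
          Finset.sum_add_distrib, ← Finset.mul_sum]
        rw [hBmean, ← hsstar]
        have hμs : μ * (sstar - n * π * m) = s - n * π * m := by
          rw [hμ, div_mul_cancel₀ _ (ne_of_gt hden)]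
        linear_combination hμs
      refine ⟨q', ?_, ?_, ?_, ?_⟩
      · intro k hk
        simp only [hq']
        constructor
        · have h1 := mul_nonneg (by linarith : (0:ℝ) ≤ 1 - μ) hm0
          have h2 := mul_nonneg hμ0 (hr01 k).1
          linarith
        · have h1 : (1 - μ) * m ≤ (1 - μ) * 1 :=
            mul_le_mul_of_nonneg_left hm1 (by linarith)
          have h2 : μ * r k ≤ μ * 1 := mul_le_mul_of_nonneg_left (hr01 k).2 hμ0
          linarith
      · intro k hk1 hkn
        have h1 := mul_le_mul_of_nonneg_left (hrmono (k - 1) k (Nat.sub_le k 1)) hμ0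
        simp only [hq']
        linarith
      · rw [hq's]; exact hqa
      · rw [sumnk n B q', hq'mass, hq's]; exact hqb
    · push_neg at hcase
      have hseq : s = n * π * m := le_antisymm (le_trans hex hcase) hkey
      refine ⟨fun _ => m, fun k hk => ⟨hm0, hm1⟩, fun k _ _ => le_refl _, ?_, ?_⟩
      · have hmass : ∑ k ∈ range (n + 1), (fun _ : ℕ => m) k * B k = m := by
          simp only
          rw [← Finset.mul_sum, hBsum, mul_one]
        have hsm : ∑ k ∈ range (n + 1), (k : ℝ) * (fun _ : ℕ => m) k * B k = s := by
          simp only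
          simp_rw [show ∀ k : ℕ, (k : ℝ) * m * B k = m * ((k : ℝ) * B k) from fun k => by ring,
            ← Finset.mul_sum]
          rw [hBmean, hseq]; ring
        rw [hsm]; exact hqa
      · have hmass : ∑ k ∈ range (n + 1), (fun _ : ℕ => m) k * B k = m := by
          simp only
          rw [← Finset.mul_sum, hBsum, mul_one]
        have hsm : ∑ k ∈ range (n + 1), (k : ℝ) * (fun _ : ℕ => m) k * B k = s := by
          simp only
          simp_rw [show ∀ k : ℕ, (k : ℝ) * m * B k = m * ((k : ℝ) * B k) from fun k => by ring,
            ← Finset.mul_sum]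
          rw [hBmean, hseq]; ring
        rw [sumnk n B (fun _ => m), hmass, hsm]; exact hqb
end

section
/- If (Qa, Qb) ∈ [0,1]² is reduced form implementable and Qa ≥ Qb, then there exist nonnegative reals α₀,...,αₙ with ∑_{j=0}^n αⱼ ≤ 1 such that Qa = ∑_{j=0}^n αⱼ·Q⁺ⱼ(a) and Qb = ∑_{j=0}^n αⱼ·Q⁺ⱼ(b); that is, (Qa, Qb) is implemented by a convex combination of qualified majority rules and the constant rule that always selects b (whose interim probabilities are (0,0)). -/
open Finset

/-!
The weight of a profile with `k` votes for `a` is proportional to `k B(k)` in `Q(a)` and to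
`(n - k) B(k)` in `Q(b)`; their ratio decreases in `k`, so by the Neyman–Pearson argument a
threshold rule attains the smallest `Q(b)` among rules with a given `Q(a)`, and a continuous
family of threshold rules attains every `Q(a)`. Mixing that threshold rule with a constant rule,
whose interim probabilities lie on the diagonal, reaches every point with `Q(b) ≤ Q(a)`, and the
mixture is still nondecreasing in `k`. A nondecreasing rule `g` is, by Abel summation, the
combination of the quota-`j` rules with the nonnegative weights `g j - g (j - 1)`, of total
weight `g n ≤ 1`.
-/

/-- At `θ = m` this is the qualified majority rule with quota `m`; between integers it moves
linearly from quota `m` to quota `m + 1`. -/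
noncomputable def fracThreshold (θ : ℝ) (k : ℕ) : ℝ := min 1 (max 0 ((k : ℝ) + 1 - θ))

namespace fracThreshold

theorem nonneg (θ : ℝ) (k : ℕ) : 0 ≤ fracThreshold θ k :=
  le_min zero_le_one (le_max_left _ _)

theorem le_one (θ : ℝ) (k : ℕ) : fracThreshold θ k ≤ 1 := min_le_left _ _

theorem monotone (θ : ℝ) : Monotone (fracThreshold θ) := fun k l hkl => by
  have : (k : ℝ) ≤ l := by exact_mod_cast hkl
  unfold fracThreshold
  gcongr

theorem continuous (k : ℕ) : Continuous fun θ => fracThreshold θ k := by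
  unfold fracThreshold
  fun_prop

theorem eq_zero {θ : ℝ} {k : ℕ} (h : (k : ℝ) + 1 ≤ θ) : fracThreshold θ k = 0 := by
  rw [fracThreshold, max_eq_left (by linarith), min_eq_right zero_le_one]

theorem eq_one {θ : ℝ} {k : ℕ} (h : θ ≤ k) : fracThreshold θ k = 1 := by
  rw [fracThreshold, max_eq_right (by linarith), min_eq_left (by linarith)]

theorem sub_mul_floor_sub_nonpos {θ p : ℝ} (hθ : 0 ≤ θ) (hp : p ∈ Set.Icc (0 : ℝ) 1) (k : ℕ) :
    (fracThreshold θ k - p) * ((⌊θ⌋₊ : ℝ) - k) ≤ 0 := by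
  rcases lt_trichotomy k ⌊θ⌋₊ with hk | rfl | hk
  · have : (k : ℝ) + 1 ≤ θ := le_trans (by exact_mod_cast hk) (Nat.floor_le hθ)
    rw [eq_zero this]
    exact mul_nonpos_of_nonpos_of_nonneg (by linarith [hp.1]) (by simp; exact_mod_cast hk.le)
  · simp
  · have : θ ≤ k := (Nat.lt_floor_add_one θ).le.trans (by exact_mod_cast hk)
    rw [eq_one this]
    exact mul_nonpos_of_nonneg_of_nonpos (by linarith [hp.2]) (by simp; exact_mod_cast hk.le)

end fracThreshold

theorem Monotone.exists_sum_mul_sum_Icc_eq {g : ℕ → ℝ} (hg : Monotone g) (hg0 : 0 ≤ g 0) (n : ℕ) :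
    ∃ α : ℕ → ℝ, (∀ j, 0 ≤ α j) ∧ ∑ j ∈ range (n + 1), α j = g n ∧
      ∀ z : ℕ → ℝ, ∑ j ∈ range (n + 1), α j * ∑ k ∈ Icc j n, z k
        = ∑ k ∈ range (n + 1), g k * z k := by
  set α : ℕ → ℝ := fun j => g j - if j = 0 then 0 else g (j - 1)
  have partial_sum : ∀ k, ∑ j ∈ range (k + 1), α j = g k := by
    intro k
    induction k with
    | zero => simp [α]
    | succ k ih => rw [sum_range_succ, ih]; simp [α]
  refine ⟨α, fun j => ?_, partial_sum n, fun z => ?_⟩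
  · rcases j with _ | j
    · simpa [α] using hg0
    · simpa [α] using hg j.le_succ
  · calc ∑ j ∈ range (n + 1), α j * ∑ k ∈ Icc j n, z k
        = ∑ k ∈ range (n + 1), ∑ j ∈ range (k + 1), α j * z k := by
          simp_rw [mul_sum]
          refine sum_comm' fun j k => ?_
          simp only [mem_range, mem_Icc]
          omega
      _ = ∑ k ∈ range (n + 1), g k * z k := by simp_rw [← sum_mul, partial_sum]

/-- `interimA n π B q` and `interimB n π B q` are the interim allocation probabilities `Q(a)` and
`Q(b)` of the voting rule `q`. -/
noncomputable def interimA (n : ℕ) (π : ℝ) (B : ℕ → ℝ) : (ℕ → ℝ) →ₗ[ℝ] ℝ where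
  toFun q := (1 / (n * π)) * ∑ k ∈ range (n + 1), (k : ℝ) * q k * B k
  map_add' q r := by simp only [Pi.add_apply, mul_add, add_mul, sum_add_distrib]
  map_smul' c q := by
    simp only [Pi.smul_apply, smul_eq_mul, mul_sum, RingHom.id_apply]
    exact sum_congr rfl fun k _ => by ring

noncomputable def interimB (n : ℕ) (π : ℝ) (B : ℕ → ℝ) : (ℕ → ℝ) →ₗ[ℝ] ℝ where
  toFun q := (1 / (n * (1 - π))) * ∑ k ∈ range (n + 1), ((n : ℝ) - k) * q k * B k
  map_add' q r := by simp only [Pi.add_apply, mul_add, add_mul, sum_add_distrib]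
  map_smul' c q := by
    simp only [Pi.smul_apply, smul_eq_mul, mul_sum, RingHom.id_apply]
    exact sum_congr rfl fun k _ => by ring

section

variable {n : ℕ} {π : ℝ} {B : ℕ → ℝ}

theorem interimA_apply (q : ℕ → ℝ) :
    interimA n π B q = (1 / (n * π)) * ∑ k ∈ range (n + 1), (k : ℝ) * q k * B k := rfl

theorem interimB_apply (q : ℕ → ℝ) :
    interimB n π B q = (1 / (n * (1 - π))) * ∑ k ∈ range (n + 1), ((n : ℝ) - k) * q k * B k := rfl

theorem interimA_one (hn : n ≠ 0) (hπ : π ≠ 0)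
    (hBmean : ∑ k ∈ range (n + 1), (k : ℝ) * B k = n * π) : interimA n π B 1 = 1 := by
  simp only [interimA_apply, Pi.one_apply, mul_one, hBmean]
  field_simp

theorem interimB_one (hn : n ≠ 0) (hπ : π ≠ 1) (hBsum : ∑ k ∈ range (n + 1), B k = 1)
    (hBmean : ∑ k ∈ range (n + 1), (k : ℝ) * B k = n * π) : interimB n π B 1 = 1 := by
  have hsum : ∑ k ∈ range (n + 1), ((n : ℝ) - k) * 1 * B k = n * (1 - π) := by
    simp only [mul_one, sub_mul, sum_sub_distrib, ← mul_sum, hBsum, hBmean]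
    ring
  have : (1 : ℝ) - π ≠ 0 := sub_ne_zero.mpr hπ.symm
  rw [interimB_apply, Pi.one_def, hsum]
  field_simp

theorem interimA_nonneg (hπ : 0 ≤ π) (hB : ∀ k ≤ n, 0 ≤ B k) {q : ℕ → ℝ}
    (hq : ∀ k ≤ n, 0 ≤ q k) : 0 ≤ interimA n π B q := by
  rw [interimA_apply]
  refine mul_nonneg (by positivity) (sum_nonneg fun k hk => ?_)
  have hk : k ≤ n := Nat.lt_succ_iff.mp (mem_range.mp hk)
  have := hq k hk
  have := hB k hk
  positivity

theorem interimA_mem_Icc (hn : n ≠ 0) (hπ : 0 < π) (hB : ∀ k ≤ n, 0 ≤ B k)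
    (hBmean : ∑ k ∈ range (n + 1), (k : ℝ) * B k = n * π) {q : ℕ → ℝ}
    (hq : ∀ k ≤ n, 0 ≤ q k ∧ q k ≤ 1) : interimA n π B q ∈ Set.Icc (0 : ℝ) 1 := by
  refine ⟨interimA_nonneg hπ.le hB fun k hk => (hq k hk).1, ?_⟩
  have := interimA_nonneg hπ.le hB (q := 1 - q) fun k hk => sub_nonneg.mpr (hq k hk).2
  rwa [map_sub, interimA_one hn hπ.ne' hBmean, sub_nonneg] at this

theorem continuous_interimA_fracThreshold :
    Continuous fun θ => interimA n π B (fracThreshold θ) := by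
  simp only [interimA_apply]
  have := fracThreshold.continuous
  fun_prop

theorem interimA_fracThreshold_one (hn : n ≠ 0) (hπ : π ≠ 0)
    (hBmean : ∑ k ∈ range (n + 1), (k : ℝ) * B k = n * π) :
    interimA n π B (fracThreshold 1) = 1 := by
  refine Eq.trans ?_ (interimA_one hn hπ hBmean)
  rw [interimA_apply, interimA_apply]
  congr 1
  refine sum_congr rfl fun k _ => ?_
  rcases k with _ | k
  · simp
  · rw [fracThreshold.eq_one (by simp), Pi.one_apply]

theorem interimA_fracThreshold_natCast_add_one :
    interimA n π B (fracThreshold (n + 1)) = 0 := by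
  rw [interimA_apply]
  refine mul_eq_zero_of_right _ (sum_eq_zero fun k hk => ?_)
  have : (k : ℝ) ≤ n := by exact_mod_cast Nat.lt_succ_iff.mp (mem_range.mp hk)
  rw [fracThreshold.eq_zero (by linarith), mul_zero, zero_mul]

theorem exists_interimA_fracThreshold_eq (hn : n ≠ 0) (hπ : π ≠ 0)
    (hBmean : ∑ k ∈ range (n + 1), (k : ℝ) * B k = n * π) {s : ℝ} (hs : s ∈ Set.Icc (0 : ℝ) 1) :
    ∃ θ ∈ Set.Icc (1 : ℝ) (n + 1), interimA n π B (fracThreshold θ) = s := by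
  refine intermediate_value_Icc' (by simp) continuous_interimA_fracThreshold.continuousOn ?_
  rwa [interimA_fracThreshold_natCast_add_one, interimA_fracThreshold_one hn hπ hBmean]

theorem mul_interimB_sub_mul_interimA (hn : n ≠ 0) (hπ0 : π ≠ 0) (hπ1 : π ≠ 1) (r : ℝ)
    (q : ℕ → ℝ) :
    r * (1 - π) * interimB n π B q - (n - r) * π * interimA n π B q
      = ∑ k ∈ range (n + 1), q k * B k * (r - k) := by
  have : (1 : ℝ) - π ≠ 0 := sub_ne_zero.mpr hπ1.symm
  simp only [interimA_apply, interimB_apply, mul_sum, ← sum_sub_distrib]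
  refine sum_congr rfl fun k _ => ?_
  field_simp
  ring

/-- Neyman–Pearson: `(fracThreshold θ - q) k` and `⌊θ⌋ - k` have opposite signs, and the second is
the weight that `mul_interimB_sub_mul_interimA` puts on `k`. -/
theorem interimB_fracThreshold_le (hn : n ≠ 0) (hπ0 : 0 < π) (hπ1 : π < 1)
    (hB : ∀ k ≤ n, 0 ≤ B k) {θ : ℝ} (hθ : 1 ≤ θ) {q : ℕ → ℝ} (hq : ∀ k ≤ n, 0 ≤ q k ∧ q k ≤ 1)
    (heq : interimA n π B (fracThreshold θ) = interimA n π B q) :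
    interimB n π B (fracThreshold θ) ≤ interimB n π B q := by
  have hr : (1 : ℝ) ≤ ⌊θ⌋₊ := by exact_mod_cast Nat.one_le_floor_iff θ |>.mpr hθ
  have key := mul_interimB_sub_mul_interimA (B := B) hn hπ0.ne' hπ1.ne ⌊θ⌋₊ (fracThreshold θ - q)
  rw [map_sub, map_sub, heq, sub_self, mul_zero, sub_zero] at key
  have hsum : ∑ k ∈ range (n + 1), (fracThreshold θ - q) k * B k * ((⌊θ⌋₊ : ℝ) - k) ≤ 0 := by
    refine sum_nonpos fun k hk => ?_
    have hk : k ≤ n := Nat.lt_succ_iff.mp (mem_range.mp hk)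
    rw [Pi.sub_apply, mul_right_comm]
    exact mul_nonpos_of_nonpos_of_nonneg
      (fracThreshold.sub_mul_floor_sub_nonpos (by linarith) (hq k hk) k) (hB k hk)
  have hpos : 0 < (⌊θ⌋₊ : ℝ) * (1 - π) := mul_pos (by linarith) (by linarith)
  exact sub_nonpos.mp (nonpos_of_mul_nonpos_right (key ▸ hsum) hpos)

theorem exists_monotone_rule_of_interimB_le_interimA (hn : n ≠ 0) (hπ0 : 0 < π) (hπ1 : π < 1)
    (hB : ∀ k ≤ n, 0 ≤ B k) (hBsum : ∑ k ∈ range (n + 1), B k = 1)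
    (hBmean : ∑ k ∈ range (n + 1), (k : ℝ) * B k = n * π) {q : ℕ → ℝ}
    (hq : ∀ k ≤ n, 0 ≤ q k ∧ q k ≤ 1) (hle : interimB n π B q ≤ interimA n π B q) :
    ∃ g : ℕ → ℝ, Monotone g ∧ 0 ≤ g 0 ∧ g n ≤ 1 ∧
      interimA n π B g = interimA n π B q ∧ interimB n π B g = interimB n π B q := by
  set s := interimA n π B q
  have hs : s ∈ Set.Icc (0 : ℝ) 1 := interimA_mem_Icc hn hπ0 hB hBmean hq
  obtain ⟨θ, hθ, hθs⟩ := exists_interimA_fracThreshold_eq hn hπ0.ne' hBmean hs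
  have hL := interimB_fracThreshold_le hn hπ0 hπ1 hB hθ.1 hq hθs
  -- Mix the threshold rule with the constant rule `s`, whose `Q(a)` and `Q(b)` both equal `s`.
  obtain ⟨μ, ν, hμ, hν, hμν, hmix⟩ :
      interimB n π B q ∈ segment ℝ (interimB n π B (fracThreshold θ)) s := by
    rw [segment_eq_Icc (hL.trans hle)]
    exact ⟨hL, hle⟩
  have hT0 := fracThreshold.nonneg θ
  have hT1 := fracThreshold.le_one θ
  refine ⟨μ • fracThreshold θ + (ν * s) • 1, fun k l hkl => ?_, ?_, ?_, ?_, ?_⟩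
  · have := fracThreshold.monotone θ hkl
    simp only [Pi.add_apply, Pi.smul_apply, smul_eq_mul, Pi.one_apply]
    gcongr
  · simp only [Pi.add_apply, Pi.smul_apply, smul_eq_mul, Pi.one_apply]
    have := hT0 0
    have := hs.1
    positivity
  · simp only [Pi.add_apply, Pi.smul_apply, smul_eq_mul, Pi.one_apply]
    nlinarith [hT0 n, hT1 n, hs.1, hs.2]
  · rw [map_add, map_smul, map_smul, hθs, interimA_one hn hπ0.ne' hBmean, smul_eq_mul,
      smul_eq_mul, mul_one, ← add_mul, hμν, one_mul]
  · rw [map_add, map_smul, map_smul, interimB_one hn hπ1.ne hBsum hBmean, ← hmix, smul_eq_mul,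
      smul_eq_mul, smul_eq_mul, mul_one]

theorem exists_qualifiedMajority_weights_of_monotone {g : ℕ → ℝ} (hg : Monotone g)
    (hg0 : 0 ≤ g 0) (hgn : g n ≤ 1) :
    ∃ α : ℕ → ℝ, (∀ j ≤ n, 0 ≤ α j) ∧ (∑ j ∈ range (n + 1), α j) ≤ 1 ∧
      interimA n π B g = ∑ j ∈ range (n + 1),
        α j * ((1 / (n * π)) * ∑ k ∈ Icc j n, (k : ℝ) * B k) ∧
      interimB n π B g = ∑ j ∈ range (n + 1),
        α j * ((1 / (n * (1 - π))) * ∑ k ∈ Icc j n, ((n : ℝ) - k) * B k) := by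
  obtain ⟨α, hα0, hαsum, hα⟩ := hg.exists_sum_mul_sum_Icc_eq hg0 n
  have hc (c : ℝ) (z : ℕ → ℝ) : ∑ j ∈ range (n + 1), α j * (c * ∑ k ∈ Icc j n, z k)
      = c * ∑ k ∈ range (n + 1), g k * z k := by
    rw [← hα, mul_sum]
    exact sum_congr rfl fun j _ => mul_left_comm _ _ _
  refine ⟨α, fun j _ => hα0 j, hαsum ▸ hgn, ?_, ?_⟩
  · rw [hc, interimA_apply]
    exact congrArg _ (sum_congr rfl fun k _ => by ring)
  · rw [hc, interimB_apply]
    exact congrArg _ (sum_congr rfl fun k _ => by ring)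

end

theorem implementable_mono_convex_combination_of_qualified_majorities_general
    (n : ℕ) (hn : 2 ≤ n) (π : ℝ) (hπ0 : 0 < π) (hπ1 : π < 1)
    (B : ℕ → ℝ) (hBnonneg : ∀ k ≤ n, 0 ≤ B k)
    (hBsum : ∑ k ∈ range (n + 1), B k = 1)
    (hBmean : ∑ k ∈ range (n + 1), (k : ℝ) * B k = n * π)
    (Qa Qb : ℝ)
    (himpl : ∃ q : ℕ → ℝ, (∀ k ≤ n, 0 ≤ q k ∧ q k ≤ 1) ∧
      (1 / (n * π)) * ∑ k ∈ range (n + 1), (k : ℝ) * q k * B k = Qa ∧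
      (1 / (n * (1 - π))) * ∑ k ∈ range (n + 1), ((n : ℝ) - k) * q k * B k = Qb)
    (hmono : Qa ≥ Qb) :
    ∃ α : ℕ → ℝ,
      (∀ j ≤ n, 0 ≤ α j) ∧
      (∑ j ∈ range (n + 1), α j) ≤ 1 ∧
      Qa = ∑ j ∈ range (n + 1),
              α j * ((1 / (n * π)) * ∑ k ∈ Icc j n, (k : ℝ) * B k) ∧
      Qb = ∑ j ∈ range (n + 1),
              α j * ((1 / (n * (1 - π))) * ∑ k ∈ Icc j n, ((n : ℝ) - k) * B k) := by
  obtain ⟨q, hq, rfl, rfl⟩ := himpl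
  obtain ⟨g, hg, hg0, hgn, hgA, hgB⟩ := exists_monotone_rule_of_interimB_le_interimA
    (by omega) hπ0 hπ1 hBnonneg hBsum hBmean hq hmono
  obtain ⟨α, hα0, hα1, hαA, hαB⟩ := exists_qualifiedMajority_weights_of_monotone
    (π := π) (B := B) hg hg0 hgn
  exact ⟨α, hα0, hα1, hgA.symm.trans hαA, hgB.symm.trans hαB⟩

/-- Implication (2) ⇒ (3) of Theorem 3: if `(Qa, Qb) ∈ [0,1]²` is reduced form
implementable and `Qa ≥ Qb`, then `(Qa, Qb)` is a convex combination of the interim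
allocation probabilities of qualified majority rules and the constant rule that
always selects `b` (whose interim probabilities are `(0,0)`). -/
theorem implementable_mono_convex_combination_of_qualified_majorities
    (n : ℕ) (hn : 2 ≤ n) (π : ℝ) (hπ0 : 0 < π) (hπ1 : π < 1)
    (B : ℕ → ℝ) (hBnonneg : ∀ k ≤ n, 0 ≤ B k)
    (hBsum : ∑ k ∈ range (n + 1), B k = 1)
    (hBmean : ∑ k ∈ range (n + 1), (k : ℝ) * B k = n * π)
    (Qa Qb : ℝ) (hQa : Qa ∈ Set.Icc (0 : ℝ) 1) (hQb : Qb ∈ Set.Icc (0 : ℝ) 1)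
    (himpl : ∃ q : ℕ → ℝ, (∀ k ≤ n, 0 ≤ q k ∧ q k ≤ 1) ∧
      (1 / (n * π)) * ∑ k ∈ range (n + 1), (k : ℝ) * q k * B k = Qa ∧
      (1 / (n * (1 - π))) * ∑ k ∈ range (n + 1), ((n : ℝ) - k) * q k * B k = Qb)
    (hmono : Qa ≥ Qb) :
    ∃ α : ℕ → ℝ,
      (∀ j ≤ n, 0 ≤ α j) ∧
      (∑ j ∈ range (n + 1), α j) ≤ 1 ∧
      Qa = ∑ j ∈ range (n + 1),
              α j * ((1 / (n * π)) * ∑ k ∈ Icc j n, (k : ℝ) * B k) ∧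
      Qb = ∑ j ∈ range (n + 1),
              α j * ((1 / (n * (1 - π))) * ∑ k ∈ Icc j n, ((n : ℝ) - k) * B k) :=
  implementable_mono_convex_combination_of_qualified_majorities_general n hn π hπ0 hπ1 B hBnonneg
    hBsum hBmean Qa Qb himpl hmono
end

section
/- Suppose the prior is independent with parameter π. If a voting rule q has interim allocation probabilities satisfying Q(a) ≥ Q(b) (i.e., q is ordinally Bayesian incentive compatible under the independent prior), then there exists a monotone voting rule q' with the same interim allocation probabilities as q. -/
open Finset

set_option maxHeartbeats 2000000 in
/-- Corollary 1 (equivalence of OBIC and strategy-proofness in reduced form, for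
independent priors): if a voting rule `q` has interim allocation probabilities with
`Q(a) ≥ Q(b)` under the independent prior with parameter `π`, then there exists a
monotone voting rule `q'` with the same interim allocation probabilities. -/
theorem obic_reduced_form_equivalent_to_monotone
    (n : ℕ) (hn : 2 ≤ n) (π : ℝ) (hπ0 : 0 < π) (hπ1 : π < 1)
    (B : ℕ → ℝ)
    (hB : ∀ k, B k = (n.choose k : ℝ) * π ^ k * (1 - π) ^ (n - k))
    (q : ℕ → ℝ) (hq : ∀ k ≤ n, 0 ≤ q k ∧ q k ≤ 1)
    (hobic : (1 / (n * π)) * ∑ k ∈ range (n + 1), (k : ℝ) * q k * B k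
      ≥ (1 / (n * (1 - π))) * ∑ k ∈ range (n + 1), ((n : ℝ) - k) * q k * B k) :
    ∃ q' : ℕ → ℝ, (∀ k ≤ n, 0 ≤ q' k ∧ q' k ≤ 1) ∧
      (∀ k, 1 ≤ k → k ≤ n → q' (k - 1) ≤ q' k) ∧
      (1 / (n * π)) * ∑ k ∈ range (n + 1), (k : ℝ) * q' k * B k
        = (1 / (n * π)) * ∑ k ∈ range (n + 1), (k : ℝ) * q k * B k ∧
      (1 / (n * (1 - π))) * ∑ k ∈ range (n + 1), ((n : ℝ) - k) * q' k * B k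
        = (1 / (n * (1 - π))) * ∑ k ∈ range (n + 1), ((n : ℝ) - k) * q k * B k := by
  classical
  have hn0 : (0:ℝ) < n := by
    have : (2:ℝ) ≤ n := by exact_mod_cast hn
    linarith
  have h1π : (0:ℝ) < 1 - π := by linarith
  -- positivity of B on [0, n]
  have hBpos : ∀ k ≤ n, 0 < B k := by
    intro k hk
    rw [hB k]
    have h1 : 0 < (n.choose k : ℝ) := by
      exact_mod_cast Nat.choose_pos hk
    positivity
  have hBnn : ∀ k ≤ n, 0 ≤ B k := fun k hk => (hBpos k hk).le
  set S := ∑ k ∈ range (n + 1), q k * B k with hSdef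
  set T := ∑ k ∈ range (n + 1), (k : ℝ) * q k * B k with hTdef
  clear_value S T
  -- moment identities
  have h1 : ∑ k ∈ range (n + 1), B k = 1 := by
    have := congrArg (Polynomial.eval π) (bernsteinPolynomial.sum ℝ n)
    simpa [bernsteinPolynomial, hB, Polynomial.eval_finset_sum] using this
  have h2 : ∑ k ∈ range (n + 1), (k:ℝ) * B k = n * π := by
    have := congrArg (Polynomial.eval π) (bernsteinPolynomial.sum_smul ℝ n)
    simpa [bernsteinPolynomial, hB, Polynomial.eval_finset_sum, nsmul_eq_mul, mul_assoc]
      using this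
  -- expansion of the "b"-side sum
  have expand : ∀ f : ℕ → ℝ, ∑ k ∈ range (n + 1), ((n : ℝ) - k) * f k * B k
      = (n : ℝ) * (∑ k ∈ range (n + 1), f k * B k)
        - ∑ k ∈ range (n + 1), (k : ℝ) * f k * B k := by
    intro f
    rw [Finset.mul_sum, ← Finset.sum_sub_distrib]
    exact Finset.sum_congr rfl fun k _ => by ring
  -- basic bounds on S and T
  have hS0 : 0 ≤ S := by
    rw [hSdef]
    refine Finset.sum_nonneg fun k hk => ?_
    have hk' : k ≤ n := Nat.lt_succ_iff.mp (Finset.mem_range.mp hk)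
    exact mul_nonneg (hq k hk').1 (hBnn k hk')
  have hS1 : S ≤ 1 := by
    rw [hSdef, ← h1]
    refine Finset.sum_le_sum fun k hk => ?_
    have hk' : k ≤ n := Nat.lt_succ_iff.mp (Finset.mem_range.mp hk)
    nlinarith [(hq k hk').1, (hq k hk').2, hBnn k hk']
  -- OBIC gives T ≥ nπS
  have key : n * π * S ≤ T := by
    rw [expand q] at hobic
    rw [← hSdef, ← hTdef] at hobic
    rw [ge_iff_le, one_div_mul_eq_div, one_div_mul_eq_div,
      div_le_div_iff₀ (by positivity) (by positivity)] at hobic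
    nlinarith [hobic, hn0]
  -- the tail sums
  set G : ℕ → ℝ := fun j => ∑ k ∈ Finset.Ico j (n + 1), B k with hGdef
  clear_value G
  have hG0 : G 0 = 1 := by
    rw [hGdef]
    simp only
    rw [← Finset.range_eq_Ico, h1]
  have hGtop : G (n + 1) = 0 := by rw [hGdef]; simp
  have hGstep : ∀ j ≤ n, G j = B j + G (j + 1) := by
    intro j hj
    rw [hGdef]
    exact Finset.sum_eq_sum_Ico_succ_bot (Nat.lt_succ_of_le hj) B
  set P : ℕ → Prop := fun j => S ≤ G j with hPdef
  clear_value P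
  set m := Nat.findGreatest P n with hmdef
  clear_value m
  have hm_le : m ≤ n := hmdef ▸ Nat.findGreatest_le n
  have hPm : S ≤ G m := by
    have h0 : P 0 := by rw [hPdef]; simp only; rw [hG0]; exact hS1
    have hsp := Nat.findGreatest_spec (Nat.zero_le n) h0
    rw [← hmdef] at hsp
    rw [hPdef] at hsp
    exact hsp
  have hGm1 : G (m + 1) ≤ S := by
    rcases eq_or_lt_of_le hm_le with h | h
    · rw [h, hGtop]; exact hS0
    · have h2 : Nat.findGreatest P n < m + 1 := by omega
      have hig := Nat.findGreatest_is_greatest h2 (by omega)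
      rw [hPdef] at hig
      exact le_of_not_ge hig
  -- the threshold rule r
  set θ : ℝ := (S - G (m + 1)) / B m with hθdef
  clear_value θ
  have hBm : 0 < B m := hBpos m hm_le
  have hθ0 : 0 ≤ θ := by
    rw [hθdef]
    exact div_nonneg (by linarith) hBm.le
  have hθ1 : θ ≤ 1 := by
    rw [hθdef, div_le_one hBm]
    have := hGstep m hm_le
    linarith
  set r : ℕ → ℝ := fun k => if k < m then 0 else if k = m then θ else 1 with hrdef
  clear_value r
  have hr01 : ∀ k, 0 ≤ r k ∧ r k ≤ 1 := by
    intro k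
    rw [hrdef]
    simp only
    split_ifs <;> constructor <;> linarith
  have hr_mono : ∀ j k : ℕ, j ≤ k → r j ≤ r k := by
    intro j k hjk
    rw [hrdef]
    simp only
    split_ifs <;> first | linarith | (exfalso; omega)
  -- r matches S
  have hr_sum : ∑ k ∈ range (n + 1), r k * B k = S := by
    rw [Finset.range_eq_Ico, ← Finset.sum_Ico_consecutive _ (Nat.zero_le m)
      (by omega : m ≤ n + 1)]
    have e1 : ∑ k ∈ Finset.Ico 0 m, r k * B k = 0 := by
      refine Finset.sum_eq_zero fun k hk => ?_
      have : k < m := (Finset.mem_Ico.mp hk).2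
      simp [hrdef, this]
    have e2 : ∑ k ∈ Finset.Ico m (n + 1), r k * B k = θ * B m + G (m + 1) := by
      rw [Finset.sum_eq_sum_Ico_succ_bot (Nat.lt_succ_of_le hm_le)]
      have : r m = θ := by simp [hrdef]
      rw [this]
      congr 1
      rw [hGdef]
      refine Finset.sum_congr rfl fun k hk => ?_
      have h1 : m + 1 ≤ k := (Finset.mem_Ico.mp hk).1
      have h2 : ¬ (k < m) := by omega
      have h3 : ¬ (k = m) := by omega
      simp [hrdef, h2, h3]
    rw [e1, e2, hθdef, div_mul_cancel₀ _ hBm.ne']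
    ring
  set Tr := ∑ k ∈ range (n + 1), (k : ℝ) * r k * B k with hTrdef
  clear_value Tr
  -- Tr dominates T
  have hTTr : T ≤ Tr := by
    have e1 : ∑ k ∈ range (n + 1), ((k : ℝ) - m) * (r k - q k) * B k
        = Tr - T - (m : ℝ) * ((∑ k ∈ range (n + 1), r k * B k) - S) := by
      rw [hTrdef, hTdef, hSdef, ← Finset.sum_sub_distrib, ← Finset.sum_sub_distrib,
        Finset.mul_sum, ← Finset.sum_sub_distrib]
      exact Finset.sum_congr rfl fun k _ => by ring
    have e2 : 0 ≤ ∑ k ∈ range (n + 1), ((k : ℝ) - m) * (r k - q k) * B k := by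
      refine Finset.sum_nonneg fun k hk => ?_
      have hk' : k ≤ n := Nat.lt_succ_iff.mp (Finset.mem_range.mp hk)
      have hBk := hBnn k hk'
      rcases lt_trichotomy k m with h | h | h
      · have h1 : r k = 0 := by simp [hrdef, h]
        have h2 : ((k:ℝ) - m) ≤ 0 := by
          have : (k:ℝ) ≤ m := by exact_mod_cast h.le
          linarith
        have h3 : r k - q k ≤ 0 := by rw [h1]; linarith [(hq k hk').1]
        have h4 : 0 ≤ ((k:ℝ) - m) * (r k - q k) := by
          rw [← neg_mul_neg]
          exact mul_nonneg (neg_nonneg.2 h2) (neg_nonneg.2 h3)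
        exact mul_nonneg h4 hBk
      · rw [h]; simp
      · have h1 : r k = 1 := by
          have h2 : ¬ (k < m) := by omega
          have h3 : ¬ (k = m) := by omega
          simp [hrdef, h2, h3]
        have h2 : 0 ≤ ((k:ℝ) - m) := by
          have : (m:ℝ) ≤ k := by exact_mod_cast h.le
          linarith
        have h3 : 0 ≤ r k - q k := by rw [h1]; linarith [(hq k hk').2]
        positivity
    rw [hr_sum] at e1
    simp only [sub_self, mul_zero, sub_zero] at e1
    linarith [e1 ▸ e2]
  -- main construction: mix the constant rule S with the threshold rule r
  have main : ∃ q' : ℕ → ℝ, (∀ k ≤ n, 0 ≤ q' k ∧ q' k ≤ 1) ∧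
      (∀ k, 1 ≤ k → k ≤ n → q' (k - 1) ≤ q' k) ∧
      (∑ k ∈ range (n + 1), q' k * B k = S) ∧
      (∑ k ∈ range (n + 1), (k : ℝ) * q' k * B k = T) := by
    have hTrS : n * π * S ≤ Tr := le_trans key hTTr
    rcases eq_or_lt_of_le hTrS with hc | hc
    · -- degenerate case: constant rule S works
      have hTc : T = n * π * S := le_antisymm (by linarith) key
      refine ⟨fun _ => S, fun k _ => ⟨hS0, hS1⟩, fun k _ _ => le_rfl, ?_, ?_⟩
      · rw [← Finset.mul_sum, h1, mul_one]
      · have e : ∀ k : ℕ, (k:ℝ) * S * B k = S * ((k:ℝ) * B k) := fun k => by ring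
        simp_rw [e]
        rw [← Finset.mul_sum, h2, hTc]
        ring
    · set t : ℝ := (T - n * π * S) / (Tr - n * π * S) with htdef
      clear_value t
      have ht0 : 0 ≤ t := by
        rw [htdef]
        exact div_nonneg (by linarith) (by linarith)
      have ht1 : t ≤ 1 := by
        rw [htdef, div_le_one (by linarith)]
        linarith
      refine ⟨fun k => (1 - t) * S + t * r k, ?_, ?_, ?_, ?_⟩
      · intro k hk
        constructor
        · show 0 ≤ (1 - t) * S + t * r k
          have e1 := mul_nonneg (by linarith : (0:ℝ) ≤ 1 - t) hS0
          have e2 := mul_nonneg ht0 (hr01 k).1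
          linarith
        · show (1 - t) * S + t * r k ≤ 1
          have e1 := mul_le_mul_of_nonneg_left hS1 (by linarith : (0:ℝ) ≤ 1 - t)
          have e2 := mul_le_mul_of_nonneg_left (hr01 k).2 ht0
          linarith
      · intro k h1k hkn
        show (1 - t) * S + t * r (k - 1) ≤ (1 - t) * S + t * r k
        have e1 := mul_le_mul_of_nonneg_left (hr_mono (k - 1) k (Nat.sub_le k 1)) ht0
        linarith
      · have : ∀ k : ℕ, ((1 - t) * S + t * r k) * B k
            = (1 - t) * S * B k + t * (r k * B k) := fun k => by ring
        simp_rw [this]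
        rw [Finset.sum_add_distrib, ← Finset.mul_sum, ← Finset.mul_sum, h1, hr_sum]
        ring
      · have : ∀ k : ℕ, (k:ℝ) * ((1 - t) * S + t * r k) * B k
            = (1 - t) * S * ((k:ℝ) * B k) + t * ((k:ℝ) * r k * B k) := fun k => by ring
        simp_rw [this]
        rw [Finset.sum_add_distrib, ← Finset.mul_sum, ← Finset.mul_sum, h2, ← hTrdef]
        have htm : t * (Tr - n * π * S) = T - n * π * S := by
          rw [htdef]
          exact div_mul_cancel₀ _ (by linarith : (0:ℝ) < Tr - n * π * S).ne'
        nlinarith [htm]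
  obtain ⟨q', hb, hm', hs1, hs2⟩ := main
  refine ⟨q', hb, hm', by rw [hs2], ?_⟩
  rw [expand q', expand q, hs1, hs2, ← hSdef, ← hTdef]
end

section
/- Let j* = max{ j ∈ {0,...,n} : ∑_{k=j}^n B(k) ≥ 1−π } (well-defined since j = 0 qualifies), and define QRa = (1/(n·π))·( j*·(1−π) + ∑_{k=j*}^n (k−j*)·B(k) ) and QRb = (1/(n·(1−π)))·( (n−j*)·(1−π) − ∑_{k=j*}^n (k−j*)·B(k) ). Then: (i) (QRa, QRb) is the interim allocation probabilities of some monotone voting rule; (ii) for every monotone voting rule q with interim allocation probabilities (Qa, Qb), min(π·QRa, (1−π)·(1−QRb)) ≥ min(π·Qa, (1−π)·(1−Qb)); and (iii) B(j*) > 0, the number α = (1−π − ∑_{k=j*+1}^n B(k))/B(j*) lies in [0,1], and QRa = α·Q⁺_{j*}(a) + (1−α)·Q⁺_{j*+1}(a) and QRb = α·Q⁺_{j*}(b) + (1−α)·Q⁺_{j*+1}(b), where the qualified majority with quota n+1 is understood as the constant rule q ≡ 0 with interim probabilities (0,0). -/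
open Finset

/-- Proposition 1 (ex-ante Rawlsian rule): with
`j* = max{ j ≤ n : ∑_{k=j}^n B(k) ≥ 1−π }` and `(QRa, QRb)` as given, (i) `(QRa, QRb)`
is implemented by a monotone voting rule, (ii) it maximizes
`min(π·Qa, (1−π)·(1−Qb))` over all monotone voting rules, and (iii) it is the convex
combination with weight `α = (1−π−∑_{k=j*+1}^n B(k))/B(j*)` of the qualified majority
rules with quotas `j*` and `j*+1` (quota `n+1` being the constant rule selecting `b`). -/
theorem rawlsian_rule_characterization
    (n : ℕ) (hn : 2 ≤ n) (π : ℝ) (hπ0 : 0 < π) (hπ1 : π < 1)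
    (B : ℕ → ℝ) (hBnonneg : ∀ k ≤ n, 0 ≤ B k)
    (hBsum : ∑ k ∈ range (n + 1), B k = 1)
    (hBmean : ∑ k ∈ range (n + 1), (k : ℝ) * B k = n * π)
    (jstar : ℕ) (hjstar_le : jstar ≤ n)
    (hjstar_mem : ∑ k ∈ Icc jstar n, B k ≥ 1 - π)
    (hjstar_max : ∀ j ≤ n, (∑ k ∈ Icc j n, B k ≥ 1 - π) → j ≤ jstar)
    (QRa QRb : ℝ)
    (hQRa : QRa = (1 / (n * π)) *
      ((jstar : ℝ) * (1 - π) + ∑ k ∈ Icc jstar n, ((k : ℝ) - jstar) * B k))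
    (hQRb : QRb = (1 / (n * (1 - π))) *
      (((n : ℝ) - jstar) * (1 - π) - ∑ k ∈ Icc jstar n, ((k : ℝ) - jstar) * B k)) :
    -- (i): (QRa, QRb) are the interim allocation probabilities of a monotone voting rule
    (∃ q : ℕ → ℝ, (∀ k ≤ n, 0 ≤ q k ∧ q k ≤ 1) ∧
      (∀ k, 1 ≤ k → k ≤ n → q (k - 1) ≤ q k) ∧
      (1 / (n * π)) * ∑ k ∈ range (n + 1), (k : ℝ) * q k * B k = QRa ∧
      (1 / (n * (1 - π))) * ∑ k ∈ range (n + 1), ((n : ℝ) - k) * q k * B k = QRb) ∧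
    -- (ii): Rawlsian optimality among monotone voting rules
    (∀ q : ℕ → ℝ, (∀ k ≤ n, 0 ≤ q k ∧ q k ≤ 1) →
      (∀ k, 1 ≤ k → k ≤ n → q (k - 1) ≤ q k) →
      min (π * QRa) ((1 - π) * (1 - QRb)) ≥
        min (π * ((1 / (n * π)) * ∑ k ∈ range (n + 1), (k : ℝ) * q k * B k))
          ((1 - π) * (1 - (1 / (n * (1 - π))) *
            ∑ k ∈ range (n + 1), ((n : ℝ) - k) * q k * B k))) ∧
    -- (iii): convex combination of qualified majorities with quotas jstar and jstar+1
    (0 < B jstar ∧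
      0 ≤ (1 - π - ∑ k ∈ Icc (jstar + 1) n, B k) / B jstar ∧
      (1 - π - ∑ k ∈ Icc (jstar + 1) n, B k) / B jstar ≤ 1 ∧
      QRa = ((1 - π - ∑ k ∈ Icc (jstar + 1) n, B k) / B jstar) *
              ((1 / (n * π)) * ∑ k ∈ Icc jstar n, (k : ℝ) * B k)
            + (1 - (1 - π - ∑ k ∈ Icc (jstar + 1) n, B k) / B jstar) *
              ((1 / (n * π)) * ∑ k ∈ Icc (jstar + 1) n, (k : ℝ) * B k) ∧
      QRb = ((1 - π - ∑ k ∈ Icc (jstar + 1) n, B k) / B jstar) *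
              ((1 / (n * (1 - π))) * ∑ k ∈ Icc jstar n, ((n : ℝ) - k) * B k)
            + (1 - (1 - π - ∑ k ∈ Icc (jstar + 1) n, B k) / B jstar) *
              ((1 / (n * (1 - π))) * ∑ k ∈ Icc (jstar + 1) n, ((n : ℝ) - k) * B k)) := by
  have hnR : (0:ℝ) < n := by
    have : (2:ℝ) ≤ n := by exact_mod_cast hn
    linarith
  have h1π : (0:ℝ) < 1 - π := by linarith
  set T1 := ∑ k ∈ Icc (jstar + 1) n, B k with hT1def
  set S := ∑ k ∈ Icc jstar n, ((k : ℝ) - jstar) * B k with hSdef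
  have hIcc : Icc jstar n = insert jstar (Icc (jstar + 1) n) := by
    ext k; simp only [mem_Icc, mem_insert]; omega
  have hnotmem : jstar ∉ Icc (jstar + 1) n := by simp
  have hT0 : ∑ k ∈ Icc jstar n, B k = B jstar + T1 := by
    rw [hIcc, sum_insert hnotmem]
  have hmem' : B jstar + T1 ≥ 1 - π := hT0 ▸ hjstar_mem
  have hT1lt : T1 < 1 - π := by
    rcases eq_or_lt_of_le hjstar_le with h | h
    · have he : Icc (jstar + 1) n = ∅ := Finset.Icc_eq_empty (by omega)
      rw [hT1def, he, sum_empty]; linarith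
    · by_contra hc
      push_neg at hc
      have := hjstar_max (jstar + 1) (by omega) hc
      omega
  have hBj : 0 < B jstar := by linarith
  set α := (1 - π - T1) / B jstar with hαdef
  have hα0 : 0 < 1 - π - T1 := by linarith
  have hαnn : 0 ≤ α := le_of_lt (div_pos hα0 hBj)
  have hαB : α * B jstar = 1 - π - T1 := div_mul_cancel₀ _ (ne_of_gt hBj)
  have hα1 : α ≤ 1 := by rw [hαdef, div_le_one hBj]; linarith
  -- the Rawlsian rule
  set q0 : ℕ → ℝ := fun k => if k < jstar then 0 else if k = jstar then α else 1 with hq0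
  have hsplit : ∀ f : ℕ → ℝ, ∑ k ∈ range (n + 1), q0 k * f k
      = α * f jstar + ∑ k ∈ Icc (jstar + 1) n, f k := by
    intro f
    rw [range_eq_Ico, ← Finset.sum_Ico_consecutive _ (Nat.zero_le jstar)
      (by omega : jstar ≤ n + 1)]
    have hA : ∑ k ∈ Ico 0 jstar, q0 k * f k = 0 := by
      apply sum_eq_zero
      intro k hk
      simp only [mem_Ico] at hk
      simp [hq0, hk.2]
    have hB2 : Ico jstar (n + 1) = Icc jstar n := Finset.Ico_add_one_right_eq_Icc jstar n
    rw [hA, hB2, hIcc, sum_insert hnotmem, zero_add]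
    congr 1
    · simp [hq0]
    · apply sum_congr rfl
      intro k hk
      simp only [mem_Icc] at hk
      have h1 : ¬ k < jstar := by omega
      have h2 : k ≠ jstar := by omega
      simp [hq0, h1, h2]
  have hS' : S = ∑ k ∈ Icc (jstar + 1) n, ((k : ℝ) - jstar) * B k := by
    rw [hSdef, hIcc, sum_insert hnotmem]; simp
  have hA1S : ∑ k ∈ Icc (jstar + 1) n, (k : ℝ) * B k = S + jstar * T1 := by
    rw [hS', hT1def, Finset.mul_sum, ← Finset.sum_add_distrib]
    apply sum_congr rfl
    intro k _; ring
  have hW : ∑ k ∈ range (n + 1), q0 k * B k = 1 - π := by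
    rw [hsplit]; linarith
  have hX : ∑ k ∈ range (n + 1), q0 k * ((k : ℝ) * B k) = jstar * (1 - π) + S := by
    rw [hsplit, hA1S]
    have h : α * ((jstar : ℝ) * B jstar) = (jstar : ℝ) * (1 - π) - jstar * T1 := by
      rw [show α * ((jstar : ℝ) * B jstar) = (jstar : ℝ) * (α * B jstar) from by ring, hαB]
      ring
    linarith
  have hq0bd : ∀ k ≤ n, 0 ≤ q0 k ∧ q0 k ≤ 1 := by
    intro k _
    simp only [hq0]
    split_ifs <;> constructor <;> linarith
  have hq0mono : ∀ k, 1 ≤ k → k ≤ n → q0 (k - 1) ≤ q0 k := by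
    intro k hk1 hk2
    simp only [hq0]
    split_ifs <;> first | linarith | omega
  have e1 : ∑ k ∈ range (n + 1), (k : ℝ) * q0 k * B k
      = ∑ k ∈ range (n + 1), q0 k * ((k : ℝ) * B k) := by
    apply sum_congr rfl; intro k _; ring
  have e2 : ∑ k ∈ range (n + 1), ((n : ℝ) - k) * q0 k * B k
      = (n : ℝ) * (∑ k ∈ range (n + 1), q0 k * B k)
        - ∑ k ∈ range (n + 1), q0 k * ((k : ℝ) * B k) := by
    rw [Finset.mul_sum, ← Finset.sum_sub_distrib]
    apply sum_congr rfl; intro k _; ring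
  refine ⟨⟨q0, hq0bd, hq0mono, ?_, ?_⟩, ?_, hBj, hαnn, hα1, ?_, ?_⟩
  · rw [e1, hX, hQRa]
  · rw [e2, hW, hX, hQRb]; ring
  · -- part (ii)
    intro q hq _
    rw [ge_iff_le]
    set Xq := ∑ k ∈ range (n + 1), (k : ℝ) * q k * B k with hXqdef
    set Wq := ∑ k ∈ range (n + 1), q k * B k with hWqdef
    have hYq : ∑ k ∈ range (n + 1), ((n : ℝ) - k) * q k * B k = (n : ℝ) * Wq - Xq := by
      rw [hWqdef, hXqdef, Finset.mul_sum, ← Finset.sum_sub_distrib]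
      apply sum_congr rfl; intro k _; ring
    have hkey : Xq - jstar * Wq ≤ S := by
      have h0 : Xq - jstar * Wq = ∑ k ∈ range (n + 1), ((k : ℝ) - jstar) * (q k * B k) := by
        rw [hXqdef, hWqdef, Finset.mul_sum, ← Finset.sum_sub_distrib]
        apply sum_congr rfl; intro k _; ring
      rw [h0, range_eq_Ico, ← Finset.sum_Ico_consecutive _ (Nat.zero_le jstar)
        (by omega : jstar ≤ n + 1), Finset.Ico_add_one_right_eq_Icc]
      have hA : ∑ k ∈ Ico 0 jstar, ((k : ℝ) - jstar) * (q k * B k) ≤ 0 := by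
        apply sum_nonpos
        intro k hk
        simp only [mem_Ico] at hk
        have hk' : (k : ℝ) ≤ jstar := by exact_mod_cast Nat.le_of_lt hk.2
        have hkn : k ≤ n := by omega
        apply mul_nonpos_of_nonpos_of_nonneg (by linarith)
        exact mul_nonneg (hq k hkn).1 (hBnonneg k hkn)
      have hB2 : ∑ k ∈ Icc jstar n, ((k : ℝ) - jstar) * (q k * B k) ≤ S := by
        rw [hSdef]
        apply sum_le_sum
        intro k hk
        simp only [mem_Icc] at hk
        have hk' : (jstar : ℝ) ≤ k := by exact_mod_cast hk.1
        apply mul_le_mul_of_nonneg_left _ (by linarith)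
        calc q k * B k ≤ 1 * B k := by
              apply mul_le_mul_of_nonneg_right (hq k hk.2).2 (hBnonneg k hk.2)
          _ = B k := one_mul _
      linarith
    have hra : π * QRa = ((jstar : ℝ) * (1 - π) + S) / n := by
      rw [hQRa]; field_simp
    have hrb : (1 - π) * (1 - QRb) = ((jstar : ℝ) * (1 - π) + S) / n := by
      rw [hQRb]; field_simp; ring
    rw [hra, hrb, min_self]
    have hpa : π * (1 / (↑n * π) * Xq) = Xq / n := by field_simp
    have hpb : (1 - π) * (1 - 1 / (↑n * (1 - π)) * ((n : ℝ) * Wq - Xq))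
        = ((n : ℝ) * (1 - π) - ((n : ℝ) * Wq - Xq)) / n := by field_simp
    rw [hYq, hpa, hpb]
    have hjn : (jstar : ℝ) ≤ n := by exact_mod_cast hjstar_le
    have hjnn : (0 : ℝ) ≤ jstar := Nat.cast_nonneg _
    rcases le_total Wq (1 - π) with hle | hle
    · refine le_trans (min_le_left _ _) ?_
      refine (div_le_div_iff_of_pos_right hnR).mpr ?_
      have h1 : (jstar : ℝ) * Wq ≤ (jstar : ℝ) * (1 - π) :=
        mul_le_mul_of_nonneg_left hle hjnn
      linarith
    · refine le_trans (min_le_right _ _) ?_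
      refine (div_le_div_iff_of_pos_right hnR).mpr ?_
      have h2 : ((n : ℝ) - jstar) * (1 - π) ≤ ((n : ℝ) - jstar) * Wq :=
        mul_le_mul_of_nonneg_left hle (by linarith)
      linarith
  · -- part (iii) a
    have hA0 : ∑ k ∈ Icc jstar n, (k : ℝ) * B k
        = (jstar : ℝ) * B jstar + ∑ k ∈ Icc (jstar + 1) n, (k : ℝ) * B k := by
      rw [hIcc, sum_insert hnotmem]
    rw [hQRa, hA0, hA1S, hαdef]
    field_simp
    ring
  · -- part (iii) b
    have hNb1 : ∑ k ∈ Icc (jstar + 1) n, ((n : ℝ) - k) * B k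
        = (n : ℝ) * T1 - (S + jstar * T1) := by
      rw [← hA1S, hT1def, Finset.mul_sum, ← Finset.sum_sub_distrib]
      apply sum_congr rfl; intro k _; ring
    have hNb0 : ∑ k ∈ Icc jstar n, ((n : ℝ) - k) * B k
        = ((n : ℝ) - jstar) * B jstar + ∑ k ∈ Icc (jstar + 1) n, ((n : ℝ) - k) * B k := by
      rw [hIcc, sum_insert hnotmem]
    rw [hQRb, hNb0, hNb1, hαdef]
    field_simp
    ring
end

section
/- A pair (Qa, Qb) ∈ [0,1]² is reduced form implementable by a unanimous voting rule if and only if for every j ∈ {0,1,...,n} both of the following inequalities hold: j·(1−π)·Qb − (n−j)·π·Qa + ∑_{k=j}^n (k−j)·B(k) ≥ 0, and (n−j)·π·Qa − j·(1−π)·Qb + ∑_{k=0}^j (j−k)·B(k) ≥ j·B(0) + (n−j)·B(n). -/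
/-!
With `w k = q k * B k`, the two interim probabilities fix exactly the total mass
`S = π Qa + (1 - π) Qb` and the first moment `A = n π Qa` of `w`, and unanimity pins `w` at the
profiles `0` and `n`. Removing those two profiles leaves the question which moments are attained
by weights `0 ≤ v ≤ c` of a given mass, where `c` is `B` away from `0` and `n`. They form an
interval. Its upper end is attained by filling `c` greedily from the top and equals
`min_j (j S + ∑_{k ≥ j} (k - j) c k)`, which gives the first family of inequalities; its lower end
is attained by the complement `c - w` of a top-filling, which gives the second family.
-/

open Finset

section Summation

variable {R : Type*} [CommRing R]

lemma sum_range_mul_sub_succ (W : ℕ → R) (M : ℕ) :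
    ∑ k ∈ range M, (k : R) * (W k - W (k + 1)) = ∑ k ∈ range M, W (k + 1) - M * W M := by
  induction M with
  | zero => simp
  | succ M ih => rw [sum_range_succ, ih, sum_range_succ]; push_cast; ring

lemma sum_Ico_sum_Icc_succ (c : ℕ → R) (j N : ℕ) :
    ∑ i ∈ Ico j N, ∑ l ∈ Icc (i + 1) N, c l = ∑ l ∈ Icc j N, ((l : R) - j) * c l := by
  rw [sum_comm' (s' := fun l => Ico j l) (t' := Icc j N)
    (fun i l => by simp only [mem_Ico, mem_Icc]; omega)]
  refine sum_congr rfl fun l hl => ?_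
  rw [sum_const, Nat.card_Ico, nsmul_eq_mul, Nat.cast_sub (mem_Icc.mp hl).1]

lemma sum_range_sub_mul (j N : ℕ) (f : ℕ → R) :
    ∑ k ∈ range (N + 1), ((j : R) - k) * f k =
      j * ∑ k ∈ range (N + 1), f k - ∑ k ∈ range (N + 1), (k : R) * f k := by
  simp only [sub_mul, sum_sub_distrib, mul_sum]

lemma sum_range_sub_mul_add_sum_Icc {N j : ℕ} (hj : j ≤ N) (f : ℕ → R) :
    ∑ k ∈ range (N + 1), ((j : R) - k) * f k + ∑ k ∈ Icc j N, ((k : R) - j) * f k =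
      ∑ k ∈ range (j + 1), ((j : R) - k) * f k := by
  rw [sum_range_succ _ j, sub_self, zero_mul, add_zero, range_eq_Ico, range_eq_Ico,
    ← sum_Ico_consecutive _ (Nat.zero_le j) (by omega : j ≤ N + 1), ← Ico_add_one_right_eq_Icc,
    add_assoc, ← sum_add_distrib]
  exact add_eq_left.mpr (sum_eq_zero fun _ _ => by ring)

end Summation

theorem Antitone.exists_sum_range_min_eq {R : Type*} [CommSemiring R] [LinearOrder R]
    {g : ℕ → R} (hg : Antitone g) (S : R) (N : ℕ) :
    ∃ j ≤ N, ∑ k ∈ range N, min S (g k) = j * S + ∑ k ∈ Ico j N, g k := by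
  induction N with
  | zero => exact ⟨0, le_rfl, by simp⟩
  | succ N ih =>
    by_cases hS : S ≤ g N
    · refine ⟨N + 1, le_rfl, ?_⟩
      rw [Ico_self, sum_empty, add_zero,
        sum_congr rfl fun k hk => min_eq_left (hS.trans (hg (mem_range_succ_iff.mp hk)))]
      simp
    · obtain ⟨j, hj, h⟩ := ih
      refine ⟨j, hj.trans N.le_succ, ?_⟩
      rw [sum_range_succ, h, sum_Ico_succ_top hj, min_eq_right (le_of_not_ge hS), add_assoc]

section Dominated

variable {𝕜 : Type*} [Field 𝕜] [LinearOrder 𝕜] [IsStrictOrderedRing 𝕜] {N : ℕ} {c : ℕ → 𝕜}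

theorem exists_dominated_mass_moment_ge (hc : ∀ k ≤ N, 0 ≤ c k) {S A : 𝕜} (hS : 0 ≤ S)
    (hSc : S ≤ ∑ k ∈ range (N + 1), c k)
    (hA : ∀ j ≤ N, A ≤ j * S + ∑ k ∈ Icc j N, ((k : 𝕜) - j) * c k) :
    ∃ v : ℕ → 𝕜, (∀ k ≤ N, 0 ≤ v k ∧ v k ≤ c k) ∧ ∑ k ∈ range (N + 1), v k = S ∧
      A ≤ ∑ k ∈ range (N + 1), (k : 𝕜) * v k := by
  set T : ℕ → 𝕜 := fun k => ∑ l ∈ Icc k N, c l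
  have hT_succ (k : ℕ) (hk : k ≤ N) : T k = c k + T (k + 1) := by
    simp only [T, Icc_add_one_left_eq_Ioc, add_sum_Ioc_eq_sum_Icc hk]
  have hT_anti : Antitone T := fun k l hkl =>
    sum_le_sum_of_subset_of_nonneg (Icc_subset_Icc_left hkl) fun i hi _ => hc i (mem_Icc.mp hi).2
  -- `W k` is the mass that the top-filling puts on `{k, …, N}`.
  set W : ℕ → 𝕜 := fun k => min S (T k)
  have hW_top : W (N + 1) = 0 := by simp [W, T, hS]
  refine ⟨fun k => W k - W (k + 1), fun k hk => ⟨?_, ?_⟩, ?_, ?_⟩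
  · exact sub_nonneg.mpr (min_le_min_left S (hT_anti k.le_succ))
  · have hW_step : W k ≤ W (k + 1) + c k := calc
      min S (T k) = min S (T (k + 1) + c k) := by rw [hT_succ k hk, add_comm]
      _ ≤ min (S + c k) (T (k + 1) + c k) :=
        min_le_min_right _ (le_add_of_nonneg_right (hc k hk))
      _ = W (k + 1) + c k := min_add_add_right ..
    linarith
  · rw [sum_range_sub', hW_top, sub_zero]
    exact min_eq_left (hSc.trans_eq (by rw [Nat.range_succ_eq_Icc_zero]))
  · obtain ⟨j, hj, hsum⟩ := Antitone.exists_sum_range_min_eq (g := fun k => T (k + 1))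
      (fun k l h => hT_anti (by omega)) S N
    rw [sum_range_mul_sub_succ, hW_top, mul_zero, sub_zero, sum_range_succ, hW_top, add_zero, hsum]
    exact (hA j hj).trans_eq (by rw [← sum_Ico_sum_Icc_succ])

theorem exists_dominated_mass_moment_le (hc : ∀ k ≤ N, 0 ≤ c k) {S A : 𝕜} (hS : 0 ≤ S)
    (hSc : S ≤ ∑ k ∈ range (N + 1), c k)
    (hA : ∀ j ≤ N, j * S - A ≤ ∑ k ∈ range (j + 1), ((j : 𝕜) - k) * c k) :
    ∃ v : ℕ → 𝕜, (∀ k ≤ N, 0 ≤ v k ∧ v k ≤ c k) ∧ ∑ k ∈ range (N + 1), v k = S ∧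
      ∑ k ∈ range (N + 1), (k : 𝕜) * v k ≤ A := by
  obtain ⟨w, hw, hw_mass, hw_moment⟩ := exists_dominated_mass_moment_ge hc
    (sub_nonneg.2 hSc) (sub_le_self _ hS) (A := ∑ k ∈ range (N + 1), (k : 𝕜) * c k - A)
    fun j hj => by linarith [hA j hj, sum_range_sub_mul_add_sum_Icc hj c, sum_range_sub_mul j N c]
  refine ⟨fun k => c k - w k, fun k hk => ⟨sub_nonneg.2 (hw k hk).2, sub_le_self _ (hw k hk).1⟩,
    ?_, ?_⟩
  · rw [sum_sub_distrib, hw_mass, sub_sub_cancel]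
  · simp only [mul_sub, sum_sub_distrib]
    linarith

theorem moment_bounds_of_dominated {v : ℕ → 𝕜} (hv : ∀ k ≤ N, 0 ≤ v k ∧ v k ≤ c k) {j : ℕ}
    (hj : j ≤ N) :
    ∑ k ∈ range (N + 1), (k : 𝕜) * v k ≤
        j * ∑ k ∈ range (N + 1), v k + ∑ k ∈ Icc j N, ((k : 𝕜) - j) * c k ∧
      j * ∑ k ∈ range (N + 1), v k - ∑ k ∈ range (N + 1), (k : 𝕜) * v k ≤
        ∑ k ∈ range (j + 1), ((j : 𝕜) - k) * c k := by
  have hleft (k : ℕ) (hk : k ∈ range (j + 1)) : 0 ≤ (j : 𝕜) - k ∧ k ≤ N := by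
    rw [mem_range] at hk
    exact ⟨sub_nonneg.2 (by exact_mod_cast Nat.lt_succ_iff.mp hk), by omega⟩
  have hright (k : ℕ) (hk : k ∈ Icc j N) : 0 ≤ (k : 𝕜) - j ∧ k ≤ N := by
    rw [mem_Icc] at hk
    exact ⟨sub_nonneg.2 (by exact_mod_cast hk.1), hk.2⟩
  have hsplit := sum_range_sub_mul_add_sum_Icc hj v
  rw [sum_range_sub_mul] at hsplit
  have hl0 : 0 ≤ ∑ k ∈ range (j + 1), ((j : 𝕜) - k) * v k :=
    sum_nonneg fun k hk => mul_nonneg (hleft k hk).1 (hv k (hleft k hk).2).1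
  have hlc : ∑ k ∈ range (j + 1), ((j : 𝕜) - k) * v k ≤
      ∑ k ∈ range (j + 1), ((j : 𝕜) - k) * c k :=
    sum_le_sum fun k hk => mul_le_mul_of_nonneg_left (hv k (hleft k hk).2).2 (hleft k hk).1
  have hr0 : 0 ≤ ∑ k ∈ Icc j N, ((k : 𝕜) - j) * v k :=
    sum_nonneg fun k hk => mul_nonneg (hright k hk).1 (hv k (hright k hk).2).1
  have hrc : ∑ k ∈ Icc j N, ((k : 𝕜) - j) * v k ≤ ∑ k ∈ Icc j N, ((k : 𝕜) - j) * c k :=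
    sum_le_sum fun k hk => mul_le_mul_of_nonneg_left (hv k (hright k hk).2).2 (hright k hk).1
  constructor <;> linarith

theorem exists_dominated_mass_moment_eq_of_le_of_le {S A : 𝕜} {v w : ℕ → 𝕜}
    (hv : ∀ k ≤ N, 0 ≤ v k ∧ v k ≤ c k) (hw : ∀ k ≤ N, 0 ≤ w k ∧ w k ≤ c k)
    (hv_mass : ∑ k ∈ range (N + 1), v k = S) (hw_mass : ∑ k ∈ range (N + 1), w k = S)
    (hv_moment : ∑ k ∈ range (N + 1), (k : 𝕜) * v k ≤ A)
    (hw_moment : A ≤ ∑ k ∈ range (N + 1), (k : 𝕜) * w k) :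
    ∃ u : ℕ → 𝕜, (∀ k ≤ N, 0 ≤ u k ∧ u k ≤ c k) ∧ ∑ k ∈ range (N + 1), u k = S ∧
      ∑ k ∈ range (N + 1), (k : 𝕜) * u k = A := by
  obtain ⟨a, b, ha, hb, hab, hA⟩ : A ∈ segment 𝕜 (∑ k ∈ range (N + 1), (k : 𝕜) * v k)
      (∑ k ∈ range (N + 1), (k : 𝕜) * w k) := by
    rw [segment_eq_Icc (hv_moment.trans hw_moment)]
    exact ⟨hv_moment, hw_moment⟩
  refine ⟨fun k => a * v k + b * w k, fun k hk => ⟨?_, ?_⟩, ?_, ?_⟩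
  · exact add_nonneg (mul_nonneg ha (hv k hk).1) (mul_nonneg hb (hw k hk).1)
  · calc a * v k + b * w k ≤ a * c k + b * c k :=
          add_le_add (mul_le_mul_of_nonneg_left (hv k hk).2 ha)
            (mul_le_mul_of_nonneg_left (hw k hk).2 hb)
      _ = c k := by rw [← add_mul, hab, one_mul]
  · rw [sum_add_distrib, ← mul_sum, ← mul_sum, hv_mass, hw_mass, ← add_mul, hab, one_mul]
  · simp only [mul_add, sum_add_distrib, mul_left_comm _ a, mul_left_comm _ b, ← mul_sum]
    simpa only [smul_eq_mul] using hA

theorem exists_dominated_mass_moment_iff (hN : 0 < N) (hc : ∀ k ≤ N, 0 ≤ c k) (S A : 𝕜) :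
    (∃ v : ℕ → 𝕜, (∀ k ≤ N, 0 ≤ v k ∧ v k ≤ c k) ∧ ∑ k ∈ range (N + 1), v k = S ∧
      ∑ k ∈ range (N + 1), (k : 𝕜) * v k = A) ↔
    ∀ j ≤ N, A ≤ j * S + ∑ k ∈ Icc j N, ((k : 𝕜) - j) * c k ∧
      j * S - A ≤ ∑ k ∈ range (j + 1), ((j : 𝕜) - k) * c k := by
  constructor
  · rintro ⟨v, hv, rfl, rfl⟩ j hj
    exact moment_bounds_of_dominated hv hj
  · intro h
    have hN' : (0 : 𝕜) < N := by exact_mod_cast hN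
    have h0 := h 0 N.zero_le
    have hNN := h N le_rfl
    simp only [Nat.cast_zero, zero_mul, zero_add, sub_zero, zero_sub, ← Nat.range_succ_eq_Icc_zero,
      Icc_self, sum_singleton, sub_self, range_one, neg_zero, add_zero] at h0 hNN
    rw [sum_range_sub_mul] at hNN
    have hS : 0 ≤ S := (mul_nonneg_iff_of_pos_left hN').mp (by linarith)
    have hSc : S ≤ ∑ k ∈ range (N + 1), c k := le_of_mul_le_mul_left (by linarith) hN'
    obtain ⟨w, hw, hw_mass, hw_moment⟩ :=
      exists_dominated_mass_moment_ge hc hS hSc fun j hj => (h j hj).1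
    obtain ⟨v, hv, hv_mass, hv_moment⟩ :=
      exists_dominated_mass_moment_le hc hS hSc fun j hj => (h j hj).2
    exact exists_dominated_mass_moment_eq_of_le_of_le hv hw hv_mass hw_mass hv_moment hw_moment

end Dominated

section Voting

variable {n : ℕ}

theorem reduced_form_eq_iff (hn : n ≠ 0) {π : ℝ} (hπ0 : 0 < π) (hπ1 : π < 1)
    (q B : ℕ → ℝ) (Qa Qb : ℝ) :
    (1 / (n * π)) * ∑ k ∈ range (n + 1), (k : ℝ) * q k * B k = Qa ∧
      (1 / (n * (1 - π))) * ∑ k ∈ range (n + 1), ((n : ℝ) - k) * q k * B k = Qb ↔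
    ∑ k ∈ range (n + 1), q k * B k = π * Qa + (1 - π) * Qb ∧
      ∑ k ∈ range (n + 1), (k : ℝ) * q k * B k = n * π * Qa := by
  have hn' : (n : ℝ) ≠ 0 := Nat.cast_ne_zero.mpr hn
  have hπ1' : 1 - π ≠ 0 := sub_ne_zero.mpr hπ1.ne'
  have hsub : ∑ k ∈ range (n + 1), ((n : ℝ) - k) * q k * B k =
      n * ∑ k ∈ range (n + 1), q k * B k - ∑ k ∈ range (n + 1), (k : ℝ) * q k * B k := by
    simp only [sub_mul, sum_sub_distrib, mul_sum, mul_assoc]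
  rw [hsub, one_div_mul_eq_div, one_div_mul_eq_div,
    div_eq_iff (mul_ne_zero hn' hπ0.ne'), div_eq_iff (mul_ne_zero hn' hπ1')]
  constructor
  · rintro ⟨hA, hB⟩
    refine ⟨mul_left_cancel₀ hn' ?_, by linarith⟩
    linarith
  · rintro ⟨hS, hA⟩
    refine ⟨by linarith, ?_⟩
    rw [hS, hA]
    ring

def nonunanimousPart (n : ℕ) (B : ℕ → ℝ) (k : ℕ) : ℝ := if k = 0 ∨ k = n then 0 else B k

lemma nonunanimousPart_nonneg {B : ℕ → ℝ} (hB : ∀ k ≤ n, 0 ≤ B k) (k : ℕ) (hk : k ≤ n) :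
    0 ≤ nonunanimousPart n B k := by
  unfold nonunanimousPart
  split_ifs
  exacts [le_rfl, hB k hk]

lemma sum_mul_eq_sum_mul_nonunanimousPart (hn : n ≠ 0) (B f : ℕ → ℝ) (s : Finset ℕ) :
    ∑ k ∈ s, f k * B k = ∑ k ∈ s, f k * nonunanimousPart n B k +
      ((if 0 ∈ s then f 0 * B 0 else 0) + if n ∈ s then f n * B n else 0) := by
  have hsplit (k : ℕ) : f k * B k = f k * nonunanimousPart n B k +
      ((if k = 0 then f k * B k else 0) + if k = n then f k * B k else 0) := by
    by_cases h0 : k = 0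
    · simp [h0, nonunanimousPart, Ne.symm hn]
    · by_cases hkn : k = n <;> simp [nonunanimousPart, h0, hkn, hn]
  rw [sum_congr rfl fun k _ => hsplit k, sum_add_distrib, sum_add_distrib, sum_ite_eq',
    sum_ite_eq']

lemma sum_Icc_sub_mul_eq_nonunanimousPart (hn : n ≠ 0) {j : ℕ} (hj : j ≤ n) (B : ℕ → ℝ) :
    ∑ k ∈ Icc j n, ((k : ℝ) - j) * B k =
      ∑ k ∈ Icc j n, ((k : ℝ) - j) * nonunanimousPart n B k + (n - j) * B n := by
  rw [sum_mul_eq_sum_mul_nonunanimousPart hn]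
  split_ifs <;> simp_all

lemma sum_range_sub_mul_eq_nonunanimousPart (hn : n ≠ 0) {j : ℕ} (hj : j ≤ n) (B : ℕ → ℝ) :
    ∑ k ∈ range (j + 1), ((j : ℝ) - k) * B k =
      ∑ k ∈ range (j + 1), ((j : ℝ) - k) * nonunanimousPart n B k + j * B 0 := by
  rw [sum_mul_eq_sum_mul_nonunanimousPart hn]
  rcases hj.lt_or_eq with hj | rfl
  · simp [hj.not_ge]
  · simp

theorem exists_unanimous_iff_exists_dominated (hn : n ≠ 0) {B : ℕ → ℝ}
    (hB : ∀ k ≤ n, 0 ≤ B k) (S A : ℝ) :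
    (∃ q : ℕ → ℝ, (∀ k ≤ n, 0 ≤ q k ∧ q k ≤ 1) ∧ q 0 = 0 ∧ q n = 1 ∧
      ∑ k ∈ range (n + 1), q k * B k = S ∧ ∑ k ∈ range (n + 1), (k : ℝ) * q k * B k = A) ↔
    ∃ v : ℕ → ℝ, (∀ k ≤ n, 0 ≤ v k ∧ v k ≤ nonunanimousPart n B k) ∧
      ∑ k ∈ range (n + 1), v k = S - B n ∧ ∑ k ∈ range (n + 1), (k : ℝ) * v k = A - n * B n := by
  have hsplit (q : ℕ → ℝ) (hq0 : q 0 = 0) (hqn : q n = 1) :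
      ∑ k ∈ range (n + 1), q k * B k =
        ∑ k ∈ range (n + 1), q k * nonunanimousPart n B k + B n ∧
      ∑ k ∈ range (n + 1), (k : ℝ) * q k * B k =
        ∑ k ∈ range (n + 1), (k : ℝ) * (q k * nonunanimousPart n B k) + n * B n := by
    have h1 := sum_mul_eq_sum_mul_nonunanimousPart hn B q (range (n + 1))
    have h2 := sum_mul_eq_sum_mul_nonunanimousPart hn B (fun k => (k : ℝ) * q k) (range (n + 1))
    exact ⟨by simpa [hq0, hqn] using h1, by simpa [hq0, hqn, mul_assoc] using h2⟩
  constructor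
  · rintro ⟨q, hq, hq0, hqn, rfl, rfl⟩
    refine ⟨fun k => q k * nonunanimousPart n B k, fun k hk => ⟨?_, ?_⟩, ?_, ?_⟩
    · exact mul_nonneg (hq k hk).1 (nonunanimousPart_nonneg hB k hk)
    · exact mul_le_of_le_one_left (nonunanimousPart_nonneg hB k hk) (hq k hk).2
    · rw [(hsplit q hq0 hqn).1, add_sub_cancel_right]
    · rw [(hsplit q hq0 hqn).2, add_sub_cancel_right]
  · rintro ⟨v, hv, hv_mass, hv_moment⟩
    -- At `k = 0`, and wherever else `nonunanimousPart n B k = 0`, division by zero gives `q k = 0`.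
    set q : ℕ → ℝ := fun k => if k = n then 1 else v k / nonunanimousPart n B k
    have hqv (k : ℕ) (hk : k ≤ n) : q k * nonunanimousPart n B k = v k := by
      by_cases hc : nonunanimousPart n B k = 0
      · rw [hc, mul_zero]
        exact le_antisymm (hv k hk).1 ((hv k hk).2.trans_eq hc)
      · simp only [q, if_neg (show k ≠ n by rintro rfl; simp [nonunanimousPart] at hc),
          div_mul_cancel₀ _ hc]
    have hq0 : q 0 = 0 := by simp [q, Ne.symm hn, nonunanimousPart]
    have hqn : q n = 1 := if_pos rfl
    refine ⟨q, fun k hk => ?_, hq0, hqn, ?_, ?_⟩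
    · by_cases hkn : k = n
      · simp [q, hkn]
      · simp only [q, if_neg hkn]
        exact ⟨div_nonneg (hv k hk).1 (nonunanimousPart_nonneg hB k hk),
          div_le_one_of_le₀ (hv k hk).2 (nonunanimousPart_nonneg hB k hk)⟩
    · rw [(hsplit q hq0 hqn).1, sum_congr rfl fun k hk => hqv k (mem_range_succ_iff.mp hk),
        hv_mass, sub_add_cancel]
    · rw [(hsplit q hq0 hqn).2, sum_congr rfl fun k hk => by
        rw [hqv k (mem_range_succ_iff.mp hk)], hv_moment, sub_add_cancel]

end Voting

theorem unanimous_reduced_form_implementable_iff_general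
    (n : ℕ) (hn : 2 ≤ n) (π : ℝ) (hπ0 : 0 < π) (hπ1 : π < 1)
    (B : ℕ → ℝ) (hBnonneg : ∀ k ≤ n, 0 ≤ B k)
    (Qa Qb : ℝ) :
    (∃ q : ℕ → ℝ, (∀ k ≤ n, 0 ≤ q k ∧ q k ≤ 1) ∧
      q 0 = 0 ∧ q n = 1 ∧
      (1 / (n * π)) * ∑ k ∈ range (n + 1), (k : ℝ) * q k * B k = Qa ∧
      (1 / (n * (1 - π))) * ∑ k ∈ range (n + 1), ((n : ℝ) - k) * q k * B k = Qb)
    ↔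
    (∀ j ≤ n,
      (j : ℝ) * (1 - π) * Qb - ((n : ℝ) - j) * π * Qa
        + ∑ k ∈ Icc j n, ((k : ℝ) - j) * B k ≥ 0 ∧
      ((n : ℝ) - j) * π * Qa - (j : ℝ) * (1 - π) * Qb
        + ∑ k ∈ range (j + 1), ((j : ℝ) - k) * B k
        ≥ (j : ℝ) * B 0 + ((n : ℝ) - j) * B n) := by
  have hn0 : n ≠ 0 := by omega
  rw [exists_congr fun q => and_congr_right fun _ => and_congr_right fun _ => and_congr_right
      fun _ => reduced_form_eq_iff hn0 hπ0 hπ1 q B Qa Qb,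
    exists_unanimous_iff_exists_dominated hn0 hBnonneg,
    exists_dominated_mass_moment_iff (by omega) (nonunanimousPart_nonneg hBnonneg)]
  refine forall₂_congr fun j hj => and_congr ?_ ?_
  · have hsum := sum_Icc_sub_mul_eq_nonunanimousPart hn0 hj B
    constructor <;> intro h <;> linarith
  · have hsum := sum_range_sub_mul_eq_nonunanimousPart hn0 hj B
    constructor <;> intro h <;> linarith

/-- Theorem (unanimous reduced form): `(Qa, Qb) ∈ [0,1]²` is reduced form implementable
by a unanimous voting rule iff the `2(n+1)` linear inequalities hold, with the second
family tightened by `j·B(0) + (n−j)·B(n)`. -/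
theorem unanimous_reduced_form_implementable_iff
    (n : ℕ) (hn : 2 ≤ n) (π : ℝ) (hπ0 : 0 < π) (hπ1 : π < 1)
    (B : ℕ → ℝ) (hBnonneg : ∀ k ≤ n, 0 ≤ B k)
    (hBsum : ∑ k ∈ range (n + 1), B k = 1)
    (hBmean : ∑ k ∈ range (n + 1), (k : ℝ) * B k = n * π)
    (Qa Qb : ℝ) (hQa : Qa ∈ Set.Icc (0 : ℝ) 1) (hQb : Qb ∈ Set.Icc (0 : ℝ) 1) :
    (∃ q : ℕ → ℝ, (∀ k ≤ n, 0 ≤ q k ∧ q k ≤ 1) ∧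
      q 0 = 0 ∧ q n = 1 ∧
      (1 / (n * π)) * ∑ k ∈ range (n + 1), (k : ℝ) * q k * B k = Qa ∧
      (1 / (n * (1 - π))) * ∑ k ∈ range (n + 1), ((n : ℝ) - k) * q k * B k = Qb)
    ↔
    (∀ j ≤ n,
      (j : ℝ) * (1 - π) * Qb - ((n : ℝ) - j) * π * Qa
        + ∑ k ∈ Icc j n, ((k : ℝ) - j) * B k ≥ 0 ∧
      ((n : ℝ) - j) * π * Qa - (j : ℝ) * (1 - π) * Qb
        + ∑ k ∈ range (j + 1), ((j : ℝ) - k) * B k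
        ≥ (j : ℝ) * B 0 + ((n : ℝ) - j) * B n) :=
  unanimous_reduced_form_implementable_iff_general n hn π hπ0 hπ1 B hBnonneg Qa Qb
end

section
/- For every unanimous voting rule q with interim allocation probabilities (Qa, Qb) there exist nonnegative reals β⁺₁,...,β⁺ₙ and β⁻₁,...,β⁻ₙ with ∑_{j=1}^n (β⁺ⱼ + β⁻ⱼ) = 1 such that Qa = ∑_{j=1}^n β⁺ⱼ·Q⁺ᵤⱼ(a) + ∑_{j=1}^n β⁻ⱼ·Q⁻ᵤⱼ(a) and Qb = ∑_{j=1}^n β⁺ⱼ·Q⁺ᵤⱼ(b) + ∑_{j=1}^n β⁻ⱼ·Q⁻ᵤⱼ(b); that is, every unanimous voting rule is reduced-form equivalent to a convex combination of u-qualified majority and u-qualified anti-majority rules. -/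
open Finset

private lemma sum_two_ite {n a : ℕ} (θ : ℝ) (h1 : 1 ≤ a) (h2 : a ≤ n)
    (hθ : a = n → θ = 0) (F : ℕ → ℝ) :
    ∑ j ∈ Icc 1 n, ((if j = a then (1 - θ) else 0) + (if j = a + 1 then θ else 0)) * F j
      = (1 - θ) * F a + θ * F (a + 1) := by
  have key : ∀ (c : ℝ) (b : ℕ), ∑ j ∈ Icc 1 n, (if j = b then c else 0) * F j
      = if b ∈ Icc 1 n then c * F b else 0 := by
    intro c b
    rw [← Finset.sum_ite_eq' (Icc 1 n) b (fun j => c * F j)]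
    exact Finset.sum_congr rfl fun j _ => by split_ifs <;> simp
  simp only [add_mul, Finset.sum_add_distrib, key]
  rw [if_pos (by simp only [mem_Icc]; omega)]
  congr 1
  by_cases han : a = n
  · rw [if_neg (by simp only [mem_Icc]; omega), hθ han]; ring
  · rw [if_pos (by simp only [mem_Icc]; omega)]

set_option maxHeartbeats 1000000 in
private lemma core (n : ℕ) (hn : 2 ≤ n) (w t : ℕ → ℝ)
    (hw : ∀ k ∈ Icc 1 (n-1), 0 ≤ w k) (ht0 : ∀ k ∈ Icc 1 (n-1), 0 ≤ t k)
    (ht1 : ∀ k ∈ Icc 1 (n-1), t k ≤ 1) :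
    ∃ βp βm : ℕ → ℝ, (∀ j ∈ Icc 1 n, 0 ≤ βp j ∧ 0 ≤ βm j) ∧
      (∑ j ∈ Icc 1 n, (βp j + βm j)) = 1 ∧
      ((∑ j ∈ Icc 1 n, βp j * ∑ k ∈ Icc j (n-1), (k:ℝ) * w k)
        + ∑ j ∈ Icc 1 n, βm j * ∑ k ∈ Icc 1 (j-1), (k:ℝ) * w k)
        = (∑ k ∈ Icc 1 (n-1), (k:ℝ) * (t k * w k)) ∧
      ((∑ j ∈ Icc 1 n, βp j * ∑ k ∈ Icc j (n-1), w k)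
        + ∑ j ∈ Icc 1 n, βm j * ∑ k ∈ Icc 1 (j-1), w k)
        = ∑ k ∈ Icc 1 (n-1), t k * w k := by
  classical
  have hmn : (n - 1) + 1 = n := by omega
  set m := n - 1 with hmdef
  have hm1 : 1 ≤ m := by omega
  set W : ℕ → ℝ := fun j => ∑ k ∈ Icc 1 (j-1), w k with hWd
  set A : ℕ → ℝ := fun j => ∑ k ∈ Icc 1 (j-1), (k:ℝ) * w k with hAd
  set V : ℕ → ℝ := fun j => ∑ k ∈ Icc j m, w k with hVd
  set T : ℕ → ℝ := fun j => ∑ k ∈ Icc j m, (k:ℝ) * w k with hTd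
  set Y : ℝ := ∑ k ∈ Icc 1 m, t k * w k with hYd
  set X : ℝ := ∑ k ∈ Icc 1 m, (k:ℝ) * (t k * w k) with hXd
  have hY0 : 0 ≤ Y := Finset.sum_nonneg fun k hk =>
    mul_nonneg (ht0 k hk) (hw k hk)
  have hYW : Y ≤ W n := by
    have : W n = ∑ k ∈ Icc 1 m, w k := by rw [hWd]
    rw [this, hYd]
    exact Finset.sum_le_sum fun k hk => by
      nlinarith [ht1 k hk, hw k hk, ht0 k hk]
  -- successor identities
  have Wsucc : ∀ j, 1 ≤ j → W (j+1) = W j + w j := by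
    intro j hj
    obtain ⟨i, rfl⟩ : ∃ i, j = i + 1 := ⟨j - 1, by omega⟩
    show ∑ k ∈ Icc 1 (i+1), w k = (∑ k ∈ Icc 1 i, w k) + w (i+1)
    exact Finset.sum_Icc_succ_top (by omega) w
  have Asucc : ∀ j, 1 ≤ j → A (j+1) = A j + (j:ℝ) * w j := by
    intro j hj
    obtain ⟨i, rfl⟩ : ∃ i, j = i + 1 := ⟨j - 1, by omega⟩
    show ∑ k ∈ Icc 1 (i+1), (k:ℝ) * w k
        = (∑ k ∈ Icc 1 i, (k:ℝ) * w k) + ((i+1 : ℕ):ℝ) * w (i+1)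
    exact Finset.sum_Icc_succ_top (by omega) _
  have Vsucc : ∀ j, j ≤ m → V j = w j + V (j+1) := by
    intro j hj
    have hins : Icc j m = insert j (Icc (j+1) m) := by
      ext x; simp only [mem_Icc, mem_insert]; omega
    show ∑ k ∈ Icc j m, w k = w j + ∑ k ∈ Icc (j+1) m, w k
    rw [hins, Finset.sum_insert (by simp only [mem_Icc]; omega)]
  have Tsucc : ∀ j, j ≤ m → T j = (j:ℝ) * w j + T (j+1) := by
    intro j hj
    have hins : Icc j m = insert j (Icc (j+1) m) := by
      ext x; simp only [mem_Icc, mem_insert]; omega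
    show ∑ k ∈ Icc j m, (k:ℝ) * w k = (j:ℝ) * w j + ∑ k ∈ Icc (j+1) m, (k:ℝ) * w k
    rw [hins, Finset.sum_insert (by simp only [mem_Icc]; omega)]

  -- lower index jl
  have hW1 : W 1 = 0 := by simp [hWd]
  set jl := Nat.findGreatest (fun j => W j ≤ Y) n with hjld
  have hjl1 : 1 ≤ jl :=
    Nat.le_findGreatest (by omega) (show W 1 ≤ Y by rw [hW1]; exact hY0)
  have hjln : jl ≤ n := Nat.findGreatest_le n
  have hWjl : W jl ≤ Y :=
    Nat.findGreatest_spec (P := fun j => W j ≤ Y) (by omega : 1 ≤ n)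
      (show W 1 ≤ Y by rw [hW1]; exact hY0)
  have hjl_lt : jl < n → Y < W (jl + 1) := by
    intro h
    have := Nat.findGreatest_is_greatest (P := fun j => W j ≤ Y)
      (by omega : jl < jl + 1) (by omega)
    exact lt_of_not_ge this
  have hwjl : jl < n → 0 < w jl := by
    intro h
    have h1 := hjl_lt h
    have h2 := Wsucc jl hjl1
    nlinarith [hWjl]
  set θl : ℝ := if jl = n then 0 else (Y - W jl) / w jl with hθld
  have hθl_mul : θl * w jl = Y - W jl := by
    rw [hθld]; split_ifs with h
    · have hYn : Y = W n := le_antisymm hYW (h ▸ hWjl)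
      rw [h, hYn]; ring
    · field_simp [ne_of_gt (hwjl (by omega))]
  have hθl0 : 0 ≤ θl := by
    rw [hθld]; split_ifs with h
    · exact le_refl 0
    · exact div_nonneg (by linarith [hWjl]) (le_of_lt (hwjl (by omega)))
  have hθl1 : θl ≤ 1 := by
    rw [hθld]; split_ifs with h
    · norm_num
    · have h1 := hjl_lt (by omega)
      have h2 := Wsucc jl hjl1
      have h3 := hwjl (by omega)
      rw [div_le_one h3]; nlinarith
  have hθln : jl = n → θl = 0 := fun h => by rw [hθld, if_pos h]

  -- upper index ju
  have hVn : V n = 0 := by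
    rw [hVd]; simp only []
    exact Finset.sum_eq_zero fun k hk => by
      exfalso; simp only [mem_Icc] at hk; omega
  have hV1 : V 1 = W n := by rw [hVd, hWd]
  set ju := Nat.findGreatest (fun j => Y ≤ V j) n with hjud
  have hju1 : 1 ≤ ju :=
    Nat.le_findGreatest (by omega) (show Y ≤ V 1 by rw [hV1]; exact hYW)
  have hjun : ju ≤ n := Nat.findGreatest_le n
  have hVju : Y ≤ V ju :=
    Nat.findGreatest_spec (P := fun j => Y ≤ V j) (by omega : 1 ≤ n)
      (show Y ≤ V 1 by rw [hV1]; exact hYW)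
  have hju_lt : ju < n → V (ju + 1) < Y := by
    intro h
    have := Nat.findGreatest_is_greatest (P := fun j => Y ≤ V j)
      (by omega : ju < ju + 1) (by omega)
    exact lt_of_not_ge this
  have hwju : ju < n → 0 < w ju := by
    intro h
    have h1 := hju_lt h
    have h2 := Vsucc ju (by omega)
    nlinarith [hVju]
  set θu : ℝ := if ju = n then 0 else (V ju - Y) / w ju with hθud
  have hYn0 : ju = n → Y = 0 := by
    intro h
    have : Y ≤ V n := h ▸ hVju
    rw [hVn] at this; linarith
  have hθu_mul : θu * w ju = V ju - Y := by
    rw [hθud]; split_ifs with h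
    · rw [h, hVn, hYn0 h]; ring
    · field_simp [ne_of_gt (hwju (by omega))]
  have hθu0 : 0 ≤ θu := by
    rw [hθud]; split_ifs with h
    · exact le_refl 0
    · exact div_nonneg (by linarith [hVju]) (le_of_lt (hwju (by omega)))
  have hθu1 : θu ≤ 1 := by
    rw [hθud]; split_ifs with h
    · norm_num
    · have h1 := hju_lt (by omega)
      have h2 := Vsucc ju (by omega)
      have h3 := hwju (by omega)
      rw [div_le_one h3]; nlinarith
  have hθun : ju = n → θu = 0 := fun h => by rw [hθud, if_pos h]

  clear hjld hjud hθld hθud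
  clear_value jl ju θl θu
  -- splitting lemma
  have hsplit : ∀ j, 1 ≤ j → j ≤ n → ∀ f : ℕ → ℝ,
      (∑ k ∈ Icc 1 (j-1), f k) + (∑ k ∈ Icc j m, f k) = ∑ k ∈ Icc 1 m, f k := by
    intro j hj1 hjn f
    rw [← Finset.sum_union]
    · congr 1
      ext x; simp only [mem_union, mem_Icc]; omega
    · rw [Finset.disjoint_left]
      intro x hx hx'
      simp only [mem_Icc] at hx hx'; omega
  -- lower bound : Xl ≤ X
  have hlow : A jl + (jl:ℝ) * (Y - W jl) ≤ X := by
    have e1 : X - (jl:ℝ) * Y = ∑ k ∈ Icc 1 m, ((k:ℝ) - jl) * (t k * w k) := by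
      rw [hXd, hYd, Finset.mul_sum, ← Finset.sum_sub_distrib]
      exact Finset.sum_congr rfl fun k _ => by ring
    have e2 : A jl - (jl:ℝ) * W jl = ∑ k ∈ Icc 1 (jl-1), ((k:ℝ) - jl) * w k := by
      simp only [hAd, hWd]
      rw [Finset.mul_sum, ← Finset.sum_sub_distrib]
      exact Finset.sum_congr rfl fun k _ => by ring
    have e3 : (∑ k ∈ Icc 1 m, ((k:ℝ) - jl) * (t k * w k))
        - ∑ k ∈ Icc 1 (jl-1), ((k:ℝ) - jl) * w k
        = (∑ k ∈ Icc 1 (jl-1), ((k:ℝ) - jl) * (t k * w k - w k))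
          + ∑ k ∈ Icc jl m, ((k:ℝ) - jl) * (t k * w k) := by
      rw [← hsplit jl hjl1 hjln (fun k => ((k:ℝ) - jl) * (t k * w k))]
      have : (∑ k ∈ Icc 1 (jl-1), ((k:ℝ) - jl) * (t k * w k))
          - ∑ k ∈ Icc 1 (jl-1), ((k:ℝ) - jl) * w k
          = ∑ k ∈ Icc 1 (jl-1), ((k:ℝ) - jl) * (t k * w k - w k) := by
        rw [← Finset.sum_sub_distrib]
        exact Finset.sum_congr rfl fun k _ => by ring
      linarith
    have n1 : 0 ≤ ∑ k ∈ Icc 1 (jl-1), ((k:ℝ) - jl) * (t k * w k - w k) := by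
      apply Finset.sum_nonneg
      intro k hk
      simp only [mem_Icc] at hk
      have hkm : k ∈ Icc 1 m := by simp only [mem_Icc]; omega
      have hc : (k:ℝ) ≤ jl := by exact_mod_cast Nat.le_of_lt (by omega)
      have hw' := hw k hkm; have ht' := ht1 k hkm
      have key := mul_nonneg (by linarith : (0:ℝ) ≤ (jl:ℝ) - k)
        (by nlinarith : (0:ℝ) ≤ w k - t k * w k)
      linarith [key]
    have n2 : 0 ≤ ∑ k ∈ Icc jl m, ((k:ℝ) - jl) * (t k * w k) := by
      apply Finset.sum_nonneg
      intro k hk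
      simp only [mem_Icc] at hk
      have hkm : k ∈ Icc 1 m := by simp only [mem_Icc]; omega
      have hc : (jl:ℝ) ≤ k := by exact_mod_cast hk.1
      have hw' := hw k hkm; have ht' := ht0 k hkm
      have key := mul_nonneg (by linarith : (0:ℝ) ≤ (k:ℝ) - jl)
        (mul_nonneg ht' hw')
      linarith [key]
    linarith
  -- upper bound : X ≤ Xh
  have hhigh : X ≤ T ju - (ju:ℝ) * (V ju - Y) := by
    have e1 : (ju:ℝ) * Y - X = ∑ k ∈ Icc 1 m, ((ju:ℝ) - k) * (t k * w k) := by
      rw [hXd, hYd, Finset.mul_sum, ← Finset.sum_sub_distrib]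
      exact Finset.sum_congr rfl fun k _ => by ring
    have e2 : T ju - (ju:ℝ) * V ju = ∑ k ∈ Icc ju m, ((k:ℝ) - ju) * w k := by
      simp only [hTd, hVd]
      rw [Finset.mul_sum, ← Finset.sum_sub_distrib]
      exact Finset.sum_congr rfl fun k _ => by ring
    have e3 : (∑ k ∈ Icc 1 m, ((ju:ℝ) - k) * (t k * w k))
        + ∑ k ∈ Icc ju m, ((k:ℝ) - ju) * w k
        = (∑ k ∈ Icc 1 (ju-1), ((ju:ℝ) - k) * (t k * w k))
          + ∑ k ∈ Icc ju m, (((ju:ℝ) - k) * (t k * w k) + ((k:ℝ) - ju) * w k) := by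
      rw [← hsplit ju hju1 hjun (fun k => ((ju:ℝ) - k) * (t k * w k)),
        Finset.sum_add_distrib]
      ring
    have n1 : 0 ≤ ∑ k ∈ Icc 1 (ju-1), ((ju:ℝ) - k) * (t k * w k) := by
      apply Finset.sum_nonneg
      intro k hk
      simp only [mem_Icc] at hk
      have hkm : k ∈ Icc 1 m := by simp only [mem_Icc]; omega
      have hc : (k:ℝ) ≤ ju := by exact_mod_cast Nat.le_of_lt (by omega)
      have hw' := hw k hkm; have ht' := ht0 k hkm
      have key := mul_nonneg (by linarith : (0:ℝ) ≤ (ju:ℝ) - k)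
        (mul_nonneg ht' hw')
      linarith [key]
    have n2 : 0 ≤ ∑ k ∈ Icc ju m, (((ju:ℝ) - k) * (t k * w k) + ((k:ℝ) - ju) * w k) := by
      apply Finset.sum_nonneg
      intro k hk
      simp only [mem_Icc] at hk
      have hkm : k ∈ Icc 1 m := by simp only [mem_Icc]; omega
      have hc : (ju:ℝ) ≤ k := by exact_mod_cast hk.1
      have hw' := hw k hkm; have ht' := ht1 k hkm
      have key := mul_nonneg (by linarith : (0:ℝ) ≤ (k:ℝ) - ju)
        (by nlinarith : (0:ℝ) ≤ w k - t k * w k)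
      linarith [key]
    linarith

  -- lambda
  set Xl : ℝ := A jl + (jl:ℝ) * (Y - W jl) with hXld
  set Xh : ℝ := T ju - (ju:ℝ) * (V ju - Y) with hXhd
  set lam : ℝ := if Xh = Xl then 1 else (Xh - X)/(Xh - Xl) with hlamd
  have hlam0 : 0 ≤ lam := by
    rw [hlamd]; split_ifs with h
    · norm_num
    · have : Xl < Xh := lt_of_le_of_ne (le_trans hlow hhigh) (Ne.symm h)
      exact div_nonneg (by linarith) (by linarith)
  have hlam1 : lam ≤ 1 := by
    rw [hlamd]; split_ifs with h
    · norm_num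
    · have : Xl < Xh := lt_of_le_of_ne (le_trans hlow hhigh) (Ne.symm h)
      rw [div_le_one (by linarith)]; linarith
  have hlamX : lam * Xl + (1 - lam) * Xh = X := by
    rw [hlamd]; split_ifs with h
    · have hXX : X = Xl := le_antisymm (h ▸ hhigh) hlow
      rw [hXX, h]; ring
    · have hne : Xh - Xl ≠ 0 := fun h0 => h (by linarith)
      field_simp
      ring
  clear hlamd
  clear_value lam
  -- the coefficients
  set βp : ℕ → ℝ := fun j =>
    (1 - lam) * ((if j = ju then (1 - θu) else 0) + (if j = ju + 1 then θu else 0)) with hβpd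
  set βm : ℕ → ℝ := fun j =>
    lam * ((if j = jl then (1 - θl) else 0) + (if j = jl + 1 then θl else 0)) with hβmd
  have hsump : ∀ F : ℕ → ℝ, ∑ j ∈ Icc 1 n, βp j * F j
      = (1 - lam) * ((1 - θu) * F ju + θu * F (ju + 1)) := by
    intro F
    rw [← sum_two_ite θu hju1 hjun hθun F, Finset.mul_sum]
    exact Finset.sum_congr rfl fun j _ => by rw [hβpd]; ring
  have hsumm : ∀ F : ℕ → ℝ, ∑ j ∈ Icc 1 n, βm j * F j
      = lam * ((1 - θl) * F jl + θl * F (jl + 1)) := by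
    intro F
    rw [← sum_two_ite θl hjl1 hjln hθln F, Finset.mul_sum]
    exact Finset.sum_congr rfl fun j _ => by rw [hβmd]; ring
  -- interpolation values
  have hAu : (1 - θl) * A jl + θl * A (jl + 1) = Xl := by
    rw [Asucc jl hjl1, hXld]
    calc (1 - θl) * A jl + θl * (A jl + (jl:ℝ) * w jl)
        = A jl + (jl:ℝ) * (θl * w jl) := by ring
      _ = A jl + (jl:ℝ) * (Y - W jl) := by rw [hθl_mul]
  have hWu : (1 - θl) * W jl + θl * W (jl + 1) = Y := by
    rw [Wsucc jl hjl1]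
    calc (1 - θl) * W jl + θl * (W jl + w jl)
        = W jl + θl * w jl := by ring
      _ = Y := by rw [hθl_mul]; ring
  have hTu : (1 - θu) * T ju + θu * T (ju + 1) = Xh := by
    by_cases h : ju = n
    · rw [hθun h, hXhd, h, hVn, hYn0 h]; ring
    · have hjm : ju ≤ m := by omega
      rw [hXhd, Tsucc ju hjm, ← hθu_mul]; ring
  have hVu : (1 - θu) * V ju + θu * V (ju + 1) = Y := by
    by_cases h : ju = n
    · rw [hθun h, h, hVn, hYn0 h]; ring
    · have hjm : ju ≤ m := by omega
      have hv := Vsucc ju hjm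
      linear_combination (-1 : ℝ) * hθu_mul - θu * hv
  -- conclude
  refine ⟨βp, βm, ?_, ?_, ?_, ?_⟩
  · intro j hj
    constructor
    · rw [hβpd]
      apply mul_nonneg (by linarith)
      split_ifs <;> simp <;> linarith
    · rw [hβmd]
      apply mul_nonneg hlam0
      split_ifs <;> simp <;> linarith
  · rw [Finset.sum_add_distrib]
    have h1 : ∑ j ∈ Icc 1 n, βp j = 1 - lam := by
      calc ∑ j ∈ Icc 1 n, βp j = ∑ j ∈ Icc 1 n, βp j * (fun _ => (1:ℝ)) j :=
            Finset.sum_congr rfl fun j _ => (mul_one _).symm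
        _ = (1 - lam) * ((1 - θu) * 1 + θu * 1) := hsump _
        _ = 1 - lam := by ring
    have h2 : ∑ j ∈ Icc 1 n, βm j = lam := by
      calc ∑ j ∈ Icc 1 n, βm j = ∑ j ∈ Icc 1 n, βm j * (fun _ => (1:ℝ)) j :=
            Finset.sum_congr rfl fun j _ => (mul_one _).symm
        _ = lam * ((1 - θl) * 1 + θl * 1) := hsumm _
        _ = lam := by ring
    rw [h1, h2]; ring
  · have hTp : ∀ j : ℕ, (∑ k ∈ Icc j m, (k:ℝ) * w k) = T j := fun j => rfl
    have hAp : ∀ j : ℕ, (∑ k ∈ Icc 1 (j-1), (k:ℝ) * w k) = A j := fun j => rfl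
    simp only [hTp, hAp]
    rw [hsump T, hsumm A, hTu, hAu]
    linarith [hlamX]
  · have hVp : ∀ j : ℕ, (∑ k ∈ Icc j m, w k) = V j := fun j => rfl
    have hWp : ∀ j : ℕ, (∑ k ∈ Icc 1 (j-1), w k) = W j := fun j => rfl
    simp only [hVp, hWp]
    rw [hsump V, hsumm W, hVu, hWu]
    ring


set_option maxHeartbeats 1000000 in
/-- Theorem (extreme points with unanimity): every symmetric unanimous voting rule is
reduced-form equivalent to a convex combination of u-qualified majority and
u-qualified anti-majority voting rules. -/
theorem unanimous_reduced_form_equivalent_convex_combination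
    (n : ℕ) (hn : 2 ≤ n) (π : ℝ) (hπ0 : 0 < π) (hπ1 : π < 1)
    (B : ℕ → ℝ) (hBnonneg : ∀ k ≤ n, 0 ≤ B k)
    (hBsum : ∑ k ∈ range (n + 1), B k = 1)
    (hBmean : ∑ k ∈ range (n + 1), (k : ℝ) * B k = n * π)
    (q : ℕ → ℝ) (hq : ∀ k ≤ n, 0 ≤ q k ∧ q k ≤ 1)
    (hq0 : q 0 = 0) (hqn : q n = 1)
    (Qa Qb : ℝ)
    (hQa : Qa = (1 / (n * π)) * ∑ k ∈ range (n + 1), (k : ℝ) * q k * B k)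
    (hQb : Qb = (1 / (n * (1 - π))) * ∑ k ∈ range (n + 1), ((n : ℝ) - k) * q k * B k) :
    ∃ βp βm : ℕ → ℝ,
      (∀ j ∈ Icc 1 n, 0 ≤ βp j ∧ 0 ≤ βm j) ∧
      (∑ j ∈ Icc 1 n, (βp j + βm j)) = 1 ∧
      Qa = (∑ j ∈ Icc 1 n,
              βp j * ((1 / (n * π)) * ∑ k ∈ Icc j n, (k : ℝ) * B k))
           + (∑ j ∈ Icc 1 n,
              βm j * ((1 / (n * π)) *
                ((∑ k ∈ Icc 1 (j - 1), (k : ℝ) * B k) + n * B n))) ∧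
      Qb = (∑ j ∈ Icc 1 n,
              βp j * ((1 / (n * (1 - π))) * ∑ k ∈ Icc j n, ((n : ℝ) - k) * B k))
           + (∑ j ∈ Icc 1 n,
              βm j * ((1 / (n * (1 - π))) * ∑ k ∈ Icc 1 (j - 1), ((n : ℝ) - k) * B k)) := by
  have hm : n - 1 + 1 = n := by omega
  obtain ⟨βp, βm, hnn, hsum1, heqA, heqB⟩ := core n hn B q
    (fun k hk => hBnonneg k (by simp only [mem_Icc] at hk; omega))
    (fun k hk => (hq k (by simp only [mem_Icc] at hk; omega)).1)
    (fun k hk => (hq k (by simp only [mem_Icc] at hk; omega)).2)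
  have hsplitp : ∑ j ∈ Icc 1 n, βp j + ∑ j ∈ Icc 1 n, βm j = 1 := by
    rw [← Finset.sum_add_distrib]; exact hsum1
  have hrange : ∀ f : ℕ → ℝ, ∑ k ∈ range (n+1), f k
      = f 0 + (∑ k ∈ Icc 1 (n-1), f k) + f n := by
    intro f
    rw [Finset.sum_range_succ]
    congr 1
    rw [show range n = insert 0 (Icc 1 (n-1)) from by
      ext x; simp only [Finset.mem_range, mem_insert, mem_Icc]; omega]
    rw [Finset.sum_insert (by simp only [mem_Icc]; omega)]
  have htrunc : ∀ (g : ℕ → ℝ) (j : ℕ), j ≤ n →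
      ∑ k ∈ Icc j n, g k = (∑ k ∈ Icc j (n-1), g k) + g n := by
    intro g j hj
    rw [show (Icc j n) = Icc j (n-1+1) from by rw [hm],
      Finset.sum_Icc_succ_top (by omega), hm]
  -- first (k-weighted) identity
  have E1 : (∑ j ∈ Icc 1 n, βp j * ∑ k ∈ Icc j n, (k:ℝ) * B k)
      + (∑ j ∈ Icc 1 n, βm j * ((∑ k ∈ Icc 1 (j-1), (k:ℝ) * B k) + (n:ℝ) * B n))
      = ∑ k ∈ range (n+1), (k:ℝ) * q k * B k := by
    have l1 : ∀ j ∈ Icc 1 n, βp j * ∑ k ∈ Icc j n, (k:ℝ) * B k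
        = βp j * ∑ k ∈ Icc j (n-1), (k:ℝ) * B k + βp j * ((n:ℝ) * B n) := by
      intro j hj
      rw [htrunc (fun k => (k:ℝ) * B k) j (by simp only [mem_Icc] at hj; omega)]
      ring
    have l2 : ∀ j ∈ Icc 1 n, βm j * ((∑ k ∈ Icc 1 (j-1), (k:ℝ) * B k) + (n:ℝ) * B n)
        = βm j * ∑ k ∈ Icc 1 (j-1), (k:ℝ) * B k + βm j * ((n:ℝ) * B n) :=
      fun j _ => by ring
    rw [Finset.sum_congr rfl l1, Finset.sum_congr rfl l2,
      Finset.sum_add_distrib, Finset.sum_add_distrib,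
      hrange (fun k => (k:ℝ) * q k * B k)]
    have l3 : ∑ j ∈ Icc 1 n, βp j * ((n:ℝ) * B n)
        + ∑ j ∈ Icc 1 n, βm j * ((n:ℝ) * B n) = (n:ℝ) * B n := by
      rw [← Finset.sum_mul, ← Finset.sum_mul, ← add_mul, hsplitp, one_mul]
    have l4 : ∑ k ∈ Icc 1 (n-1), (k:ℝ) * q k * B k
        = ∑ k ∈ Icc 1 (n-1), (k:ℝ) * (q k * B k) :=
      Finset.sum_congr rfl fun k _ => by ring
    rw [hqn]
    simp only [Nat.cast_zero, zero_mul]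
    linarith [heqA, l3, l4]
  -- second ((n-k)-weighted) identity
  have htr2 : ∀ j ∈ Icc 1 n, ∑ k ∈ Icc j n, ((n:ℝ) - k) * B k
      = (n:ℝ) * (∑ k ∈ Icc j (n-1), B k) - ∑ k ∈ Icc j (n-1), (k:ℝ) * B k := by
    intro j hj
    rw [htrunc (fun k => ((n:ℝ) - k) * B k) j (by simp only [mem_Icc] at hj; omega)]
    simp only [sub_self, zero_mul, add_zero]
    rw [Finset.mul_sum, ← Finset.sum_sub_distrib]
    exact Finset.sum_congr rfl fun k _ => by ring
  have hanti2 : ∀ j : ℕ, ∑ k ∈ Icc 1 (j-1), ((n:ℝ) - k) * B k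
      = (n:ℝ) * (∑ k ∈ Icc 1 (j-1), B k) - ∑ k ∈ Icc 1 (j-1), (k:ℝ) * B k := by
    intro j
    rw [Finset.mul_sum, ← Finset.sum_sub_distrib]
    exact Finset.sum_congr rfl fun k _ => by ring
  have target2 : ∑ k ∈ range (n+1), ((n:ℝ) - k) * q k * B k
      = (n:ℝ) * (∑ k ∈ Icc 1 (n-1), q k * B k)
        - ∑ k ∈ Icc 1 (n-1), (k:ℝ) * (q k * B k) := by
    rw [hrange (fun k => ((n:ℝ) - k) * q k * B k), hq0]
    simp only [sub_self, zero_mul, mul_zero, Nat.cast_zero, sub_zero, add_zero, zero_add]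
    rw [Finset.mul_sum, ← Finset.sum_sub_distrib]
    exact Finset.sum_congr rfl fun k _ => by ring
  have E2 : (∑ j ∈ Icc 1 n, βp j * ∑ k ∈ Icc j n, ((n:ℝ) - k) * B k)
      + (∑ j ∈ Icc 1 n, βm j * ∑ k ∈ Icc 1 (j-1), ((n:ℝ) - k) * B k)
      = ∑ k ∈ range (n+1), ((n:ℝ) - k) * q k * B k := by
    have p1 : ∀ j ∈ Icc 1 n, βp j * ∑ k ∈ Icc j n, ((n:ℝ) - k) * B k
        = (n:ℝ) * (βp j * ∑ k ∈ Icc j (n-1), B k)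
          - βp j * ∑ k ∈ Icc j (n-1), (k:ℝ) * B k := by
      intro j hj; rw [htr2 j hj]; ring
    have p2 : ∀ j ∈ Icc 1 n, βm j * ∑ k ∈ Icc 1 (j-1), ((n:ℝ) - k) * B k
        = (n:ℝ) * (βm j * ∑ k ∈ Icc 1 (j-1), B k)
          - βm j * ∑ k ∈ Icc 1 (j-1), (k:ℝ) * B k := by
      intro j hj; rw [hanti2 j]; ring
    rw [Finset.sum_congr rfl p1, Finset.sum_congr rfl p2,
      Finset.sum_sub_distrib, Finset.sum_sub_distrib,
      ← Finset.mul_sum, ← Finset.mul_sum, target2]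
    linear_combination (n:ℝ) * heqB - heqA
  refine ⟨βp, βm, hnn, hsum1, ?_, ?_⟩
  · rw [hQa, ← E1, mul_add, Finset.mul_sum, Finset.mul_sum]
    congr 1
    · exact Finset.sum_congr rfl fun j _ => by ring
    · exact Finset.sum_congr rfl fun j _ => by ring
  · rw [hQb, ← E2, mul_add, Finset.mul_sum, Finset.mul_sum]
    congr 1
    · exact Finset.sum_congr rfl fun j _ => by ring
    · exact Finset.sum_congr rfl fun j _ => by ring
end

section
/- Let n = 3, π = 1/2, and B(k) = C(3,k)/8 for k ∈ {0,1,2,3}. If q is a unanimous voting rule (q(0) = 0, q(3) = 1) whose interim allocation probabilities satisfy Q(a) = 1/2 and Q(b) = 1/2, then necessarily q(1) = 1 and q(2) = 0; in particular q is not monotone. -/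
open Finset

/-- Example 1: with `n = 3`, `π = 1/2` and the uniform independent prior
`B(k) = C(3,k)/8`, any unanimous voting rule with interim allocation probabilities
`Q(a) = Q(b) = 1/2` must have `q(1) = 1` and `q(2) = 0`; in particular it is not
monotone. -/
theorem obic_unanimous_not_strategy_proof_example
    (q : ℕ → ℝ) (hq : ∀ k ≤ 3, 0 ≤ q k ∧ q k ≤ 1)
    (hq0 : q 0 = 0) (hq3 : q 3 = 1)
    (hQa : (1 / (3 * (1 / 2 : ℝ))) *
      ∑ k ∈ range 4, (k : ℝ) * q k * ((Nat.choose 3 k : ℝ) / 8) = 1 / 2)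
    (hQb : (1 / (3 * (1 / 2 : ℝ))) *
      ∑ k ∈ range 4, ((3 : ℝ) - k) * q k * ((Nat.choose 3 k : ℝ) / 8) = 1 / 2) :
    q 1 = 1 ∧ q 2 = 0 ∧ ¬ (∀ k, 1 ≤ k → k ≤ 3 → q (k - 1) ≤ q k) := by
  simp [Finset.sum_range_succ, hq0, hq3] at hQa hQb
  norm_num at hQa hQb
  have h1 : q 1 = 1 := by linarith
  have h2 : q 2 = 0 := by linarith
  refine ⟨h1, h2, fun h => ?_⟩
  have := h 2 (by norm_num) (by norm_num)
  simp at this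
  rw [h1, h2] at this
  linarith
end

section
/- Suppose the prior is independent with parameter π. Then every unanimous voting rule is ordinally Bayesian incentive compatible if and only if for every j ∈ {1,...,n−1}: C(n−1, j−1) ≤ (π/(1−π))^{n−j} + (π/(1−π))^{1−j}. -/
/-!
Write `n = m + 1` and `bₖ = C(m,k) πᵏ (1-π)^(m-k)` (the Bernstein polynomial, i.e. the binomial
law of the other `m` voters). Since `k C(n,k) = n C(m,k-1)` and `(n-k) C(n,k) = n C(m,k)`, after
dividing by `nπ` resp. `n(1-π)` both OBIC inequalities become the same inequality
`∑ₖ bₖ (q(k+1) - q(k)) ≥ 0`. Summing by parts, its left side is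
`b_m - ∑_{k<m} (b_{k+1} - b_k) q(k+1)`, affine in `q(1), …, q(m) ∈ [0,1]`. The sequence `b`
increases up to its mode `p = ⌊nπ⌋` and decreases afterwards, so the worst rule sets `q = 1`
exactly on `1, …, p` (and at `n`), with value `b_0 + b_m - b_p`; testing the rules `q = 1` on
`1, …, j` shows that `b_j ≤ b_0 + b_m` is needed for every `j`. Dividing by `πʲ (1-π)^(m-j)` gives
the condition.
-/

open Finset

section

variable {R : Type*} [CommRing R]

theorem sum_range_mul_sub_by_parts {a q : ℕ → R} (hq : q 0 = 0) (m : ℕ) :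
    ∑ k ∈ range (m + 1), a k * (q (k + 1) - q k)
      = a m * q (m + 1) - ∑ k ∈ range m, (a (k + 1) - a k) * q (k + 1) := by
  induction m with
  | zero => simp [hq]
  | succ m ih => rw [sum_range_succ, ih, sum_range_succ]; ring

end

section

variable {R : Type*} [CommRing R] [PartialOrder R] [IsOrderedRing R]

def IsUnanimousRule (n : ℕ) (q : ℕ → R) : Prop :=
  (∀ k ≤ n, 0 ≤ q k ∧ q k ≤ 1) ∧ q 0 = 0 ∧ q n = 1

variable {a : ℕ → R} {m : ℕ}

theorem le_add_of_forall_sum_mul_sub_nonneg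
    (h : ∀ q, IsUnanimousRule (m + 1) q → 0 ≤ ∑ k ∈ range (m + 1), a k * (q (k + 1) - q k))
    {j : ℕ} (hj : j ≤ m) : a j ≤ a 0 + a m := by
  set q : ℕ → R := fun k => if 0 < k ∧ (k ≤ j ∨ m < k) then 1 else 0
  have hq : IsUnanimousRule (m + 1) q :=
    ⟨fun k _ => by simp only [q]; split_ifs <;> simp, by simp [q], by simp [q]⟩
  have hlow : ∑ k ∈ range j, (a (k + 1) - a k) * q (k + 1) = a j - a 0 := by
    rw [← sum_range_sub]
    refine sum_congr rfl fun k hk => ?_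
    rw [mem_range] at hk
    simp only [q, if_pos (show 0 < k + 1 ∧ (k + 1 ≤ j ∨ m < k + 1) by omega), mul_one]
  have hhigh : ∑ k ∈ Ico j m, (a (k + 1) - a k) * q (k + 1) = 0 := by
    refine sum_eq_zero fun k hk => ?_
    rw [mem_Ico] at hk
    simp only [q, if_neg (show ¬(0 < k + 1 ∧ (k + 1 ≤ j ∨ m < k + 1)) by omega), mul_zero]
  have := h q hq
  rw [sum_range_mul_sub_by_parts hq.2.1, ← sum_range_add_sum_Ico _ hj, hlow, hhigh,
    hq.2.2] at this
  linear_combination this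

theorem sum_mul_sub_nonneg_of_unimodal {p : ℕ} (hpm : p ≤ m)
    (hmono : MonotoneOn a (Set.Iic p)) (hanti : AntitoneOn a (Set.Icc p m))
    (hpeak : a p ≤ a 0 + a m) {q : ℕ → R}
    (hq : IsUnanimousRule (m + 1) q) :
    0 ≤ ∑ k ∈ range (m + 1), a k * (q (k + 1) - q k) := by
  obtain ⟨hq01, hq0, hqm⟩ := hq
  have hlow : ∑ k ∈ range p, (a (k + 1) - a k) * q (k + 1) ≤ a p - a 0 := by
    rw [← sum_range_sub]
    refine sum_le_sum fun k hk => ?_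
    simp only [mem_range] at hk
    have hinc : a k ≤ a (k + 1) :=
      hmono (Set.mem_Iic.2 (by omega)) (Set.mem_Iic.2 (by omega)) (by omega)
    exact mul_le_of_le_one_right (sub_nonneg.2 hinc) (hq01 (k + 1) (by omega)).2
  have hhigh : ∑ k ∈ Ico p m, (a (k + 1) - a k) * q (k + 1) ≤ 0 := by
    refine sum_nonpos fun k hk => ?_
    simp only [mem_Ico] at hk
    have hdec : a (k + 1) ≤ a k :=
      hanti (Set.mem_Icc.2 (by omega)) (Set.mem_Icc.2 (by omega)) (by omega)
    exact mul_nonpos_of_nonpos_of_nonneg (sub_nonpos.2 hdec) (hq01 (k + 1) (by omega)).1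
  rw [sum_range_mul_sub_by_parts hq0, ← sum_range_add_sum_Ico _ hpm, hqm]
  linear_combination hpeak + hlow + hhigh

theorem forall_sum_mul_sub_nonneg_iff_of_unimodal {p : ℕ} (hpm : p ≤ m)
    (hmono : MonotoneOn a (Set.Iic p)) (hanti : AntitoneOn a (Set.Icc p m)) :
    (∀ q, IsUnanimousRule (m + 1) q → 0 ≤ ∑ k ∈ range (m + 1), a k * (q (k + 1) - q k)) ↔
      ∀ j ≤ m, a j ≤ a 0 + a m :=
  ⟨fun h _ hj => le_add_of_forall_sum_mul_sub_nonneg h hj,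
    fun h _ hq => sum_mul_sub_nonneg_of_unimodal hpm hmono hanti (h p hpm) hq⟩

end

namespace bernsteinPolynomial

section

variable {R : Type*} [CommRing R]

theorem eval_eq (n ν : ℕ) (x : R) :
    (bernsteinPolynomial R n ν).eval x = n.choose ν * x ^ ν * (1 - x) ^ (n - ν) := by
  simp [bernsteinPolynomial]

theorem succ_mul_eval_succ (m k : ℕ) (x : R) :
    ((k + 1 : ℕ) : R) * (bernsteinPolynomial R (m + 1) (k + 1)).eval x
      = ((m + 1 : ℕ) : R) * x * (bernsteinPolynomial R m k).eval x := by
  have h := congrArg (Nat.cast (R := R)) (Nat.add_one_mul_choose_eq m k)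
  push_cast at h
  simp only [eval_eq, Nat.add_sub_add_right]
  push_cast
  linear_combination (-(x ^ (k + 1) * (1 - x) ^ (m - k))) * h

theorem sub_mul_eval {m k : ℕ} (hk : k ≤ m) (x : R) :
    (((m + 1 : ℕ) : R) - k) * (bernsteinPolynomial R (m + 1) k).eval x
      = ((m + 1 : ℕ) : R) * (1 - x) * (bernsteinPolynomial R m k).eval x := by
  have h := congrArg (Nat.cast (R := R)) (Nat.choose_mul_succ_eq m k)
  push_cast [Nat.cast_sub (by omega : k ≤ m + 1)] at h
  simp only [eval_eq, show m + 1 - k = m - k + 1 by omega, pow_succ]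
  push_cast
  linear_combination (-(x ^ k * (1 - x) ^ (m - k) * (1 - x))) * h

theorem succ_mul_eval_succ_sub_eval {m k : ℕ} (hk : k < m) (x : R) :
    ((k : R) + 1) *
        ((bernsteinPolynomial R m (k + 1)).eval x - (bernsteinPolynomial R m k).eval x)
      = m.choose k * x ^ k * (1 - x) ^ (m - (k + 1)) * ((m + 1) * x - (k + 1)) := by
  have h := congrArg (Nat.cast (R := R)) (Nat.choose_succ_right_eq m k)
  push_cast [Nat.cast_sub hk.le] at h
  simp only [eval_eq, show m - k = m - (k + 1) + 1 by omega, pow_succ]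
  linear_combination (x ^ k * x * (1 - x) ^ (m - (k + 1))) * h

variable (q : ℕ → R) (m : ℕ) (x : R)

theorem sum_mul_mul_eval_eq :
    ∑ k ∈ range (m + 1 + 1), (k : R) * q k * (bernsteinPolynomial R (m + 1) k).eval x
      = ((m + 1 : ℕ) : R) * x *
          ∑ k ∈ range (m + 1), (bernsteinPolynomial R m k).eval x * q (k + 1) := by
  rw [sum_range_succ', mul_sum]
  simp only [Nat.cast_zero, zero_mul, add_zero]
  refine sum_congr rfl fun k _ => ?_
  linear_combination q (k + 1) * succ_mul_eval_succ m k x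

theorem sum_Icc_mul_mul_eval_eq :
    ∑ k ∈ Icc 1 (m + 1), (k : R) * q (k - 1) * (bernsteinPolynomial R (m + 1) k).eval x
      = ((m + 1 : ℕ) : R) * x *
          ∑ k ∈ range (m + 1), (bernsteinPolynomial R m k).eval x * q k := by
  rw [← Ico_add_one_right_eq_Icc, sum_Ico_eq_sum_range, mul_sum]
  refine sum_congr rfl fun k _ => ?_
  rw [add_comm 1 k, Nat.add_sub_cancel]
  linear_combination q k * succ_mul_eval_succ m k x

theorem sum_sub_mul_succ_mul_eval_eq :
    ∑ k ∈ range (m + 1),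
        (((m + 1 : ℕ) : R) - k) * q (k + 1) * (bernsteinPolynomial R (m + 1) k).eval x
      = ((m + 1 : ℕ) : R) * (1 - x) *
          ∑ k ∈ range (m + 1), (bernsteinPolynomial R m k).eval x * q (k + 1) := by
  rw [mul_sum]
  refine sum_congr rfl fun k hk => ?_
  linear_combination q (k + 1) * sub_mul_eval (Nat.lt_succ_iff.1 (mem_range.1 hk)) x

theorem sum_sub_mul_mul_eval_eq :
    ∑ k ∈ range (m + 1 + 1),
        (((m + 1 : ℕ) : R) - k) * q k * (bernsteinPolynomial R (m + 1) k).eval x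
      = ((m + 1 : ℕ) : R) * (1 - x) *
          ∑ k ∈ range (m + 1), (bernsteinPolynomial R m k).eval x * q k := by
  rw [sum_range_succ, sub_self, zero_mul, zero_mul, add_zero, mul_sum]
  refine sum_congr rfl fun k hk => ?_
  linear_combination q k * sub_mul_eval (Nat.lt_succ_iff.1 (mem_range.1 hk)) x

end

theorem eval_unimodal (m : ℕ) {x : ℝ} (hx0 : 0 ≤ x) (hx1 : x < 1) :
    ∃ p ≤ m, MonotoneOn (fun k => (bernsteinPolynomial ℝ m k).eval x) (Set.Iic p) ∧
      AntitoneOn (fun k => (bernsteinPolynomial ℝ m k).eval x) (Set.Icc p m) := by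
  have hnx : (0 : ℝ) ≤ (m + 1) * x := by positivity
  have hfactor : ∀ k, (0 : ℝ) ≤ m.choose k * x ^ k * (1 - x) ^ (m - (k + 1)) := fun k => by
    have : 0 ≤ 1 - x := by linarith
    positivity
  have hpm : ⌊(m + 1) * x⌋₊ ≤ m := by
    rw [← Nat.lt_add_one_iff, Nat.floor_lt hnx]
    push_cast
    exact mul_lt_of_lt_one_right (by positivity) hx1
  refine ⟨⌊(m + 1) * x⌋₊, hpm, monotoneOn_of_le_add_one Set.ordConnected_Iic ?_,
    antitoneOn_of_add_one_le Set.ordConnected_Icc ?_⟩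
  · rintro k - - hkp
    have hkm : k < m := by simp only [Set.mem_Iic] at hkp; omega
    have hk1 : (k : ℝ) + 1 ≤ (m + 1) * x := by
      exact_mod_cast (Nat.le_floor_iff hnx).1 hkp
    refine sub_nonneg.1 (nonneg_of_mul_nonneg_right (a := (k : ℝ) + 1) ?_ (by positivity))
    rw [succ_mul_eval_succ_sub_eval hkm]
    exact mul_nonneg (hfactor k) (sub_nonneg.2 hk1)
  · rintro k - ⟨hpk, -⟩ ⟨-, hkm⟩
    have hk1 : (m + 1) * x < (k : ℝ) + 1 :=
      (Nat.lt_floor_add_one _).trans_le (by exact_mod_cast Nat.add_le_add_right hpk 1)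
    refine sub_nonpos.1 (nonpos_of_mul_nonpos_right (a := (k : ℝ) + 1) ?_ (by positivity))
    rw [succ_mul_eval_succ_sub_eval (by omega)]
    exact mul_nonpos_of_nonneg_of_nonpos (hfactor k) (sub_nonpos.2 hk1.le)

theorem eval_le_add_iff {x : ℝ} (hx0 : 0 < x) (hx1 : x < 1) {m k : ℕ} (hk : k ≤ m) :
    (bernsteinPolynomial ℝ m k).eval x
        ≤ (bernsteinPolynomial ℝ m 0).eval x + (bernsteinPolynomial ℝ m m).eval x ↔
      (m.choose k : ℝ) ≤ (x / (1 - x)) ^ ((m : ℤ) - k) + (x / (1 - x)) ^ (-(k : ℤ)) := by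
  have hy : 0 < 1 - x := by linarith
  have hsplit : ∀ y : ℝ, y ^ m = y ^ k * y ^ (m - k) := fun y => by
    rw [← pow_add, Nat.add_sub_cancel' hk]
  have h0 : (bernsteinPolynomial ℝ m 0).eval x
      = (x / (1 - x)) ^ (-(k : ℤ)) * (x ^ k * (1 - x) ^ (m - k)) := by
    rw [eval_eq, zpow_neg, zpow_natCast, div_pow, Nat.choose_zero_right, Nat.sub_zero, hsplit]
    field_simp
    simp
  have hm : (bernsteinPolynomial ℝ m m).eval x
      = (x / (1 - x)) ^ ((m : ℤ) - k) * (x ^ k * (1 - x) ^ (m - k)) := by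
    rw [eval_eq, show (m : ℤ) - k = (m - k : ℕ) by omega, zpow_natCast, div_pow, Nat.choose_self,
      Nat.sub_self, hsplit]
    field_simp
    simp
  rw [h0, hm, ← add_mul, eval_eq, mul_assoc, add_comm ((x / (1 - x)) ^ (-(k : ℤ)))]
  exact mul_le_mul_iff_left₀ (by positivity)

theorem forall_eval_le_add_iff {x : ℝ} (hx0 : 0 < x) (hx1 : x < 1) (m : ℕ) :
    (∀ k ≤ m, (bernsteinPolynomial ℝ m k).eval x
        ≤ (bernsteinPolynomial ℝ m 0).eval x + (bernsteinPolynomial ℝ m m).eval x) ↔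
      ∀ j : ℕ, 1 ≤ j → j ≤ m →
        (m.choose (j - 1) : ℝ)
          ≤ (x / (1 - x)) ^ ((m : ℤ) + 1 - j) + (x / (1 - x)) ^ (1 - (j : ℤ)) := by
  constructor
  · intro h j hj1 hjm
    obtain ⟨k, rfl⟩ := Nat.exists_eq_add_of_le' hj1
    have := (eval_le_add_iff hx0 hx1 (by omega : k ≤ m)).1 (h k (by omega))
    convert this using 3 <;> push_cast <;> ring
  · intro h k hk
    rcases hk.lt_or_eq with hk | rfl
    · rw [eval_le_add_iff hx0 hx1 hk.le]
      convert h (k + 1) (by omega) hk using 3 <;> push_cast <;> ring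
    · refine le_add_of_nonneg_left ?_
      rw [eval_eq]
      have : 0 ≤ 1 - x := by linarith
      positivity

end bernsteinPolynomial

open bernsteinPolynomial

theorem obic_iff_sum_mul_sub_nonneg {R : Type*} [Field R] [LinearOrder R]
    [IsStrictOrderedRing R] {m : ℕ} {π : R} (hπ0 : π ≠ 0) (hπ1 : 1 - π ≠ 0) (q : ℕ → R) :
    ((1 / ((m + 1 : ℕ) * π)) * ∑ k ∈ range (m + 1 + 1),
          (k : R) * q k * (bernsteinPolynomial R (m + 1) k).eval π
        ≥ (1 / ((m + 1 : ℕ) * π)) * ∑ k ∈ Icc 1 (m + 1),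
          (k : R) * q (k - 1) * (bernsteinPolynomial R (m + 1) k).eval π) ∧
      ((1 / ((m + 1 : ℕ) * (1 - π))) * ∑ k ∈ range (m + 1),
          (((m + 1 : ℕ) : R) - k) * q (k + 1) * (bernsteinPolynomial R (m + 1) k).eval π
        ≥ (1 / ((m + 1 : ℕ) * (1 - π))) * ∑ k ∈ range (m + 1 + 1),
          (((m + 1 : ℕ) : R) - k) * q k * (bernsteinPolynomial R (m + 1) k).eval π) ↔
      0 ≤ ∑ k ∈ range (m + 1), (bernsteinPolynomial R m k).eval π * (q (k + 1) - q k) := by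
  have hn : ((m + 1 : ℕ) : R) ≠ 0 := Nat.cast_ne_zero.2 m.succ_ne_zero
  rw [sum_mul_mul_eval_eq, sum_Icc_mul_mul_eval_eq, sum_sub_mul_succ_mul_eval_eq,
    sum_sub_mul_mul_eval_eq, one_div, one_div, inv_mul_cancel_left₀ (mul_ne_zero hn hπ0),
    inv_mul_cancel_left₀ (mul_ne_zero hn hπ0), inv_mul_cancel_left₀ (mul_ne_zero hn hπ1),
    inv_mul_cancel_left₀ (mul_ne_zero hn hπ1), and_self]
  simp only [ge_iff_le, mul_sub, sum_sub_distrib, sub_nonneg]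

theorem all_unanimous_obic_iff_independent_prior_condition_general
    (n : ℕ) (π : ℝ) (hπ0 : 0 < π) (hπ1 : π < 1)
    (B : ℕ → ℝ)
    (hB : ∀ k, B k = (n.choose k : ℝ) * π ^ k * (1 - π) ^ (n - k)) :
    (∀ q : ℕ → ℝ, (∀ k ≤ n, 0 ≤ q k ∧ q k ≤ 1) → q 0 = 0 → q n = 1 →
      ((1 / (n * π)) * ∑ k ∈ range (n + 1), (k : ℝ) * q k * B k
          ≥ (1 / (n * π)) * ∑ k ∈ Icc 1 n, (k : ℝ) * q (k - 1) * B k) ∧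
      ((1 / (n * (1 - π))) * ∑ k ∈ range n, ((n : ℝ) - k) * q (k + 1) * B k
          ≥ (1 / (n * (1 - π))) * ∑ k ∈ range (n + 1), ((n : ℝ) - k) * q k * B k))
    ↔
    (∀ j : ℕ, 1 ≤ j → j ≤ n - 1 →
      ((n - 1).choose (j - 1) : ℝ)
        ≤ (π / (1 - π)) ^ ((n : ℤ) - (j : ℤ)) + (π / (1 - π)) ^ ((1 : ℤ) - (j : ℤ))) := by
  obtain _ | m := n
  · exact iff_of_true (fun q _ h0 h1 => absurd (h0.symm.trans h1) zero_ne_one)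
      fun _ _ _ => by omega
  obtain rfl : B = fun k => (bernsteinPolynomial ℝ (m + 1) k).eval π :=
    funext fun k => by rw [hB, bernsteinPolynomial.eval_eq]
  obtain ⟨p, hpm, hmono, hanti⟩ := eval_unimodal m hπ0.le hπ1
  calc _ ↔ ∀ q, IsUnanimousRule (m + 1) q →
          0 ≤ ∑ k ∈ range (m + 1), (bernsteinPolynomial ℝ m k).eval π * (q (k + 1) - q k) := by
        simp only [IsUnanimousRule, and_imp,
          obic_iff_sum_mul_sub_nonneg hπ0.ne' (sub_ne_zero.2 hπ1.ne')]
    _ ↔ _ := forall_sum_mul_sub_nonneg_iff_of_unimodal hpm hmono hanti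
    _ ↔ _ := by
        rw [forall_eval_le_add_iff hπ0 hπ1]
        simp only [Nat.add_sub_cancel, Nat.cast_succ]

/-- Proposition 2, independent prior case: with `B(k) = C(n,k)·π^k·(1−π)^{n−k}`, every
unanimous voting rule is OBIC iff
`C(n−1,j−1) ≤ (π/(1−π))^{n−j} + (π/(1−π))^{1−j}` for every `j ∈ {1,…,n−1}`. -/
theorem all_unanimous_obic_iff_independent_prior_condition
    (n : ℕ) (hn : 2 ≤ n) (π : ℝ) (hπ0 : 0 < π) (hπ1 : π < 1)
    (B : ℕ → ℝ)
    (hB : ∀ k, B k = (n.choose k : ℝ) * π ^ k * (1 - π) ^ (n - k)) :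
    (∀ q : ℕ → ℝ, (∀ k ≤ n, 0 ≤ q k ∧ q k ≤ 1) → q 0 = 0 → q n = 1 →
      ((1 / (n * π)) * ∑ k ∈ range (n + 1), (k : ℝ) * q k * B k
          ≥ (1 / (n * π)) * ∑ k ∈ Icc 1 n, (k : ℝ) * q (k - 1) * B k) ∧
      ((1 / (n * (1 - π))) * ∑ k ∈ range n, ((n : ℝ) - k) * q (k + 1) * B k
          ≥ (1 / (n * (1 - π))) * ∑ k ∈ range (n + 1), ((n : ℝ) - k) * q k * B k))
    ↔
    (∀ j : ℕ, 1 ≤ j → j ≤ n - 1 →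
      ((n - 1).choose (j - 1) : ℝ)
        ≤ (π / (1 - π)) ^ ((n : ℤ) - (j : ℤ)) + (π / (1 - π)) ^ ((1 : ℤ) - (j : ℤ))) :=
  all_unanimous_obic_iff_independent_prior_condition_general n π hπ0 hπ1 B hB
end

section
/- Let n = 3 and let the prior be independent with parameter π ∈ (0,1), i.e., B(k) = C(3,k)·π^k·(1−π)^{3−k}. Then every unanimous voting rule q (q(0) = 0, q(3) = 1) has interim allocation probabilities satisfying Q(a) ≥ Q(b); that is, every unanimous symmetric voting rule is ordinally Bayesian incentive compatible. -/
open Finset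

/-- Corollary: with `n = 3` and an independent prior with parameter `π ∈ (0,1)`, every
unanimous voting rule has interim allocation probabilities satisfying `Q(a) ≥ Q(b)`,
i.e., every unanimous symmetric voting rule is OBIC. -/
theorem unanimous_obic_three_agents
    (π : ℝ) (hπ0 : 0 < π) (hπ1 : π < 1)
    (B : ℕ → ℝ)
    (hB : ∀ k, B k = (Nat.choose 3 k : ℝ) * π ^ k * (1 - π) ^ (3 - k))
    (q : ℕ → ℝ) (hq : ∀ k ≤ 3, 0 ≤ q k ∧ q k ≤ 1)
    (hq0 : q 0 = 0) (hq3 : q 3 = 1) :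
    (1 / (3 * π)) * ∑ k ∈ range 4, (k : ℝ) * q k * B k
      ≥ (1 / (3 * (1 - π))) * ∑ k ∈ range 4, ((3 : ℝ) - k) * q k * B k := by
  obtain ⟨h10, h11⟩ := hq 1 (by norm_num)
  obtain ⟨h20, h21⟩ := hq 2 (by norm_num)
  have hπ1' : 0 < 1 - π := by linarith
  rw [ge_iff_le, one_div, one_div, inv_mul_eq_div, inv_mul_eq_div,
    div_le_div_iff₀ (by positivity) (by positivity)]
  simp only [Finset.sum_range_succ, hB, hq0, hq3]
  norm_num
  have e1 : (0:ℝ) ≤ q 1 * q 2 * (π * (1 - π)) * (1 - π)^2 := by positivity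
  have e2 : (0:ℝ) ≤ q 1 * (1 - q 2) * (π * (1 - π)) * (1 - 2*π)^2 := by
    have : 0 ≤ 1 - q 2 := by linarith
    positivity
  have e3 : (0:ℝ) ≤ (1 - q 1) * q 2 * (π * (1 - π)) * (2 * π * (1 - π)) := by
    have : 0 ≤ 1 - q 1 := by linarith
    positivity
  have e4 : (0:ℝ) ≤ (1 - q 1) * (1 - q 2) * (π * (1 - π)) * π^2 := by
    have h1 : 0 ≤ 1 - q 1 := by linarith
    have h2 : 0 ≤ 1 - q 2 := by linarith
    positivity
  nlinarith [e1, e2, e3, e4]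
end

section
/- Fix π ∈ (0,1). For every ε > 0 there exists n₀ such that for every n > n₀: every pair (Qa, Qb) that is reduced form implementable in the n-agent economy with the independent prior with parameter π satisfies |Qa − Qb| < ε. -/
open Finset

lemma aux0 (n : ℕ) (x y : ℝ) :
    ∑ k ∈ range (n+1), (n.choose k : ℝ) * x^k * y^(n-k) = (x+y)^n := by
  rw [add_pow]
  exact Finset.sum_congr rfl fun k _ => by ring

lemma keyid (n i : ℕ) : ((i:ℝ)+1) * ((n+1).choose (i+1) : ℝ) = ((n:ℝ)+1) * (n.choose i : ℝ) := by
  have h := Nat.add_one_mul_choose_eq n i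
  have h2 : ((Nat.succ n * n.choose i : ℕ) : ℝ) = (((n+1).choose (i+1) * (i+1) : ℕ) : ℝ) := by
    rw [h]
  push_cast at h2
  linarith

lemma aux1 (n : ℕ) (x y : ℝ) :
    ∑ k ∈ range (n+1+1), (k:ℝ) * ((n+1).choose k : ℝ) * x^k * y^(n+1-k)
      = ((n:ℝ)+1) * x * (x+y)^n := by
  rw [Finset.sum_range_succ']
  simp only [Nat.cast_zero, zero_mul, add_zero]
  rw [← aux0 n x y, Finset.mul_sum]
  refine Finset.sum_congr rfl fun i hi => ?_
  push_cast
  rw [keyid n i]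
  ring

lemma aux2 (n : ℕ) (x y : ℝ) :
    ∑ k ∈ range (n+2+1), (k:ℝ) * ((k:ℝ)-1) * ((n+2).choose k : ℝ) * x^k * y^(n+2-k)
      = ((n:ℝ)+2) * ((n:ℝ)+1) * x^2 * (x+y)^n := by
  rw [Finset.sum_range_succ']
  simp only [Nat.cast_zero, zero_mul, add_zero]
  have step : ∀ i ∈ range (n+2), ((i+1:ℕ):ℝ) * (((i+1:ℕ):ℝ)-1) * ((n+2).choose (i+1) : ℝ) * x^(i+1) * y^(n+2-(i+1))
      = ((n:ℝ)+2) * x * ((i:ℝ) * ((n+1).choose i : ℝ) * x^i * y^(n+1-i)) := by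
    intro i hi
    have h1 : n + 2 - (i+1) = n + 1 - i := by omega
    have h2 := keyid (n+1) i
    simp only [show n+1+1 = n+2 from rfl] at h2
    push_cast
    have e : ((i:ℝ) + 1) * ((i:ℝ) + 1 - 1) * ((n+2).choose (i+1) : ℝ) * x^(i+1) * y^(n+1-i)
        = (i:ℝ) * (((i:ℝ)+1) * ((n+2).choose (i+1) : ℝ)) * x^(i+1) * y^(n+1-i) := by ring
    push_cast at h2
    rw [e, h2]
    ring
  rw [Finset.sum_congr rfl step, ← Finset.mul_sum, aux1 n x y]
  ring

lemma var_binom (m : ℕ) (p : ℝ) :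
    ∑ k ∈ range (m+2+1), ((k:ℝ) - ((m:ℝ)+2)*p)^2 * (((m+2).choose k : ℝ) * p^k * (1-p)^(m+2-k))
      = ((m:ℝ)+2)*p*(1-p) := by
  have h0 := aux0 (m+2) p (1-p)
  have h1 := aux1 (m+1) p (1-p)
  have h2 := aux2 m p (1-p)
  have hs : p + (1-p) = 1 := by ring
  rw [hs, one_pow] at h0 h1 h2
  simp only [show m+1+1 = m+2 from rfl] at h1
  push_cast at h1
  have expand : ∀ k ∈ range (m+2+1),
      ((k:ℝ) - ((m:ℝ)+2)*p)^2 * (((m+2).choose k : ℝ) * p^k * (1-p)^(m+2-k))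
      = ((k:ℝ)*((k:ℝ)-1)*((m+2).choose k : ℝ)*p^k*(1-p)^(m+2-k))
        + (1 - 2*((m:ℝ)+2)*p) * ((k:ℝ)*((m+2).choose k : ℝ)*p^k*(1-p)^(m+2-k))
        + (((m:ℝ)+2)*p)^2 * (((m+2).choose k : ℝ)*p^k*(1-p)^(m+2-k)) := fun k _ => by ring
  rw [Finset.sum_congr rfl expand, Finset.sum_add_distrib, Finset.sum_add_distrib,
    ← Finset.mul_sum, ← Finset.mul_sum, h2, h0, h1]
  ring



/-- Proposition 3: for a fixed `π ∈ (0,1)` and the independent prior, in large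
economies every reduced form implementable pair `(Qa, Qb)` satisfies `|Qa − Qb| < ε`. -/
theorem large_economy_fixed_pi
    (π : ℝ) (hπ0 : 0 < π) (hπ1 : π < 1) :
    ∀ ε > (0 : ℝ), ∃ n₀ : ℕ, ∀ n : ℕ, n > n₀ →
      ∀ Qa Qb : ℝ,
        (∃ q : ℕ → ℝ, (∀ k ≤ n, 0 ≤ q k ∧ q k ≤ 1) ∧
          (1 / (n * π)) * ∑ k ∈ range (n + 1),
            (k : ℝ) * q k * ((n.choose k : ℝ) * π ^ k * (1 - π) ^ (n - k)) = Qa ∧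
          (1 / (n * (1 - π))) * ∑ k ∈ range (n + 1),
            ((n : ℝ) - k) * q k * ((n.choose k : ℝ) * π ^ k * (1 - π) ^ (n - k)) = Qb) →
        |Qa - Qb| < ε := by
  intro ε hε
  have h1π : 0 < 1 - π := by linarith
  refine ⟨max 1 ⌈1/(ε^2*π*(1-π))⌉₊, ?_⟩
  intro n hn Qa Qb ⟨q, hq, hQa, hQb⟩
  have hn2 : 2 ≤ n := by
    have := le_max_left 1 ⌈1/(ε^2*π*(1-π))⌉₊; omega
  obtain ⟨m, rfl⟩ : ∃ m, n = m + 2 := ⟨n - 2, by omega⟩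
  set N : ℝ := ((m+2 : ℕ) : ℝ) with hN
  have hN2 : N = (m:ℝ) + 2 := by push_cast [hN]; ring
  have hNpos : 0 < N := by rw [hN2]; positivity
  set V : ℝ := N * π * (1-π) with hV
  have hVpos : 0 < V := by positivity
  set B : ℕ → ℝ := fun k => (((m+2).choose k : ℕ) : ℝ) * π ^ k * (1 - π) ^ (m + 2 - k) with hB
  have hBnn : ∀ k, 0 ≤ B k := fun k => by
    rw [hB]; positivity
  -- key identity
  have key : Qa - Qb = ∑ k ∈ range (m+2+1), q k * B k * (((k:ℝ) - N*π) / V) := by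
    rw [← hQa, ← hQb, Finset.mul_sum, Finset.mul_sum, ← Finset.sum_sub_distrib]
    refine Finset.sum_congr rfl fun k hk => ?_
    rw [hB, hV, hN]
    have hπ' : (π:ℝ) ≠ 0 := ne_of_gt hπ0
    have h1π' : (1-π:ℝ) ≠ 0 := ne_of_gt h1π
    have hN' : ((m+2:ℕ):ℝ) ≠ 0 := by positivity
    field_simp
    ring
  have hSum1 : ∑ k ∈ range (m+2+1), B k = 1 := by
    have := aux0 (m+2) π (1-π)
    rw [show π + (1-π) = 1 from by ring, one_pow] at this
    simpa [hB] using this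
  have hVar : ∑ k ∈ range (m+2+1), ((k:ℝ) - N*π)^2 * B k = V := by
    have := var_binom m π
    rw [hV, hN2, hB]
    simpa using this
  set T : ℝ := ∑ k ∈ range (m+2+1), B k * |(k:ℝ) - N*π| with hT
  have hT0 : 0 ≤ T := Finset.sum_nonneg fun k _ => by positivity
  have hTsq : T^2 ≤ V := by
    have cs := Finset.sum_mul_sq_le_sq_mul_sq (range (m+2+1))
      (fun k => Real.sqrt (B k)) (fun k => Real.sqrt (B k) * |(k:ℝ) - N*π|)
    have e1 : ∑ k ∈ range (m+2+1), Real.sqrt (B k) * (Real.sqrt (B k) * |(k:ℝ) - N*π|) = T := by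
      refine Finset.sum_congr rfl fun k _ => ?_
      rw [← mul_assoc, Real.mul_self_sqrt (hBnn k)]
    have e2 : ∑ k ∈ range (m+2+1), Real.sqrt (B k) ^ 2 = 1 := by
      rw [← hSum1]
      exact Finset.sum_congr rfl fun k _ => Real.sq_sqrt (hBnn k)
    have e3 : ∑ k ∈ range (m+2+1), (Real.sqrt (B k) * |(k:ℝ) - N*π|) ^ 2 = V := by
      rw [← hVar]
      refine Finset.sum_congr rfl fun k _ => ?_
      rw [mul_pow, Real.sq_sqrt (hBnn k), sq_abs]
      ring
    rw [e1, e2, e3, one_mul] at cs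
    exact cs
  have hTle : T ≤ Real.sqrt V := by
    have := Real.sqrt_le_sqrt hTsq
    rwa [Real.sqrt_sq hT0] at this
  have habs : |Qa - Qb| ≤ T / V := by
    rw [key, hT, Finset.sum_div]
    refine le_trans (Finset.abs_sum_le_sum_abs _ _) (Finset.sum_le_sum fun k hk => ?_)
    have hk' : k ≤ m+2 := by
      have := Finset.mem_range.mp hk; omega
    obtain ⟨hq0, hq1⟩ := hq k hk'
    have e : |q k * B k * (((k:ℝ) - N*π) / V)| = q k * (B k * |(k:ℝ) - N*π| / V) := by
      rw [abs_mul, abs_mul, abs_of_nonneg hq0, abs_of_nonneg (hBnn k), abs_div,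
        abs_of_pos hVpos]
      ring
    rw [e]
    exact mul_le_of_le_one_left (by positivity) hq1
  have hVlarge : 1/ε^2 < V := by
    have h1 : 1/(ε^2*π*(1-π)) ≤ (⌈1/(ε^2*π*(1-π))⌉₊ : ℝ) := Nat.le_ceil _
    have h2 : (⌈1/(ε^2*π*(1-π))⌉₊ : ℝ) < N := by
      rw [hN]
      exact_mod_cast lt_of_le_of_lt (Nat.le_max_right 1 _) hn
    have h3 : 1/(ε^2*π*(1-π)) < N := lt_of_le_of_lt h1 h2
    have e : 1/(ε^2*π*(1-π)) * (π*(1-π)) = 1/ε^2 := by field_simp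
    rw [hV]
    calc 1/ε^2 = 1/(ε^2*π*(1-π)) * (π*(1-π)) := e.symm
      _ < N * (π*(1-π)) := mul_lt_mul_of_pos_right h3 (by positivity)
      _ = N*π*(1-π) := by ring
  have hsV : 1/ε < Real.sqrt V := by
    have := Real.sqrt_lt_sqrt (by positivity) hVlarge
    rwa [show (1:ℝ)/ε^2 = (1/ε)^2 from by ring, Real.sqrt_sq (by positivity)] at this
  have hsVpos : 0 < Real.sqrt V := lt_trans (by positivity) hsV
  have hfin : Real.sqrt V / V = 1 / Real.sqrt V := by
    rw [div_eq_div_iff hVpos.ne' hsVpos.ne', one_mul, Real.mul_self_sqrt hVpos.le]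
  calc |Qa - Qb| ≤ T / V := habs
    _ ≤ Real.sqrt V / V := by gcongr
    _ = 1 / Real.sqrt V := hfin
    _ < ε := by
        rw [div_lt_iff₀ hsVpos]
        calc (1:ℝ) = ε * (1/ε) := by field_simp
          _ < ε * Real.sqrt V := by exact mul_lt_mul_of_pos_left hsV hε
end

section
/- Let n ≥ 2 be an integer, π ∈ (0,1), and 1 ≤ j ≤ n. Then (1/(n·π))·∑_{k=j}^n k·C(n,k)·π^k·(1−π)^{n−k} − (1/(n·(1−π)))·∑_{k=j}^n (n−k)·C(n,k)·π^k·(1−π)^{n−k} = C(n−1, j−1)·π^{j−1}·(1−π)^{n−j}; that is, under the independent prior with parameter π, the qualified majority rule with quota j has interim allocation probabilities satisfying Q⁺ⱼ(a) − Q⁺ⱼ(b) = C(n−1, j−1)·π^{j−1}·(1−π)^{n−j}. -/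
open Finset

/-- Identity (11): under the independent prior with parameter `π`, the qualified
majority rule with quota `j ≥ 1` satisfies
`Q⁺ⱼ(a) − Q⁺ⱼ(b) = C(n−1, j−1)·π^{j−1}·(1−π)^{n−j}`. -/
theorem qualified_majority_interim_difference
    (n : ℕ) (hn : 2 ≤ n) (π : ℝ) (hπ0 : 0 < π) (hπ1 : π < 1)
    (j : ℕ) (hj1 : 1 ≤ j) (hj2 : j ≤ n) :
    (1 / (n * π)) * ∑ k ∈ Icc j n,
        (k : ℝ) * ((n.choose k : ℝ) * π ^ k * (1 - π) ^ (n - k))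
      - (1 / (n * (1 - π))) * ∑ k ∈ Icc j n,
        ((n : ℝ) - k) * ((n.choose k : ℝ) * π ^ k * (1 - π) ^ (n - k))
    = ((n - 1).choose (j - 1) : ℝ) * π ^ (j - 1) * (1 - π) ^ (n - j) := by
  have hn0 : (n : ℝ) ≠ 0 := by positivity
  have hπ : π ≠ 0 := ne_of_gt hπ0
  have h1π : (1 : ℝ) - π ≠ 0 := by linarith
  set f : ℕ → ℝ := fun k => ((n - 1).choose k : ℝ) * π ^ k * (1 - π) ^ (n - 1 - k)
    with hf
  have key : ∀ k ∈ Icc j n,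
      (1 / (n * π)) * ((k : ℝ) * ((n.choose k : ℝ) * π ^ k * (1 - π) ^ (n - k)))
      - (1 / (n * (1 - π))) * (((n : ℝ) - k) * ((n.choose k : ℝ) * π ^ k * (1 - π) ^ (n - k)))
      = f (k - 1) - f k := by
    intro k hk
    simp only [mem_Icc] at hk
    have hk1 : 1 ≤ k := le_trans hj1 hk.1
    have hkn : k ≤ n := hk.2
    have hn' : Nat.succ (n - 1) = n := by omega
    have hk' : Nat.succ (k - 1) = k := by omega
    -- first identity: k * C(n,k) = n * C(n-1,k-1)
    have hid1 : (k : ℝ) * (n.choose k : ℝ) = (n : ℝ) * ((n - 1).choose (k - 1) : ℝ) := by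
      have h1 : Nat.succ (n - 1) * (n - 1).choose (k - 1) = (Nat.succ (n - 1)).choose (Nat.succ (k - 1)) * Nat.succ (k - 1) := Nat.add_one_mul_choose_eq (n - 1) (k - 1)
      rw [hn', hk'] at h1
      have := congrArg (Nat.cast : ℕ → ℝ) h1
      push_cast at this
      linarith [this]
    -- second identity: (n-k) * C(n,k) = n * C(n-1,k)
    have hid2 : ((n : ℝ) - k) * (n.choose k : ℝ) = (n : ℝ) * ((n - 1).choose k : ℝ) := by
      have h2 : n * (n - 1).choose k = n.choose k * (n - k) := by
        have h3 : Nat.succ (n - 1) * (n - 1).choose k = (Nat.succ (n - 1)).choose (k + 1) * (k + 1) := Nat.add_one_mul_choose_eq (n - 1) k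
        rw [hn'] at h3
        rw [h3, Nat.choose_succ_right_eq]
      have := congrArg (Nat.cast : ℕ → ℝ) h2
      push_cast [Nat.cast_sub hkn] at this
      linarith [this]
    have hp : π * π ^ (k - 1) = π ^ k := by
      conv_rhs => rw [show k = (k - 1) + 1 from by omega]
      rw [pow_succ]; ring
    have hexp : n - 1 - (k - 1) = n - k := by omega
    have e1 : (1 / ((n : ℝ) * π)) * ((k : ℝ) * ((n.choose k : ℝ) * π ^ k * (1 - π) ^ (n - k)))
        = f (k - 1) := by
      show _ = ((n - 1).choose (k - 1) : ℝ) * π ^ (k - 1) * (1 - π) ^ (n - 1 - (k - 1))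
      rw [hexp, ← hp]
      rw [div_mul_eq_mul_div, one_mul, div_eq_iff (mul_ne_zero hn0 hπ)]
      linear_combination (π ^ (k - 1) * (1 - π) ^ (n - k) * π) * hid1
    have e2 : (1 / ((n : ℝ) * (1 - π))) *
          (((n : ℝ) - k) * ((n.choose k : ℝ) * π ^ k * (1 - π) ^ (n - k)))
        = f k := by
      show _ = ((n - 1).choose k : ℝ) * π ^ k * (1 - π) ^ (n - 1 - k)
      rcases eq_or_lt_of_le hkn with hkeq | hklt
      · have hz1 : ((n : ℝ) - k) = 0 := by rw [hkeq]; ring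
        have hz2 : ((n - 1).choose k : ℝ) = 0 := by
          rw [Nat.choose_eq_zero_of_lt (by omega)]; simp
        rw [hz1, hz2]; ring
      · have hq : (1 - π) * (1 - π) ^ (n - 1 - k) = (1 - π) ^ (n - k) := by
          rw [← pow_succ']; congr 1; omega
        rw [← hq]
        rw [div_mul_eq_mul_div, one_mul, div_eq_iff (mul_ne_zero hn0 h1π)]
        linear_combination (π ^ k * (1 - π) ^ (n - 1 - k) * (1 - π)) * hid2
    rw [e1, e2]
  rw [mul_sum, mul_sum, ← sum_sub_distrib, sum_congr rfl key]
  have hIcc : Icc j n = Ico j (n + 1) := by rw [Finset.Ico_add_one_right_eq_Icc]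
  rw [hIcc, sum_Ico_eq_sum_range]
  have hshift : ∀ i ∈ range (n + 1 - j), f (j + i - 1) - f (j + i)
      = (fun i => f (j - 1 + i)) i - (fun i => f (j - 1 + i)) (i + 1) := by
    intro i _
    simp only
    congr 2 <;> omega
  rw [sum_congr rfl hshift, sum_range_sub' (fun i => f (j - 1 + i))]
  have hfn : f (j - 1 + (n + 1 - j)) = 0 := by
    show ((n - 1).choose (j - 1 + (n + 1 - j)) : ℝ) * _ * _ = 0
    rw [Nat.choose_eq_zero_of_lt (by omega)]
    simp
  rw [hfn, sub_zero, add_zero]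
  show ((n - 1).choose (j - 1) : ℝ) * π ^ (j - 1) * (1 - π) ^ (n - 1 - (j - 1)) = _
  rw [show n - 1 - (j - 1) = n - j from by omega]
end
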